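/- arXiv:2405.07997 — 8 statements merged into one kernel-verified Lean document; each statement's English description precedes it below -/
import Mathlib

section
/- Let f be analytic on the unit disc D with f(0)=0, f'(0)=1. If |z f''(z)/f'(z)| < 2 for all z in D, then f is starlike, i.e. Re(z f'(z)/f(z)) > 0 for all z in D. -/
open Complex Metric Real Filter Topology intervalIntegral


lemma exp_125_lt : Real.exp 1.25 < 3.5 := by
  have h4 : Real.exp 0.25 < 1.2841 := by
    by_contra h
    push_neg at h
    have h2 : (1.2841:ℝ)^(4:ℕ) ≤ (Real.exp 0.25)^(4:ℕ) :=
      pow_le_pow_left₀ (by norm_num) h 4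
    rw [show (Real.exp 0.25)^(4:ℕ) = Real.exp 1 by rw [← Real.exp_nat_mul]; norm_num] at h2
    have := Real.exp_one_lt_d9
    norm_num at h2 ⊢
    linarith
  have he : Real.exp 1.25 = Real.exp 1 * Real.exp 0.25 := by
    rw [← Real.exp_add]; norm_num
  nlinarith [Real.exp_one_lt_d9, Real.exp_pos (0.25:ℝ)]

private lemma L1 (u : ℂ) (c : ℝ) (hu : ‖u‖ ≤ c) (hc : c ≤ 1) :
    (1 - c) * (1 - c^2/2) ≤ (Complex.exp u).re := by
  have hre : |u.re| ≤ c := (Complex.abs_re_le_norm u).trans hu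
  have him : |u.im| ≤ c := (Complex.abs_im_le_norm u).trans hu
  rw [Complex.exp_re]
  have hrc := abs_le.mp hre
  have hic := abs_le.mp him
  have h1 : (1 - c) ≤ Real.exp u.re := by nlinarith [Real.add_one_le_exp u.re]
  have h2 : (1 - c^2/2) ≤ Real.cos u.im := by
    nlinarith [Real.one_sub_sq_div_two_le_cos (x := u.im), _root_.sq_abs u.im]
  have hc0 : (0:ℝ) ≤ 1 - c := by
    have := (norm_nonneg u).trans hu; linarith
  have hc2 : (0:ℝ) ≤ 1 - c^2/2 := by nlinarith
  exact mul_le_mul h1 h2 hc2 (Real.exp_pos _).le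

private lemma L2 (u : ℂ) (hu : ‖u‖ ≤ π/2) : 0 ≤ (Complex.exp u).re := by
  have him : |u.im| ≤ π/2 := (Complex.abs_im_le_norm u).trans hu
  rw [Complex.exp_re]
  exact mul_nonneg (Real.exp_pos _).le (Real.cos_nonneg_of_mem_Icc (abs_le.mp him |> fun h => ⟨by linarith [h.1], h.2⟩))

private lemma L3 (u : ℂ) (c : ℝ) (hu : ‖u‖ ≤ c) (hc : c ≤ 2) (hc' : π/2 ≤ c) :
    -(3.5 * (c - π/2)) ≤ (Complex.exp u).re := by
  have hre : |u.re| ≤ c := (Complex.abs_re_le_norm u).trans hu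
  have him : |u.im| ≤ c := (Complex.abs_im_le_norm u).trans hu
  rw [Complex.exp_re]
  rcases le_or_gt 0 (Real.cos u.im) with h | h
  · have : (0:ℝ) ≤ Real.exp u.re * Real.cos u.im := mul_nonneg (Real.exp_pos _).le h
    nlinarith
  · -- cos u.im < 0 : |u.im| > π/2
    have hpi2 : π/2 < |u.im| := by
      by_contra hh
      push_neg at hh
      exact absurd (Real.cos_nonneg_of_mem_Icc ⟨by linarith [(abs_le.mp hh).1], (abs_le.mp hh).2⟩) (not_le.mpr h)
    -- bound on cos: cos u.im ≥ -(|u.im| - π/2) ≥ -(c - π/2)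
    have hcos : -(c - π/2) ≤ Real.cos u.im := by
      have h1 : Real.cos u.im = Real.cos |u.im| := (Real.cos_abs u.im).symm
      have h2 : Real.cos |u.im| = -Real.sin (|u.im| - π/2) := by
        rw [Real.sin_sub_pi_div_two]; ring
      have h3 : Real.sin (|u.im| - π/2) ≤ |u.im| - π/2 :=
        Real.sin_le (by linarith)
      have h4 : |u.im| - π/2 ≤ c - π/2 := by linarith
      have h5 : Real.sin (|u.im| - π/2) ≤ c - π/2 := h3.trans h4
      rw [h1, h2]; linarith
    -- bound on exp: u.re ≤ 1.24
    have hnorm : u.re^2 + u.im^2 ≤ c^2 := by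
      have hn : ‖u‖^2 = u.re^2 + u.im^2 := by
        rw [Complex.sq_norm, Complex.normSq_apply]; ring
      nlinarith [norm_nonneg u]
    have hre124 : u.re ≤ 1.25 := by
      nlinarith [_root_.sq_abs u.im, Real.pi_gt_d6, sq_nonneg (u.re - 1.25)]
    have hexp : Real.exp u.re ≤ 3.5 := by
      calc Real.exp u.re ≤ Real.exp 1.25 := Real.exp_le_exp.mpr hre124
        _ ≤ 3.5 := exp_125_lt.le
    have hcneg : Real.cos u.im < 0 := h
    have : Real.exp u.re * Real.cos u.im ≥ 3.5 * Real.cos u.im := by nlinarith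
    nlinarith


lemma deriv_ne_zero_aux (f : ℂ → ℂ)
    (hf : DifferentiableOn ℂ f (ball 0 1)) (hf1 : deriv f 0 = 1)
    (hb : ∀ z ∈ ball (0 : ℂ) 1, ‖z * deriv (deriv f) z / deriv f z‖ < 2) :
    ∀ w ∈ ball (0:ℂ) 1, deriv f w ≠ 0 := by
  have hfa : AnalyticOnNhd ℂ f (ball 0 1) := hf.analyticOnNhd isOpen_ball
  have hf'a : AnalyticOnNhd ℂ (deriv f) (ball 0 1) := hfa.deriv
  intro w0 hw0 h0
  have hw0ne : w0 ≠ 0 := by rintro rfl; rw [hf1] at h0; exact one_ne_zero h0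
  have hA : AnalyticAt ℂ (deriv f) w0 := hf'a w0 hw0
  have hnotev : ¬ ∀ᶠ z in 𝓝 w0, deriv f z = 0 := by
    intro hev
    have heq := hf'a.eqOn_zero_of_preconnected_of_eventuallyEq_zero
      (convex_ball (0:ℂ) 1).isPreconnected hw0 hev
    have := heq (mem_ball_self one_pos)
    rw [hf1] at this
    exact one_ne_zero this
  have horder : analyticOrderAt (deriv f) w0 ≠ ⊤ := fun h => hnotev (analyticOrderAt_eq_top.mp h)
  obtain ⟨n, hn⟩ := Option.ne_none_iff_exists'.mp horder
  obtain ⟨g, hg, hgne, hev⟩ := (hA.analyticOrderAt_eq_natCast (n := n)).mp hn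
  -- n ≥ 1
  obtain ⟨m, rfl⟩ : ∃ m, n = m + 1 := by
    rcases n with _ | m
    · exfalso
      have := hev.self_of_nhds
      simp only [pow_zero, one_smul] at this
      exact hgne (this ▸ h0)
    · exact ⟨m, rfl⟩
  -- eventual formula for second derivative
  have hgd : ∀ᶠ ζ in 𝓝 w0, AnalyticAt ℂ g ζ := hg.eventually_analyticAt
  have hev2 : ∀ᶠ ζ in 𝓝 w0, deriv (deriv f) ζ =
      ((m:ℂ)+1) * (ζ - w0)^m * g ζ + (ζ - w0)^(m+1) * deriv g ζ := by
    have hdd : deriv (deriv f) =ᶠ[𝓝 w0] deriv (fun ζ => (ζ - w0)^(m+1) • g ζ) :=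
      Filter.EventuallyEq.deriv (hev : deriv f =ᶠ[𝓝 w0] _)
    filter_upwards [hdd, hgd] with ζ hζ hgζ
    rw [hζ]
    have h1 : HasDerivAt (fun ζ : ℂ => (ζ - w0)^(m+1)) (((m:ℂ)+1) * (ζ - w0)^m) ζ := by
      simpa using ((hasDerivAt_id ζ).sub_const w0).fun_pow (m+1)
    have h2 : HasDerivAt (fun ζ => (ζ - w0)^(m+1) * g ζ)
        (((m:ℂ)+1) * (ζ - w0)^m * g ζ + (ζ - w0)^(m+1) * deriv g ζ) ζ :=
      h1.mul hgζ.differentiableAt.hasDerivAt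
    simpa [smul_eq_mul] using h2.deriv
  -- tendsto facts on the punctured neighborhood
  set l := 𝓝[≠] w0
  have hT2 : Tendsto (fun ζ => ‖ζ * deriv g ζ / g ζ‖) l
      (𝓝 ‖w0 * deriv g w0 / g w0‖) := by
    have hc : ContinuousAt (fun ζ => ‖ζ * deriv g ζ / g ζ‖) w0 := by
      obtain ⟨U, hU_mem, hU⟩ := hg.exists_mem_nhds_analyticOnNhd
      obtain ⟨V, hVU, hVo, hVmem⟩ := _root_.mem_nhds_iff.mp hU_mem
      have hgd' : AnalyticOnNhd ℂ (deriv g) V := (hU.mono hVU).deriv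
      have h1 : ContinuousAt (deriv g) w0 := (hgd' w0 hVmem).continuousAt
      have hgc := hg.continuousAt
      fun_prop (disch := assumption)
    exact (hc.continuousWithinAt).tendsto
  have hT1 : Tendsto (fun ζ => ‖ζ * ((m:ℂ)+1) / (ζ - w0)‖) l atTop := by
    have h1 : Tendsto (fun ζ : ℂ => ‖ζ - w0‖) l (𝓝[>] 0) := by
      apply tendsto_nhdsWithin_iff.mpr
      constructor
      · have hcont : Continuous (fun ζ : ℂ => ‖ζ - w0‖) :=
          (continuous_id.sub continuous_const).norm
        have h := hcont.tendsto w0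
        simp only [sub_self, norm_zero] at h
        exact h.mono_left nhdsWithin_le_nhds
      · filter_upwards [self_mem_nhdsWithin] with ζ hζ
        simpa [sub_eq_zero] using hζ
    have h2 : Tendsto (fun ζ : ℂ => ‖ζ - w0‖⁻¹) l atTop :=
      tendsto_inv_nhdsGT_zero.comp h1
    have hcont2 : Continuous (fun ζ : ℂ => ‖ζ * ((m:ℂ)+1)‖) :=
      (continuous_id.mul continuous_const).norm
    have h3 : Tendsto (fun ζ : ℂ => ‖ζ * ((m:ℂ)+1)‖) l (𝓝 ‖w0 * ((m:ℂ)+1)‖) :=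
      (hcont2.tendsto w0).mono_left nhdsWithin_le_nhds
    have h4 : (0:ℝ) < ‖w0 * ((m:ℂ)+1)‖ := by
      rw [norm_mul]
      apply mul_pos (norm_pos_iff.mpr hw0ne) (norm_pos_iff.mpr ?_)
      exact Nat.cast_add_one_ne_zero m
    have h5 := h3.pos_mul_atTop h4 h2
    apply h5.congr
    intro ζ
    rw [norm_div, div_eq_mul_inv]
  have hsum : Tendsto (fun ζ => ‖ζ*((m:ℂ)+1)/(ζ-w0)‖ - ‖ζ * deriv g ζ / g ζ‖) l atTop := by
    have := hT1.atTop_add hT2.neg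
    simpa [sub_eq_add_neg] using this
  have hge := hsum.eventually_ge_atTop 2
  have hballev : ∀ᶠ ζ in 𝓝 w0, ζ ∈ ball (0:ℂ) 1 := isOpen_ball.mem_nhds hw0
  have hgne_ev : ∀ᶠ ζ in 𝓝 w0, g ζ ≠ 0 := hg.continuousAt.eventually_ne hgne
  have key : ∀ᶠ ζ in l, False := by
    filter_upwards [hge, hev.filter_mono nhdsWithin_le_nhds,
      hev2.filter_mono nhdsWithin_le_nhds, hballev.filter_mono nhdsWithin_le_nhds,
      hgne_ev.filter_mono nhdsWithin_le_nhds, self_mem_nhdsWithin] with ζ h2le hfe hffe hball hgz hne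
    have hζw : ζ - w0 ≠ 0 := sub_ne_zero.mpr hne
    have heq : ζ * deriv (deriv f) ζ / deriv f ζ
        = ζ*((m:ℂ)+1)/(ζ-w0) + ζ * deriv g ζ / g ζ := by
      rw [hffe, hfe, smul_eq_mul]
      field_simp
      ring
    have hlt := hb ζ hball
    rw [heq] at hlt
    have hineq : ‖ζ*((m:ℂ)+1)/(ζ-w0)‖ - ‖ζ * deriv g ζ / g ζ‖
        ≤ ‖ζ*((m:ℂ)+1)/(ζ-w0) + ζ * deriv g ζ / g ζ‖ := by
      simpa using norm_sub_norm_le (ζ*((m:ℂ)+1)/(ζ-w0)) (-(ζ * deriv g ζ / g ζ))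
    linarith
  obtain ⟨ζ, hF⟩ := key.exists
  exact hF



lemma q_bound_aux (f : ℂ → ℂ)
    (hf : DifferentiableOn ℂ f (ball 0 1)) (hf1 : deriv f 0 = 1)
    (hb : ∀ z ∈ ball (0 : ℂ) 1, ‖z * deriv (deriv f) z / deriv f z‖ < 2) :
    ∀ w ∈ ball (0:ℂ) 1, ‖deriv (deriv f) w / deriv f w‖ ≤ 2 := by
  have hne := deriv_ne_zero_aux f hf hf1 hb
  have hfa : AnalyticOnNhd ℂ f (ball 0 1) := hf.analyticOnNhd isOpen_ball
  have hqd : DifferentiableOn ℂ (fun w => deriv (deriv f) w / deriv f w) (ball 0 1) :=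
    (hfa.deriv.deriv.differentiableOn).div hfa.deriv.differentiableOn hne
  set q : ℂ → ℂ := fun w => deriv (deriv f) w / deriv f w with hq
  intro w hw
  by_contra hcon
  push_neg at hcon
  have hqpos : 0 < ‖q w‖ := lt_trans two_pos hcon
  set r0 : ℝ := max ‖w‖ (2 / ‖q w‖) with hr0
  have hr01 : r0 < 1 := by
    apply max_lt
    · simpa using hw
    · rw [div_lt_one hqpos]; exact hcon
  set r : ℝ := (r0 + 1)/2 with hrdef
  have hwr0 : ‖w‖ ≤ r0 := le_max_left _ _
  have hqr0 : 2 / ‖q w‖ ≤ r0 := le_max_right _ _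
  have hr0r : r0 < r := by rw [hrdef]; linarith
  have hr1 : r < 1 := by rw [hrdef]; linarith
  have hrpos : 0 < r := lt_of_le_of_lt ((norm_nonneg w).trans hwr0) hr0r
  have hsub : closedBall (0:ℂ) r ⊆ ball 0 1 := closedBall_subset_ball hr1
  have hdc : DiffContOnCl ℂ q (ball (0:ℂ) r) := by
    constructor
    · exact hqd.mono (ball_subset_ball hr1.le)
    · rw [closure_ball (0:ℂ) hrpos.ne']
      exact hqd.continuousOn.mono hsub
  have hfr : ∀ ζ ∈ frontier (ball (0:ℂ) r), ‖q ζ‖ ≤ 2 / r := by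
    intro ζ hζ
    rw [frontier_ball (0:ℂ) hrpos.ne'] at hζ
    have hζn : ‖ζ‖ = r := by simpa using hζ
    have hζb : ζ ∈ ball (0:ℂ) 1 := by simp [mem_ball_zero_iff, hζn, hr1]
    have hlt := hb ζ hζb
    rw [mul_div_assoc] at hlt
    rw [norm_mul, hζn] at hlt
    rw [le_div_iff₀ hrpos]
    nlinarith
  have hcl : w ∈ closure (ball (0:ℂ) r) := by
    rw [closure_ball (0:ℂ) hrpos.ne']
    simpa [mem_closedBall_zero_iff] using hwr0.trans hr0r.le
  have hle := Complex.norm_le_of_forall_mem_frontier_norm_le isBounded_ball hdc hfr hcl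
  have h2r : 2 / r < ‖q w‖ := by
    rw [div_lt_iff₀ hrpos]
    have h1 : 2 / ‖q w‖ < r := lt_of_le_of_lt hqr0 hr0r
    rw [div_lt_iff₀ hqpos] at h1
    nlinarith
  linarith


theorem stmt_1 (f : ℂ → ℂ)
    (hf : DifferentiableOn ℂ f (ball 0 1)) (hf0 : f 0 = 0) (hf1 : deriv f 0 = 1)
    (hb : ∀ z ∈ ball (0 : ℂ) 1, ‖z * deriv (deriv f) z / deriv f z‖ < 2) :
    ∀ z ∈ ball (0 : ℂ) 1, z ≠ 0 → 0 < (z * deriv f z / f z).re := by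
  intro z hz hz0
  have hne := deriv_ne_zero_aux f hf hf1 hb
  have hq2 := q_bound_aux f hf hf1 hb
  have hfa : AnalyticOnNhd ℂ f (ball 0 1) := hf.analyticOnNhd isOpen_ball
  have hf'a : AnalyticOnNhd ℂ (deriv f) (ball 0 1) := hfa.deriv
  have hf''a : AnalyticOnNhd ℂ (deriv (deriv f)) (ball 0 1) := hf'a.deriv
  set q : ℂ → ℂ := fun w => deriv (deriv f) w / deriv f w with hqdef
  have hzn : ‖z‖ < 1 := by simpa using hz
  have hmem : ∀ s : ℝ, |s| ≤ 1 → (s:ℂ)*z ∈ ball (0:ℂ) 1 := by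
    intro s hs
    rw [mem_ball_zero_iff, norm_mul, Complex.norm_real, Real.norm_eq_abs]
    nlinarith [norm_nonneg z, abs_nonneg s]
  -- continuity of q ∘ segment
  have hqc : ContinuousOn q (ball (0:ℂ) 1) :=
    ((hf''a.differentiableOn.div hf'a.differentiableOn hne) :
      DifferentiableOn ℂ q (ball (0:ℂ) 1)).continuousOn
  set G : ℝ → ℂ := fun σ => z * q ((σ:ℂ)*z) with hGdef
  set U : Set ℝ := (fun σ:ℝ => (σ:ℂ)*z) ⁻¹' (ball (0:ℂ) 1) with hUdef
  have hUopen : IsOpen U := (Complex.continuous_ofReal.mul continuous_const).isOpen_preimage _ isOpen_ball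
  have hUmem : ∀ s : ℝ, |s| ≤ 1 → s ∈ U := fun s hs => hmem s hs
  have hGcU : ContinuousOn G U := by
    apply ContinuousOn.mul continuousOn_const
    exact hqc.comp (Complex.continuous_ofReal.mul continuous_const).continuousOn (fun x hx => hx)
  have hGc : ∀ s : ℝ, s ∈ U → ContinuousAt G s := fun s hs =>
    hGcU.continuousAt (hUopen.mem_nhds hs)
  -- integrability on subintervals of [-1,1]
  have hGint : ∀ a b : ℝ, |a| ≤ 1 → |b| ≤ 1 → IntervalIntegrable G MeasureTheory.volume a b := by
    intro a b ha hb'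
    apply ContinuousOn.intervalIntegrable
    intro σ hσ
    have hσU : σ ∈ U := by
      apply hUmem
      rcases Set.mem_uIcc.mp hσ with h | h
      · cases abs_le.mp ha; cases abs_le.mp hb'; rw [abs_le]; constructor <;> linarith
      · cases abs_le.mp ha; cases abs_le.mp hb'; rw [abs_le]; constructor <;> linarith
    exact (hGc σ hσU).continuousWithinAt
  set V : ℝ → ℂ := fun s => ∫ σ in (1:ℝ)..s, G σ with hVdef
  have hVderiv : ∀ s : ℝ, |s| ≤ 1 → HasDerivAt V (G s) s := by
    intro s hs
    exact intervalIntegral.integral_hasDerivAt_right (hGint 1 s (by norm_num) hs)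
      ((hGcU.stronglyMeasurableAtFilter hUopen) s (hUmem s hs))
      (hGc s (hUmem s hs))
  have hV1 : V 1 = 0 := intervalIntegral.integral_same
  -- derivative of s ↦ deriv f (s z)
  have hDf : ∀ s : ℝ, |s| ≤ 1 → HasDerivAt (fun σ:ℝ => deriv f ((σ:ℂ)*z))
      (z * deriv (deriv f) ((s:ℂ)*z)) s := by
    intro s hs
    have houter : HasDerivAt (deriv f) (deriv (deriv f) ((s:ℂ)*z)) ((s:ℂ)*z) :=
      ((hf'a _ (hmem s hs)).differentiableAt).hasDerivAt
    have hinner : HasDerivAt (fun ζ:ℂ => ζ*z) z (s:ℂ) := by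
      simpa using (hasDerivAt_id (s:ℂ)).mul_const z
    have hcomp := (houter.comp (s:ℂ) hinner).comp_ofReal
    simpa [mul_comm] using hcomp
  -- H := f'(sz) * exp(-V s) has zero derivative
  set H : ℝ → ℂ := fun s => deriv f ((s:ℂ)*z) * Complex.exp (-(V s)) with hHdef
  have hH : ∀ s : ℝ, |s| ≤ 1 → HasDerivAt H 0 s := by
    intro s hs
    have hE : HasDerivAt (fun σ => Complex.exp (-(V σ))) (Complex.exp (-(V s)) * (-(G s))) s :=
      ((hVderiv s hs).neg).cexp
    have := (hDf s hs).fun_mul hE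
    refine this.congr_deriv (Eq.symm ?_)
    have hfs : deriv f ((s:ℂ)*z) ≠ 0 := hne _ (hmem s hs)
    have hq1 : deriv f ((s:ℂ)*z) * q ((s:ℂ)*z) = deriv (deriv f) ((s:ℂ)*z) := by
      simp only [hqdef]
      field_simp
    simp only [hGdef]
    linear_combination z * Complex.exp (-(V s)) * hq1
  -- H constant on [0,1]
  have hconst : ∀ s ∈ Set.Icc (0:ℝ) 1, H s = H 0 := by
    intro s hs
    apply constant_of_has_deriv_right_zero (f := H) (a := 0) (b := 1)
    · intro x hx
      have hx1 : |x| ≤ 1 := abs_le.mpr ⟨by linarith [hx.1], hx.2⟩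
      exact (hH x hx1).continuousAt.continuousWithinAt
    · intro x hx
      have hx1 : |x| ≤ 1 := abs_le.mpr ⟨by linarith [hx.1], hx.2.le⟩
      exact (hH x hx1).hasDerivWithinAt
    · exact hs
  have hkey : ∀ s ∈ Set.Icc (0:ℝ) 1, deriv f ((s:ℂ)*z) = deriv f z * Complex.exp (V s) := by
    intro s hs
    have h1 := hconst s hs
    have h2 := hconst 1 (by norm_num)
    have h3 : H s = H 1 := h1.trans h2.symm
    have h4 : H 1 = deriv f z := by
      simp only [hHdef, hV1]
      simp
    rw [h4] at h3
    have h5 := congrArg (· * Complex.exp (V s)) h3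
    simp only [hHdef] at h5
    simpa [mul_assoc, ← Complex.exp_add] using h5
  -- norm bound on V
  have hVnorm : ∀ s ∈ Set.Icc (0:ℝ) 1, ‖V s‖ ≤ 2*(1-s) := by
    intro s hs
    have h := intervalIntegral.norm_integral_le_of_norm_le_const (C := 2) (f := G) (a := 1) (b := s) ?_
    · rw [abs_of_nonpos (by linarith [hs.2] : s - 1 ≤ 0)] at h
      linarith
    · intro x hx
      have hx' : x ∈ Set.Ioc s 1 := by
        rwa [Set.uIoc_of_ge hs.2] at hx
      have hx1 : |x| ≤ 1 := abs_le.mpr ⟨by linarith [hs.1, hx'.1], hx'.2⟩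
      rw [hGdef]
      simp only [norm_mul]
      have := hq2 _ (hmem x hx1)
      nlinarith [norm_nonneg z, norm_nonneg (q ((x:ℂ)*z))]
  -- FTC for f along the segment
  have hFTC : ∫ s in (0:ℝ)..1, z * deriv f ((s:ℂ)*z) = f z - f 0 := by
    have hd : ∀ s ∈ Set.uIcc (0:ℝ) 1, HasDerivAt (fun σ:ℝ => f ((σ:ℂ)*z)) (z * deriv f ((s:ℂ)*z)) s := by
      intro s hs
      rw [Set.uIcc_of_le (by norm_num : (0:ℝ) ≤ 1)] at hs
      have hs1 : |s| ≤ 1 := abs_le.mpr ⟨by linarith [hs.1], hs.2⟩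
      have houter : HasDerivAt f (deriv f ((s:ℂ)*z)) ((s:ℂ)*z) :=
        ((hfa _ (hmem s hs1)).differentiableAt).hasDerivAt
      have hinner : HasDerivAt (fun ζ:ℂ => ζ*z) z (s:ℂ) := by
        simpa using (hasDerivAt_id (s:ℂ)).mul_const z
      simpa [mul_comm] using (houter.comp (s:ℂ) hinner).comp_ofReal
    have hint : IntervalIntegrable (fun s:ℝ => z * deriv f ((s:ℂ)*z)) MeasureTheory.volume 0 1 := by
      apply ContinuousOn.intervalIntegrable
      apply ContinuousOn.mul continuousOn_const
      apply (hf'a.continuousOn).comp (Complex.continuous_ofReal.mul continuous_const).continuousOn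
      intro x hx
      rw [Set.uIcc_of_le (by norm_num : (0:ℝ) ≤ 1)] at hx
      exact hmem x (abs_le.mpr ⟨by linarith [hx.1], hx.2⟩)
    have := intervalIntegral.integral_eq_sub_of_hasDerivAt hd hint
    simpa using this
  set A : ℂ := ∫ s in (0:ℝ)..1, Complex.exp (V s) with hAdef
  have hVcont : ContinuousOn V (Set.Icc (0:ℝ) 1) := by
    intro s hs
    exact ((hVderiv s (abs_le.mpr ⟨by linarith [hs.1], hs.2⟩)).continuousAt).continuousWithinAt
  have hExpCont : ContinuousOn (fun s => Complex.exp (V s)) (Set.Icc (0:ℝ) 1) :=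
    Complex.continuous_exp.comp_continuousOn hVcont
  have hfz : f z = z * deriv f z * A := by
    rw [← sub_zero (f z), ← hf0, ← hFTC]
    rw [hAdef, ← intervalIntegral.integral_const_mul]
    apply intervalIntegral.integral_congr
    intro s hs
    rw [Set.uIcc_of_le (by norm_num : (0:ℝ) ≤ 1)] at hs
    show z * deriv f ((s:ℂ)*z) = z * deriv f z * Complex.exp (V s)
    rw [hkey s hs]
    ring
  -- real part of A
  have hRc : ContinuousOn (fun s => (Complex.exp (V s)).re) (Set.Icc (0:ℝ) 1) :=
    Complex.continuous_re.comp_continuousOn hExpCont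
  have hExpInt : IntervalIntegrable (fun s => Complex.exp (V s)) MeasureTheory.volume 0 1 := by
    apply ContinuousOn.intervalIntegrable
    rwa [Set.uIcc_of_le (by norm_num : (0:ℝ) ≤ 1)]
  have hAre : A.re = ∫ s in (0:ℝ)..1, (Complex.exp (V s)).re := by
    have h := Complex.reCLM.intervalIntegral_comp_comm hExpInt
    rw [hAdef]
    exact (congrArg id h).symm
  obtain ⟨T, hTdef⟩ : ∃ T:ℝ, T = 1 - π/4 := ⟨_, rfl⟩
  have hpi1 : (3.141592:ℝ) < π := Real.pi_gt_d6
  have hpi2 : π < 3.15 := Real.pi_lt_d2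
  have hT0 : 0 < T := by rw [hTdef]; linarith
  have hT12 : T < 1/2 := by rw [hTdef]; linarith
  have hRint : ∀ a b : ℝ, a ∈ Set.Icc (0:ℝ) 1 → b ∈ Set.Icc (0:ℝ) 1 →
      IntervalIntegrable (fun s => (Complex.exp (V s)).re) MeasureTheory.volume a b := by
    intro a b ha hb'
    exact (hRc.mono (Set.uIcc_subset_Icc ha hb')).intervalIntegrable
  have hsplit : A.re = (∫ s in (0:ℝ)..T, (Complex.exp (V s)).re)
      + (∫ s in T..(1/2:ℝ), (Complex.exp (V s)).re)
      + (∫ s in (1/2:ℝ)..1, (Complex.exp (V s)).re) := by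
    rw [hAre,
      intervalIntegral.integral_add_adjacent_intervals (hRint 0 T ⟨le_rfl, by norm_num⟩ ⟨hT0.le, by linarith [hT12]⟩)
        (hRint T (1/2) ⟨hT0.le, by linarith [hT12]⟩ ⟨by norm_num, by norm_num⟩),
      intervalIntegral.integral_add_adjacent_intervals (hRint 0 (1/2) ⟨le_rfl, by norm_num⟩ ⟨by norm_num, by norm_num⟩)
        (hRint (1/2) 1 ⟨by norm_num, by norm_num⟩ ⟨by norm_num, le_rfl⟩)]
  -- piece 3
  have hI3 : (11/48:ℝ) ≤ ∫ s in (1/2:ℝ)..1, (Complex.exp (V s)).re := by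
    have hle : ∀ s ∈ Set.Icc (1/2:ℝ) 1,
        (1-2*(1-s))*(1-(2*(1-s))^2/2) ≤ (Complex.exp (V s)).re := by
      intro s hs
      exact L1 (V s) (2*(1-s)) (hVnorm s ⟨by linarith [hs.1], hs.2⟩) (by linarith [hs.1])
    have hpint : IntervalIntegrable (fun s:ℝ => (1-2*(1-s))*(1-(2*(1-s))^2/2))
        MeasureTheory.volume (1/2) 1 := by
      apply Continuous.intervalIntegrable; fun_prop
    have hmono := intervalIntegral.integral_mono_on (by norm_num : (1/2:ℝ) ≤ 1)
      hpint (hRint (1/2) 1 ⟨by norm_num, by norm_num⟩ ⟨by norm_num, le_rfl⟩) hle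
    have hval : (∫ s in (1/2:ℝ)..1, (1-2*(1-s))*(1-(2*(1-s))^2/2)) = 11/48 := by
      have hprim : ∀ x ∈ Set.uIcc (1/2:ℝ) 1,
          HasDerivAt (fun s:ℝ => -s^4 + (10/3)*s^3 - 3*s^2 + s)
            ((1-2*(1-x))*(1-(2*(1-x))^2/2)) x := by
        intro x _
        have hx4 : HasDerivAt (fun s:ℝ => s^4) (4*x^3) x := by
          simpa using hasDerivAt_pow 4 x
        have hx3 : HasDerivAt (fun s:ℝ => s^3) (3*x^2) x := by
          simpa using hasDerivAt_pow 3 x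
        have hx2 : HasDerivAt (fun s:ℝ => s^2) (2*x) x := by
          simpa using hasDerivAt_pow 2 x
        have h := ((hx4.fun_neg.fun_add (hx3.const_mul ((10:ℝ)/3))).fun_sub (hx2.const_mul (3:ℝ))).fun_add
          (hasDerivAt_id x)
        refine h.congr_deriv (Eq.symm ?_)
        ring
      rw [intervalIntegral.integral_eq_sub_of_hasDerivAt hprim
        (by apply Continuous.intervalIntegrable; fun_prop)]
      norm_num
    linarith
  -- piece 2
  have hI2 : (0:ℝ) ≤ ∫ s in T..(1/2:ℝ), (Complex.exp (V s)).re := by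
    apply intervalIntegral.integral_nonneg hT12.le
    intro s hs
    apply L2
    have := hVnorm s ⟨by linarith [hs.1, hT0], by linarith [hs.2, hT12]⟩
    have hsT : T ≤ s := hs.1
    rw [hTdef] at hsT
    linarith
  -- piece 1
  have hI1 : -(3.5*(2-π/2))*T + 3.5*T^2 ≤ ∫ s in (0:ℝ)..T, (Complex.exp (V s)).re := by
    have hle : ∀ s ∈ Set.Icc (0:ℝ) T,
        -(3.5 * (2*(1-s) - π/2)) ≤ (Complex.exp (V s)).re := by
      intro s hs
      apply L3 (V s) (2*(1-s)) (hVnorm s ⟨hs.1, by linarith [hs.2, hT0, hT12]⟩)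
      · linarith [hs.1]
      · have hsT : s ≤ T := hs.2
        rw [hTdef] at hsT
        linarith
    have hpint : IntervalIntegrable (fun s:ℝ => -(3.5 * (2*(1-s) - π/2)))
        MeasureTheory.volume 0 T := by
      apply Continuous.intervalIntegrable; fun_prop
    have hmono := intervalIntegral.integral_mono_on hT0.le
      hpint (hRint 0 T ⟨le_rfl, by norm_num⟩ ⟨hT0.le, by linarith [hT12]⟩) hle
    have hval : (∫ s in (0:ℝ)..T, -(3.5 * (2*(1-s) - π/2)))
        = -(3.5*(2-π/2))*T + 3.5*T^2 := by
      have hprim : ∀ x ∈ Set.uIcc (0:ℝ) T,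
          HasDerivAt (fun s:ℝ => -(3.5*(2-π/2))*s + 3.5*s^2)
            (-(3.5 * (2*(1-x) - π/2))) x := by
        intro x _
        have hx2 : HasDerivAt (fun s:ℝ => s^2) (2*x) x := by
          simpa using hasDerivAt_pow 2 x
        have h := ((hasDerivAt_id x).const_mul (-(3.5*(2-π/2)))).fun_add (hx2.const_mul (3.5:ℝ))
        refine h.congr_deriv (Eq.symm ?_)
        ring
      rw [intervalIntegral.integral_eq_sub_of_hasDerivAt hprim
        (by apply Continuous.intervalIntegrable; fun_prop)]
      ring
    linarith
  have hApos : 0 < A.re := by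
    have hnum : 0 < -(3.5*(2-π/2))*T + 3.5*T^2 + 11/48 := by
      rw [hTdef]; nlinarith [hpi1, hpi2]
    rw [hsplit]
    linarith [hI1, hI2, hI3, hnum]
  have hAne : A ≠ 0 := by
    intro h
    rw [h] at hApos
    simp at hApos
  have hfz' : z * deriv f z / f z = A⁻¹ := by
    rw [hfz]
    field_simp [hz0, hne z hz]
  rw [hfz', Complex.inv_re]
  exact div_pos hApos (Complex.normSq_pos.mpr hAne)
end

section
/- Let f be analytic on the unit disc D with f(0)=0, f'(0)=1. If |arg(z f'(z)/f(z))| < π/4 for all z in D, then Re(f(z)/z) > 0 for all z in D (with f(z)/z = 1 at z = 0). -/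
open Complex Metric Real Filter Topology

lemma aux_small_arg {u : ℂ} (hu : u ≠ 0) (h : |Complex.arg u| < Real.pi/4) : |u.im| < u.re := by
  have habs : 0 < ‖u‖ := norm_pos_iff.mpr hu
  have hcos := Complex.cos_arg hu
  have hsin := Complex.sin_arg u
  set t := Complex.arg u with ht
  have hpi : 0 < Real.pi := Real.pi_pos
  have h2 : |t| < Real.pi/2 := h.trans (by linarith)
  have hta : 0 ≤ |t| := abs_nonneg t
  have h3 : Real.sin |t| < Real.cos |t| := by
    have e : Real.cos |t| = Real.sin (Real.pi/2 - |t|) := (Real.sin_pi_div_two_sub _).symm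
    rw [e]
    apply Real.strictMonoOn_sin ⟨by linarith, by linarith⟩ ⟨by linarith, by linarith⟩
    linarith [h]
  have h4 : |Real.sin t| = Real.sin |t| := by
    rcases abs_cases t with ⟨h5, h6⟩ | ⟨h5, h6⟩
    · rw [h5, _root_.abs_of_nonneg (Real.sin_nonneg_of_nonneg_of_le_pi h6 (by rw [← h5] at h2; linarith))]
    · have hsn : 0 ≤ Real.sin (-t) := Real.sin_nonneg_of_nonneg_of_le_pi (by linarith) (by rw [h5] at h2; linarith)
      rw [Real.sin_neg] at hsn
      rw [h5, Real.sin_neg, _root_.abs_of_nonpos (by linarith)]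
  have h5 : Real.cos |t| = Real.cos t := Real.cos_abs t
  have hre : u.re = Real.cos t * ‖u‖ := by
    rw [hcos]; field_simp
  have him : |u.im| = |Real.sin t| * ‖u‖ := by
    rw [hsin, abs_div, abs_of_pos habs]; field_simp
  rw [hre, him]
  have : |Real.sin t| < Real.cos t := by rw [h4, ← h5]; exact h3
  exact mul_lt_mul_of_pos_right this habs

lemma aux_ivt {p : ℂ → ℂ} (hc : ContinuousOn p (ball 0 1)) (h0 : p 0 = 1) {z : ℂ}
    (hz : z ∈ ball (0:ℂ) 1) (hre : (p z).re ≤ 0) :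
    ∃ y : ℂ, ‖y‖ ≤ ‖z‖ ∧ y ∈ ball (0:ℂ) 1 ∧ (p y).re = 0 := by
  have hzn : ‖z‖ < 1 := by simpa [mem_ball, dist_eq_norm] using hz
  set h : ℝ → ℝ := fun t => (p ((t:ℂ) * z)).re with hh
  have hmem : ∀ t ∈ Set.Icc (0:ℝ) 1, (t:ℂ) * z ∈ ball (0:ℂ) 1 := by
    intro t htm
    simp only [mem_ball, dist_eq_norm, sub_zero, norm_mul, Complex.norm_real]
    calc |t| * ‖z‖ ≤ 1 * ‖z‖ := by
          apply mul_le_mul_of_nonneg_right _ (norm_nonneg z)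
          rw [_root_.abs_of_nonneg htm.1]; exact htm.2
      _ < 1 := by simpa using hzn
  have hch : ContinuousOn h (Set.Icc 0 1) := by
    apply Complex.continuous_re.comp_continuousOn
    apply hc.comp ?_ hmem
    fun_prop
  have h1 : h 1 ≤ 0 := by simpa [hh] using hre
  have h0' : h 0 = 1 := by simp [hh, h0]
  have := intermediate_value_Icc' (by norm_num : (0:ℝ) ≤ 1) hch
  have h02 : (0:ℝ) ∈ Set.Icc (h 1) (h 0) := ⟨h1, by rw [h0']; norm_num⟩
  obtain ⟨t, htm, htv⟩ := this h02
  refine ⟨(t:ℂ) * z, ?_, hmem t htm, htv⟩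
  simp only [norm_mul, Complex.norm_real]
  calc |t| * ‖z‖ ≤ 1 * ‖z‖ := by
        apply mul_le_mul_of_nonneg_right _ (norm_nonneg z)
        rw [_root_.abs_of_nonneg htm.1]; exact htm.2
    _ = ‖z‖ := one_mul _

lemma aux_no_zero {f p : ℂ → ℂ} (hfp : ∀ x, f x = x * p x)
    (hpA : AnalyticOnNhd ℂ p (ball 0 1)) (hp0 : p 0 = 1)
    (harg : ∀ z ∈ ball (0 : ℂ) 1, |Complex.arg (z * deriv f z / f z)| < Real.pi / 4)
    {z₁ : ℂ} (hz₁ : z₁ ∈ ball (0:ℂ) 1) (hz₁ne : z₁ ≠ 0) : p z₁ ≠ 0 := by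
  intro hzero
  have hA : AnalyticAt ℂ p z₁ := hpA z₁ hz₁
  have hnev : ¬ (∀ᶠ x in 𝓝 z₁, p x = 0) := by
    intro hev
    have heq := hpA.eqOn_zero_of_preconnected_of_eventuallyEq_zero
      (convex_ball (0:ℂ) 1).isPreconnected hz₁ hev
    have h00 := heq (show (0:ℂ) ∈ ball 0 1 by simp)
    rw [hp0] at h00
    exact one_ne_zero h00
  have hord : analyticOrderAt p z₁ ≠ ⊤ := fun h => hnev (analyticOrderAt_eq_top.mp h)
  set n := (analyticOrderAt p z₁).toNat with hndef
  have hordn : analyticOrderAt p z₁ = n := (ENat.coe_toNat hord).symm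
  obtain ⟨q, hqA, hq0, hq⟩ := hA.analyticOrderAt_eq_natCast.mp hordn
  have hn1 : 1 ≤ n := by
    rcases Nat.eq_zero_or_pos n with h0 | h1
    · exfalso
      have hsel := hq.self_of_nhds
      rw [h0] at hsel
      simp only [pow_zero, sub_self, one_smul] at hsel
      exact hq0 (by rw [← hsel]; exact hzero)
    · exact h1
  obtain ⟨m, hm⟩ : ∃ m, n = m + 1 := ⟨n - 1, by omega⟩
  -- continuity of deriv q at z₁
  have hdercont : ContinuousAt (deriv q) z₁ := by
    obtain ⟨s, hs, hsan⟩ := hqA.eventually_analyticAt.exists_mem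
    obtain ⟨U, hUs, hUo, hUz⟩ := _root_.mem_nhds_iff.mp hs
    have : AnalyticOnNhd ℂ q U := fun x hx => hsan x (hUs hx)
    exact (this.deriv z₁ hUz).continuousAt
  -- the path
  set γ : ℝ → ℂ := fun t => (1 + (t:ℂ) * I) * z₁ with hγdef
  have hγ0 : γ 0 = z₁ := by simp [hγdef]
  have hγcont : Tendsto γ (𝓝[>] (0:ℝ)) (𝓝 z₁) := by
    have hc : Continuous γ := by fun_prop
    have := hc.tendsto 0
    rw [hγ0] at this
    exact this.mono_left nhdsWithin_le_nhds
  have hxzall : ∀ s : ℝ, γ s - z₁ = (s:ℂ) * Complex.I * z₁ := by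
    intro s; rw [hγdef]; ring
  clear_value γ
  clear hγdef
  -- eventual derivative formula at 𝓝 z₁
  have hfe : f =ᶠ[𝓝 z₁] fun x => x * ((x - z₁)^n * q x) := by
    filter_upwards [hq] with x hx
    rw [hfp x, hx, smul_eq_mul]
  have hD : ∀ᶠ x in 𝓝 z₁, deriv f x
      = (x - z₁)^n * q x + x * ((n:ℂ) * (x - z₁)^(n-1) * 1 * q x + (x - z₁)^n * deriv q x) := by
    filter_upwards [hfe.deriv, hqA.eventually_analyticAt] with x h3 h4
    rw [h3]
    have h1 : HasDerivAt (fun y : ℂ => (y - z₁)^n) ((n:ℂ) * (x - z₁)^(n-1) * 1) x :=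
      ((hasDerivAt_id x).sub_const z₁).pow n
    have h2 : HasDerivAt q (deriv q x) x := h4.differentiableAt.hasDerivAt
    have h5 := (hasDerivAt_id x).mul (h1.mul h2)
    have h6 := h5.deriv
    simp only [id_eq, Pi.mul_def] at h6
    rw [h6]; ring
  have hIz : Complex.I * z₁ ≠ 0 := mul_ne_zero Complex.I_ne_zero hz₁ne
  -- key eventual identity
  set L : ℝ → ℂ := fun t => (t:ℂ) * (γ t * deriv f (γ t) / f (γ t)) with hLdef
  have hevL : ∀ᶠ t in 𝓝[>] (0:ℝ), L t
      = (t:ℂ) + (n:ℂ) * γ t / (Complex.I * z₁) + (t:ℂ) * γ t * deriv q (γ t) / q (γ t) := by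
    have hqne : ∀ᶠ x in 𝓝 z₁, q x ≠ 0 := hqA.continuousAt.eventually_ne hq0
    have hxne : ∀ᶠ x in 𝓝 z₁, x ≠ 0 := eventually_ne_nhds hz₁ne
    filter_upwards [hγcont.eventually (hD.and (hqne.and (hxne.and hq))), self_mem_nhdsWithin]
      with t ht htpos
    obtain ⟨hDx, hqx, hx0, hpx⟩ := ht
    have htne : (t:ℂ) ≠ 0 := Complex.ofReal_ne_zero.mpr (ne_of_gt htpos)
    have hxz : γ t - z₁ = (t:ℂ) * Complex.I * z₁ := hxzall t
    have hfx : f (γ t) = γ t * ((γ t - z₁)^n * q (γ t)) := by rw [hfp, hpx, smul_eq_mul]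
    have hpowne : ((t:ℂ) * Complex.I * z₁)^m ≠ 0 :=
      pow_ne_zero m (by exact mul_ne_zero (mul_ne_zero htne Complex.I_ne_zero) hz₁ne)
    have hX : ((t:ℂ) * Complex.I * z₁) ≠ 0 :=
      mul_ne_zero (mul_ne_zero htne Complex.I_ne_zero) hz₁ne
    have hfne : f (γ t) ≠ 0 := by
      rw [hfx, hxz]; exact mul_ne_zero hx0 (mul_ne_zero (pow_ne_zero _ hX) hqx)
    have key2 : ((t:ℂ) * (γ t * deriv f (γ t))) * ((Complex.I * z₁) * q (γ t))
        = (((t:ℂ) + (n:ℂ) * γ t / (Complex.I * z₁) + (t:ℂ) * γ t * deriv q (γ t) / q (γ t))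
            * f (γ t)) * ((Complex.I * z₁) * q (γ t)) := by
      rw [hDx, hfx, hxz, hm]
      push_cast
      rw [pow_succ]
      field_simp
      ring
    have key3 := mul_right_cancel₀ (mul_ne_zero hIz hqx) key2
    rw [hLdef]
    simp only
    rw [← mul_div_assoc, div_eq_iff hfne, key3]
  -- limit of the RHS
  have h1 : Tendsto (fun t : ℝ => (t:ℂ)) (𝓝[>] (0:ℝ)) (𝓝 0) := by
    have := Complex.continuous_ofReal.tendsto 0
    simpa using this.mono_left nhdsWithin_le_nhds
  have hqvt : Tendsto (fun t => q (γ t)) (𝓝[>] (0:ℝ)) (𝓝 (q z₁)) :=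
    hqA.continuousAt.tendsto.comp hγcont
  have hq't : Tendsto (fun t => deriv q (γ t)) (𝓝[>] (0:ℝ)) (𝓝 (deriv q z₁)) :=
    hdercont.tendsto.comp hγcont
  have hT : Tendsto L (𝓝[>] (0:ℝ)) (𝓝 (-(n:ℂ) * Complex.I)) := by
    have hT2 : Tendsto (fun t : ℝ => (t:ℂ) + (n:ℂ) * γ t / (Complex.I * z₁)
        + (t:ℂ) * γ t * deriv q (γ t) / q (γ t)) (𝓝[>] (0:ℝ))
        (𝓝 ((0:ℂ) + (n:ℂ) * z₁ / (Complex.I * z₁) + (0:ℂ) * z₁ * deriv q z₁ / q z₁)) :=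
      (h1.add (((tendsto_const_nhds.mul hγcont).div tendsto_const_nhds hIz))).add
        (((h1.mul hγcont).mul hq't).div hqvt hq0)
    have hval : (0:ℂ) + (n:ℂ) * z₁ / (Complex.I * z₁) + (0:ℂ) * z₁ * deriv q z₁ / q z₁
        = -(n:ℂ) * Complex.I := by
      rw [zero_add, zero_mul, zero_mul, zero_div, add_zero, div_eq_iff hIz]
      linear_combination ((n:ℂ) * z₁) * Complex.I_sq
    rw [hval] at hT2
    exact Tendsto.congr' (hevL.mono fun x hx => hx.symm) hT2
  -- contradiction
  have hre : Tendsto (fun t => (L t).re) (𝓝[>] (0:ℝ)) (𝓝 0) := by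
    have := (Complex.continuous_re.tendsto _).comp hT
    simpa [Function.comp_def] using this
  have him : Tendsto (fun t => (L t).im) (𝓝[>] (0:ℝ)) (𝓝 (-(n:ℝ))) := by
    have := (Complex.continuous_im.tendsto _).comp hT
    simpa [Function.comp_def] using this
  have hnR : (1:ℝ) ≤ n := by exact_mod_cast hn1
  have evre : ∀ᶠ t in 𝓝[>] (0:ℝ), (L t).re < 1/2 := hre.eventually_lt_const (by norm_num)
  have evim : ∀ᶠ t in 𝓝[>] (0:ℝ), (L t).im < -(1/2) :=
    him.eventually_lt_const (by linarith)
  have evball : ∀ᶠ t in 𝓝[>] (0:ℝ), γ t ∈ ball (0:ℂ) 1 :=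
    hγcont.eventually (isOpen_ball.eventually_mem hz₁)
  obtain ⟨t, h1t, h2t, h3t, h4t⟩ := (evre.and (evim.and (evball.and self_mem_nhdsWithin))).exists
  set u := γ t * deriv f (γ t) / f (γ t) with hu
  have hargu : |Complex.arg u| < Real.pi / 4 := harg (γ t) h3t
  have hLt : L t = (t:ℂ) * u := rfl
  have hLre : (L t).re = t * u.re := by rw [hLt]; simp
  have hLim : (L t).im = t * u.im := by rw [hLt]; simp
  rcases eq_or_ne u 0 with h0 | hne0
  · rw [h0] at hLim
    simp at hLim
    rw [hLim] at h2t
    norm_num at h2t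
  · have hir := aux_small_arg hne0 hargu
    have habs : |(L t).im| < (L t).re := by
      rw [hLre, hLim, abs_mul, _root_.abs_of_pos h4t]
      exact mul_lt_mul_of_pos_left hir h4t
    have := neg_abs_le (L t).im
    linarith

lemma aux_normSq_deriv {u : ℝ → ℂ} {d : ℂ} {θ : ℝ} (hu : HasDerivAt u d θ) :
    HasDerivAt (fun t => Complex.normSq (u t)) (2 * ((starRingEnd ℂ) (u θ) * d).re) θ := by
  have hre : HasDerivAt (fun t => (u t).re) d.re θ :=
    Complex.reCLM.hasFDerivAt.comp_hasDerivAt θ hu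
  have him : HasDerivAt (fun t => (u t).im) d.im θ :=
    Complex.imCLM.hasFDerivAt.comp_hasDerivAt θ hu
  have h := (hre.mul hre).add (him.mul him)
  have heq : (fun t => Complex.normSq (u t))
      = fun t => (u t).re * (u t).re + (u t).im * (u t).im := by
    funext t; simp [Complex.normSq_apply]
  rw [heq]
  refine h.congr_deriv ?_
  simp [Complex.mul_re]
  ring
set_option maxHeartbeats 1000000 in
theorem stmt_6 (f : ℂ → ℂ)
    (hf : DifferentiableOn ℂ f (ball 0 1)) (hf0 : f 0 = 0) (hf1 : deriv f 0 = 1)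
    (harg : ∀ z ∈ ball (0 : ℂ) 1,
      |Complex.arg (z * deriv f z / f z)| < Real.pi / 4) :
    ∀ z ∈ ball (0 : ℂ) 1, 0 < (if z = 0 then 1 else f z / z).re := by
  have hball0 : (ball (0:ℂ) 1) ∈ 𝓝 (0:ℂ) := isOpen_ball.mem_nhds (by simp)
  set p := dslope f 0 with hpdef
  have hp : DifferentiableOn ℂ p (ball 0 1) := (differentiableOn_dslope hball0).mpr hf
  have hp0 : p 0 = 1 := by rw [hpdef, dslope_same, hf1]
  have hpz : ∀ x : ℂ, x ≠ 0 → p x = f x / x := by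
    intro x hx
    rw [hpdef, dslope_of_ne f hx, slope_def_field, hf0]
    simp
  have hfp : ∀ x : ℂ, f x = x * p x := by
    intro x
    rcases eq_or_ne x 0 with rfl | hx
    · simp [hf0]
    · rw [hpz x hx]; field_simp
  clear_value p
  intro z hz
  rcases eq_or_ne z 0 with rfl | hzne
  · simp
  rw [if_neg hzne]
  by_contra hcon
  push_neg at hcon
  rw [← hpz z hzne] at hcon
  have hpc : ContinuousOn p (ball 0 1) := hp.continuousOn
  have hpA : AnalyticOnNhd ℂ p (ball 0 1) := hp.analyticOnNhd isOpen_ball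
  obtain ⟨z₂, hz₂le, hz₂ball, hz₂re⟩ := aux_ivt hpc hp0 hz hcon
  set S : Set ℂ := closedBall 0 (‖z₂‖) ∩ (fun y => (p y).re) ⁻¹' {0} with hSdef
  have hz₂n1 : ‖z₂‖ < 1 := by simpa [mem_ball, dist_eq_norm] using hz₂ball
  have hsub : closedBall (0:ℂ) ‖z₂‖ ⊆ ball 0 1 := closedBall_subset_ball hz₂n1
  have hSclosed : IsClosed S :=
    ContinuousOn.preimage_isClosed_of_isClosed
      (Complex.continuous_re.comp_continuousOn (hpc.mono hsub))
      Metric.isClosed_closedBall isClosed_singleton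
  have hScompact : IsCompact S :=
    (isCompact_closedBall (0:ℂ) ‖z₂‖).of_isClosed_subset hSclosed Set.inter_subset_left
  have hSne : S.Nonempty := by
    refine ⟨z₂, ?_, by simpa using hz₂re⟩
    simp [mem_closedBall, dist_eq_norm]
  obtain ⟨z₁, hz₁S, hz₁min⟩ := hScompact.exists_isMinOn hSne continuous_norm.continuousOn
  have hz₁re : (p z₁).re = 0 := by simpa using hz₁S.2
  have hz₁lez₂ : ‖z₁‖ ≤ ‖z₂‖ := by
    have := hz₁S.1; simpa [mem_closedBall, dist_eq_norm] using this
  have hz₁lt1 : ‖z₁‖ < 1 := lt_of_le_of_lt hz₁lez₂ hz₂n1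
  have hz₁ball : z₁ ∈ ball (0:ℂ) 1 := by simpa [mem_ball, dist_eq_norm] using hz₁lt1
  have hz₁ne : z₁ ≠ 0 := by
    intro h; rw [h, hp0] at hz₁re; norm_num at hz₁re
  have hr₁pos : 0 < ‖z₁‖ := norm_pos_iff.mpr hz₁ne
  -- positivity strictly inside radius ‖z₁‖
  have hpos : ∀ y : ℂ, ‖y‖ < ‖z₁‖ → 0 < (p y).re := by
    intro y hy
    by_contra hle; push_neg at hle
    have hyball : y ∈ ball (0:ℂ) 1 := by
      simp only [mem_ball, dist_eq_norm, sub_zero]; exact hy.trans hz₁lt1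
    obtain ⟨y₂, hy₂le, _, hy₂re⟩ := aux_ivt hpc hp0 hyball hle
    have hy₂S : y₂ ∈ S := by
      refine ⟨?_, by simpa using hy₂re⟩
      simp only [mem_closedBall, dist_eq_norm, sub_zero]
      exact le_trans hy₂le (le_trans hy.le hz₁lez₂)
    have hmin := hz₁min hy₂S
    simp only at hmin
    have : ‖y₂‖ < ‖z₁‖ := lt_of_le_of_lt hy₂le hy
    exact absurd hmin (not_le.mpr this)
  have hnneg : ∀ y : ℂ, ‖y‖ ≤ ‖z₁‖ → 0 ≤ (p y).re := by
    intro y hy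
    rcases lt_or_eq_of_le hy with h | h
    · exact (hpos y h).le
    · have hyball : y ∈ ball (0:ℂ) 1 := by
        simp only [mem_ball, dist_eq_norm, sub_zero]; rw [h]; exact hz₁lt1
      have hcy : ContinuousAt p y := hpc.continuousAt (isOpen_ball.mem_nhds hyball)
      have hty : Tendsto (fun t : ℝ => (t:ℂ) * y) (𝓝[<] (1:ℝ)) (𝓝 y) := by
        have hc : Continuous (fun t : ℝ => (t:ℂ) * y) := by fun_prop
        have := hc.tendsto 1
        simp only [Complex.ofReal_one, one_mul] at this
        exact this.mono_left nhdsWithin_le_nhds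
      have htd : Tendsto (fun t : ℝ => (p ((t:ℂ) * y)).re) (𝓝[<] (1:ℝ)) (𝓝 ((p y).re)) :=
        (Complex.continuous_re.tendsto _).comp (hcy.tendsto.comp hty)
      refine ge_of_tendsto htd ?_
      filter_upwards [Ioo_mem_nhdsLT_of_mem (by norm_num : (1:ℝ) ∈ Set.Ioc (0:ℝ) 1)] with t ht
      apply (hpos _ _).le
      rw [norm_mul, Complex.norm_real, Real.norm_eq_abs, _root_.abs_of_pos ht.1, ← h]
      have : 0 < ‖y‖ := by rw [h]; exact hr₁pos
      nlinarith [ht.2]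
  -- p z₁ ≠ 0
  have hpz₁ne : p z₁ ≠ 0 := aux_no_zero hfp hpA hp0 harg hz₁ball hz₁ne
  set b := (p z₁).im with hbdef
  clear_value b
  have hpz₁ : p z₁ = (b:ℂ) * Complex.I := by
    apply Complex.ext
    · simp [hz₁re]
    · simp [hbdef]
  have hbne : b ≠ 0 := by
    intro h; apply hpz₁ne; rw [hpz₁, h]; simp
  -- the Möbius transform w
  set w : ℂ → ℂ := fun x => (1 - p x) / (1 + p x) with hwdef
  have hdiffp : ∀ y : ℂ, y ∈ ball (0:ℂ) 1 → DifferentiableAt ℂ p y :=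
    fun y hy => hp.differentiableAt (isOpen_ball.mem_nhds hy)
  have hden : ∀ y : ℂ, ‖y‖ ≤ ‖z₁‖ → (1 + p y) ≠ 0 := by
    intro y hy h
    have h2 : (1 + p y).re = 0 := by rw [h]; simp
    rw [Complex.add_re, Complex.one_re] at h2
    have := hnneg y hy; linarith
  have hw0 : w 0 = 0 := by simp [hwdef, hp0]
  have hwlt : ∀ y : ℂ, ‖y‖ < ‖z₁‖ → ‖w y‖ < 1 := by
    intro y hy
    have hre := hpos y hy
    have h1 : ‖1 - p y‖^2 < ‖1 + p y‖^2 := by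
      rw [Complex.sq_norm, Complex.sq_norm]
      simp only [Complex.normSq_apply, Complex.sub_re, Complex.sub_im, Complex.add_re,
        Complex.add_im, Complex.one_re, Complex.one_im]
      nlinarith
    have h2 : ‖1 - p y‖ < ‖1 + p y‖ :=
      lt_of_pow_lt_pow_left₀ 2 (norm_nonneg _) h1
    rw [hwdef]
    simp only [norm_div]
    rw [div_lt_one (lt_of_le_of_lt (norm_nonneg _) h2)]
    exact h2
  have hwle : ∀ y : ℂ, ‖y‖ ≤ ‖z₁‖ → ‖w y‖ ≤ 1 := by
    intro y hy
    have hre := hnneg y hy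
    have h1 : ‖1 - p y‖^2 ≤ ‖1 + p y‖^2 := by
      rw [Complex.sq_norm, Complex.sq_norm]
      simp only [Complex.normSq_apply, Complex.sub_re, Complex.sub_im, Complex.add_re,
        Complex.add_im, Complex.one_re, Complex.one_im]
      nlinarith
    have h2 : ‖1 - p y‖ ≤ ‖1 + p y‖ :=
      le_of_pow_le_pow_left₀ (by norm_num) (norm_nonneg _) h1
    have hpos2 : 0 < ‖1 + p y‖ := norm_pos_iff.mpr (hden y hy)
    rw [hwdef]
    simp only [norm_div]
    rw [div_le_one hpos2]
    exact h2
  have hdenz₁ : (1 + p z₁) ≠ 0 := hden z₁ le_rfl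
  have hwz₁ : ‖w z₁‖ = 1 := by
    have hnsq : Complex.normSq (1 - p z₁) = Complex.normSq (1 + p z₁) := by
      rw [hpz₁]
      simp only [Complex.normSq_apply, Complex.sub_re, Complex.sub_im, Complex.add_re,
        Complex.add_im, Complex.one_re, Complex.one_im, Complex.mul_re, Complex.mul_im,
        Complex.I_re, Complex.I_im, Complex.ofReal_re, Complex.ofReal_im]
      ring
    have habs : ‖1 - p z₁‖ = ‖1 + p z₁‖ := by
      rw [Complex.norm_def, Complex.norm_def, hnsq]
    rw [hwdef]
    simp only [norm_div]
    rw [habs, div_self (norm_pos_iff.mpr hdenz₁).ne']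
  have hwdiff : ∀ y : ℂ, ‖y‖ ≤ ‖z₁‖ → DifferentiableAt ℂ w y := by
    intro y hy
    have hyb : y ∈ ball (0:ℂ) 1 := by
      simp only [mem_ball, dist_eq_norm, sub_zero]; exact lt_of_le_of_lt hy hz₁lt1
    exact ((differentiableAt_const 1).sub (hdiffp y hyb)).div
      ((differentiableAt_const 1).add (hdiffp y hyb)) (hden y hy)
  -- Schwarz
  have hSch : ∀ t : ℝ, 0 ≤ t → t ≤ 1 → ‖w ((t:ℂ) * z₁)‖ ≤ t := by
    intro t ht0 ht1
    rcases eq_or_lt_of_le ht1 with rfl | hlt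
    · simp only [Complex.ofReal_one, one_mul]
      rw [hwz₁]
    · have hd : DifferentiableOn ℂ w (ball 0 ‖z₁‖) := by
        intro y hy
        have : ‖y‖ < ‖z₁‖ := by simpa [mem_ball, dist_eq_norm] using hy
        exact (hwdiff y this.le).differentiableWithinAt
      have hmaps : Set.MapsTo w (ball 0 ‖z₁‖) (ball (w 0) 1) := by
        intro y hy
        rw [hw0]
        simp only [mem_ball, dist_eq_norm, sub_zero]
        exact hwlt y (by simpa [mem_ball, dist_eq_norm] using hy)
      have hin : (t:ℂ) * z₁ ∈ ball (0:ℂ) ‖z₁‖ := by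
        simp only [mem_ball, dist_eq_norm, sub_zero, norm_mul, Complex.norm_real,
          Real.norm_eq_abs, _root_.abs_of_nonneg ht0]
        nlinarith
      have hS := Complex.dist_le_div_mul_dist_of_mapsTo_ball hd (hmaps.mono_right ball_subset_closedBall) hin
      rw [hw0] at hS
      simp only [dist_eq_norm, sub_zero, norm_mul, Complex.norm_real, Real.norm_eq_abs,
        _root_.abs_of_nonneg ht0] at hS
      have habsne : ‖z₁‖ ≠ 0 := by
        exact hr₁pos.ne'
      calc ‖w ((t:ℂ) * z₁)‖ ≤ 1 / ‖z₁‖ * (t * ‖z₁‖) := hS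
        _ = t := by
          field_simp
  -- derivative of w at z₁
  have hpd : HasDerivAt p (deriv p z₁) z₁ := (hdiffp z₁ hz₁ball).hasDerivAt
  have hwd : HasDerivAt w
      ((-(deriv p z₁) * (1 + p z₁) - (1 - p z₁) * deriv p z₁) / (1 + p z₁)^2) z₁ := by
    have h1 : HasDerivAt (fun x => 1 - p x) (-(deriv p z₁)) z₁ := hpd.const_sub 1
    have h2 : HasDerivAt (fun x => 1 + p x) (deriv p z₁) z₁ := hpd.const_add 1
    exact h1.div h2 hdenz₁
  set W := (-(deriv p z₁) * (1 + p z₁) - (1 - p z₁) * deriv p z₁) / (1 + p z₁)^2 with hWdef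
  clear_value W
  set u₁ := w z₁ with hu₁def
  clear_value u₁
  have hu₁n : Complex.normSq u₁ = 1 := by
    rw [Complex.normSq_eq_norm_sq, hwz₁]; norm_num
  have hu₁ne : u₁ ≠ 0 := by
    intro h; rw [h] at hu₁n; simp at hu₁n
  have hconj : (starRingEnd ℂ) u₁ * u₁ = 1 := by
    have h := Complex.normSq_eq_conj_mul_self (z := u₁)
    rw [hu₁n] at h
    simpa using h.symm
  -- angular derivative: Im κ = 0
  have hexpz : ∀ θ : ℝ, ‖Complex.exp ((θ:ℂ) * Complex.I) * z₁‖ = ‖z₁‖ := by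
    intro θ
    rw [norm_mul, Complex.norm_exp_ofReal_mul_I, one_mul]
  have hγd : HasDerivAt (fun θ : ℝ => Complex.exp ((θ:ℂ) * Complex.I) * z₁)
      (Complex.I * z₁) 0 := by
    have h1 : HasDerivAt (fun θ : ℝ => ((θ:ℝ):ℂ)) ((1:ℝ):ℂ) 0 := (hasDerivAt_id (0:ℝ)).ofReal_comp
    have h2 : HasDerivAt (fun θ : ℝ => (θ:ℂ) * Complex.I) (Complex.I) 0 := by
      simpa using h1.mul_const Complex.I
    have h3 : HasDerivAt Complex.exp (Complex.exp ((0:ℝ) * Complex.I)) (((0:ℝ):ℂ) * Complex.I) := by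
      simpa using Complex.hasDerivAt_exp (((0:ℝ):ℂ) * Complex.I)
    have h4 := h3.scomp (0:ℝ) h2
    have h5 := h4.mul_const z₁
    have : Complex.exp (((0:ℝ):ℂ) * Complex.I) = 1 := by simp
    simpa [this] using h5
  have hwdz : HasDerivAt w W z₁ := hwd
  have hAd : HasDerivAt (fun θ : ℝ => w (Complex.exp ((θ:ℂ) * Complex.I) * z₁))
      ((Complex.I * z₁) * W) 0 := by
    have := hwdz.scomp_of_eq (0:ℝ) hγd (by simp)
    simpa [smul_eq_mul, Function.comp_def] using this
  have hFd := aux_normSq_deriv hAd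
  have hmax : IsLocalMax (fun θ : ℝ => Complex.normSq
      (w (Complex.exp ((θ:ℂ) * Complex.I) * z₁))) 0 := by
    apply Filter.Eventually.of_forall
    intro θ
    have h1 : ‖w (Complex.exp ((θ:ℂ) * Complex.I) * z₁)‖ ≤ 1 := hwle _ (le_of_eq (hexpz θ))
    have h2 : Complex.normSq (w (Complex.exp ((θ:ℂ) * Complex.I) * z₁)) ≤ 1 := by
      rw [Complex.normSq_eq_norm_sq]
      nlinarith [norm_nonneg (w (Complex.exp ((θ:ℂ) * Complex.I) * z₁))]
    have h3 : Complex.exp (((0:ℝ):ℂ) * Complex.I) * z₁ = z₁ := by simp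
    simp only [h3]
    rw [← hu₁def, hu₁n]
    exact h2
  have hang : ((starRingEnd ℂ) u₁ * ((Complex.I * z₁) * W)).re = 0 := by
    have h0 := hmax.deriv_eq_zero
    rw [hFd.deriv] at h0
    have h4 : Complex.exp (((0:ℝ):ℂ) * Complex.I) * z₁ = z₁ := by simp
    rw [h4, ← hu₁def] at h0
    linarith [h0]
  -- radial derivative: Re κ ≥ 1
  have hBin : HasDerivAt (fun t : ℝ => (t:ℂ) * z₁) z₁ 1 := by
    have h1 : HasDerivAt (fun t : ℝ => ((t:ℝ):ℂ)) ((1:ℝ):ℂ) 1 := (hasDerivAt_id (1:ℝ)).ofReal_comp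
    simpa using h1.mul_const z₁
  have hBd : HasDerivAt (fun t : ℝ => w ((t:ℂ) * z₁)) (z₁ * W) 1 := by
    have := hwdz.scomp_of_eq (1:ℝ) hBin (by simp)
    simpa [smul_eq_mul, Function.comp_def] using this
  have hψd := aux_normSq_deriv hBd
  have hB1 : ((1:ℝ):ℂ) * z₁ = z₁ := by simp
  have hrad : 2 ≤ 2 * ((starRingEnd ℂ) u₁ * (z₁ * W)).re := by
    set ψ : ℝ → ℝ := fun t => Complex.normSq (w ((t:ℂ) * z₁)) with hψdef
    have hψ1 : ψ 1 = 1 := by rw [hψdef]; simp only [hB1]; rw [← hu₁def, hu₁n]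
    have hslope : Tendsto (slope ψ 1) (𝓝[<] (1:ℝ))
        (𝓝 (2 * ((starRingEnd ℂ) (w (((1:ℝ):ℂ) * z₁)) * (z₁ * W)).re)) := by
      have h := hasDerivAt_iff_tendsto_slope.mp hψd
      exact h.mono_left (nhdsWithin_mono 1 fun x hx => ne_of_lt hx)
    rw [hB1, ← hu₁def] at hslope
    have htendsto2 : Tendsto (fun t : ℝ => 1 + t) (𝓝[<] (1:ℝ)) (𝓝 (2:ℝ)) := by
      have : Tendsto (fun t : ℝ => 1 + t) (𝓝 (1:ℝ)) (𝓝 (1 + 1)) :=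
        tendsto_const_nhds.add tendsto_id
      norm_num at this
      exact this.mono_left nhdsWithin_le_nhds
    refine le_of_tendsto_of_tendsto htendsto2 hslope ?_
    filter_upwards [Ioo_mem_nhdsLT_of_mem (by norm_num : (1:ℝ) ∈ Set.Ioc (0:ℝ) 1)] with t ht
    have hts : ψ t ≤ t^2 := by
      have h1 := hSch t ht.1.le ht.2.le
      rw [hψdef]
      simp only
      rw [Complex.normSq_eq_norm_sq]
      nlinarith [norm_nonneg (w ((t:ℂ) * z₁))]
    rw [slope_def_field, hψ1]
    rw [le_div_iff_of_neg (by linarith [ht.2] : t - 1 < 0)]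
    nlinarith [ht.2]
  set κ := (starRingEnd ℂ) u₁ * (z₁ * W) with hκdef
  clear_value κ
  have hκre : 1 ≤ κ.re := by linarith [hrad]
  have hκim : κ.im = 0 := by
    have h1 : (starRingEnd ℂ) u₁ * ((Complex.I * z₁) * W) = Complex.I * κ := by
      rw [hκdef]; ring
    rw [h1] at hang
    simpa [Complex.mul_re] using hang
  set K := κ.re with hKdef
  clear_value K
  have hκval : κ = (K:ℂ) := by
    apply Complex.ext
    · simp [hKdef]
    · simp [hκim]
  -- algebra: z₁ * deriv p z₁ = -κ (1 + b²)/2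
  have h1mp : (1 : ℂ) - p z₁ ≠ 0 := by
    rw [hpz₁]
    intro h
    have := congrArg Complex.re h
    simp at this
  have hu₁val : u₁ = (1 - p z₁) / (1 + p z₁) := by rw [hu₁def, hwdef]
  have hkey : κ * u₁ = z₁ * W := by
    calc κ * u₁ = ((starRingEnd ℂ) u₁ * u₁) * (z₁ * W) := by rw [hκdef]; ring
      _ = z₁ * W := by rw [hconj, one_mul]
  have hzd : z₁ * deriv p z₁ = -κ * (1 + (b:ℂ)^2) / 2 := by
    have e1 : κ * ((1 - p z₁) / (1 + p z₁))
        = z₁ * ((-(deriv p z₁) * (1 + p z₁) - (1 - p z₁) * deriv p z₁) / (1 + p z₁)^2) := by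
      rw [← hWdef, ← hu₁val]; exact hkey
    rw [← mul_div_assoc, ← mul_div_assoc] at e1
    rw [div_eq_div_iff hdenz₁ (pow_ne_zero 2 hdenz₁)] at e1
    -- κ (1-p)(1+p)² = z₁ (...)(1+p)
    have e2 : κ * (1 - p z₁) * (1 + p z₁)
        = z₁ * (-(deriv p z₁) * (1 + p z₁) - (1 - p z₁) * deriv p z₁) := by
      have := mul_right_cancel₀ hdenz₁ (by rw [← e1]; ring : κ * (1 - p z₁) * (1 + p z₁) * (1 + p z₁) = z₁ * (-(deriv p z₁) * (1 + p z₁) - (1 - p z₁) * deriv p z₁) * (1 + p z₁))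
      exact this
    rw [hpz₁] at e2
    have h5 : κ * (1 + (b:ℂ)^2) = -2 * (z₁ * deriv p z₁) := by
      linear_combination e2 + (κ * ((b:ℂ)^2)) * Complex.I_sq
    linear_combination h5 / 2
  -- final computation
  have hfd : HasDerivAt f (1 * p z₁ + z₁ * deriv p z₁) z₁ := by
    have h5 := (hasDerivAt_id z₁).mul hpd
    have hfe : f = fun x => x * p x := funext hfp
    rw [hfe]
    simpa [Pi.mul_def] using h5
  have hfz₁ : f z₁ = z₁ * p z₁ := hfp z₁
  have hbC : (b:ℂ) ≠ 0 := Complex.ofReal_ne_zero.mpr hbne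
  set c : ℝ := K * (1 + b^2) / (2*b) with hcdef
  clear_value c
  have hcb : c * b = K * (1 + b^2) / 2 := by
    rw [hcdef]; field_simp
  have hcbC : (c:ℂ) * (b:ℂ) = (K:ℂ) * (1 + (b:ℂ)^2) / 2 := by
    exact_mod_cast congrArg (fun x : ℝ => (x:ℂ)) hcb
  have hGval : z₁ * deriv f z₁ / f z₁ = 1 + (c : ℂ) * Complex.I := by
    rw [hfd.deriv, hfz₁]
    rw [div_eq_iff (mul_ne_zero hz₁ne hpz₁ne)]
    have e3 : z₁ * (1 * p z₁ + z₁ * deriv p z₁) = z₁ * p z₁ + z₁ * (z₁ * deriv p z₁) := by ring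
    rw [e3, hzd, hκval, hpz₁]
    linear_combination (-z₁ * Complex.I^2) * hcbC + (-(z₁ * (K:ℂ) * (1+(b:ℂ)^2)/2)) * Complex.I_sq
  have hargz₁ := harg z₁ hz₁ball
  rw [hGval] at hargz₁
  have hGne : (1 + (c:ℂ) * Complex.I) ≠ 0 := by
    intro h
    have := congrArg Complex.re h
    simp at this
  have hsm := aux_small_arg hGne hargz₁
  have hre1 : (1 + (c:ℂ) * Complex.I).re = 1 := by simp
  have him1 : (1 + (c:ℂ) * Complex.I).im = c := by simp
  rw [hre1, him1] at hsm
  -- contradiction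
  have h2b : 2 * |b| ≤ 1 + b^2 := by nlinarith [sq_nonneg (|b| - 1), _root_.sq_abs b]
  have habsb : 0 < |b| := abs_pos.mpr hbne
  have hge1 : 1 ≤ |c| := by
    have habs2b : |2 * b| = 2 * |b| := by rw [abs_mul, _root_.abs_two]
    have hK1b : |K * (1 + b^2)| = K * (1 + b^2) := _root_.abs_of_pos (by positivity)
    rw [hcdef, abs_div, habs2b, hK1b, le_div_iff₀ (by positivity)]
    have hstep : 1 * (1 + b^2) ≤ K * (1 + b^2) :=
      mul_le_mul_of_nonneg_right hκre (by positivity)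
    linarith
  linarith
end

section
/- Let f be analytic on the unit disc D with f(0)=0, f'(0)=1. If |z f'(z)/f(z) − 1| < 1 for all nonzero z in D, then Re(f(z)/z) > 0 for all z in D (with f(z)/z = 1 at z = 0). -/
open Complex Metric Real

theorem stmt_7 (f : ℂ → ℂ)
    (hf : DifferentiableOn ℂ f (ball 0 1)) (hf0 : f 0 = 0) (hf1 : deriv f 0 = 1)
    (hb : ∀ z ∈ ball (0 : ℂ) 1, z ≠ 0 → ‖z * deriv f z / f z - 1‖ < 1) :
    ∀ z ∈ ball (0 : ℂ) 1, 0 < (if z = 0 then 1 else f z / z).re := by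
  set g : ℂ → ℂ := dslope f 0 with hgdef
  have hball : (ball (0:ℂ) 1) ∈ nhds (0:ℂ) := ball_mem_nhds _ one_pos
  have hg : DifferentiableOn ℂ g (ball 0 1) := (differentiableOn_dslope hball).mpr hf
  have hg0 : g 0 = 1 := by rw [hgdef, dslope_same, hf1]
  have hgz : ∀ z : ℂ, z ≠ 0 → g z = f z / z := by
    intro z hz
    rw [hgdef, dslope_of_ne _ hz, slope_def_field, hf0, sub_zero, sub_zero]
  have hfz : ∀ z ∈ ball (0:ℂ) 1, z ≠ 0 → f z ≠ 0 := by
    intro z hzb hz hfz0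
    have := hb z hzb hz
    rw [hfz0, div_zero, zero_sub, norm_neg, norm_one] at this
    exact lt_irrefl 1 this
  have hgne : ∀ z ∈ ball (0:ℂ) 1, g z ≠ 0 := by
    intro z hz
    rcases eq_or_ne z 0 with rfl | h
    · rw [hg0]; exact one_ne_zero
    · rw [hgz z h]; exact div_ne_zero (hfz z hz h) h
  have hgan : AnalyticOnNhd ℂ g (ball 0 1) := hg.analyticOnNhd isOpen_ball
  have hg' : DifferentiableOn ℂ (deriv g) (ball 0 1) := hgan.deriv.differentiableOn
  -- value of deriv g away from 0
  have hderiv : ∀ z ∈ ball (0:ℂ) 1, z ≠ 0 →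
      deriv g z = (deriv f z * z - f z) / z ^ 2 := by
    intro z hzb hz
    have hev : g =ᶠ[nhds z] fun w => f w / w := by
      filter_upwards [isOpen_ne.mem_nhds hz] with w hw
      exact hgz w hw
    have hfa : DifferentiableAt ℂ f z := hf.differentiableAt (isOpen_ball.mem_nhds hzb)
    rw [hev.deriv_eq, deriv_fun_div hfa differentiableAt_fun_id hz]
    simp
  -- the function u = g'/g
  set u : ℂ → ℂ := fun w => deriv g w / g w with hudef
  have hurel : ∀ z ∈ ball (0:ℂ) 1, z ≠ 0 → z * u z = z * deriv f z / f z - 1 := by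
    intro z hzb hz
    have hfne := hfz z hzb hz
    rw [hudef]
    simp only
    rw [hderiv z hzb hz, hgz z hz]
    field_simp
  have hud : DifferentiableOn ℂ u (ball 0 1) := hg'.div hg hgne
  -- Schwarz lemma applied to F w = w * u w
  set F : ℂ → ℂ := fun w => w * u w with hFdef
  have hFd : DifferentiableOn ℂ F (ball 0 1) := differentiableOn_id.mul hud
  have hF0 : F 0 = 0 := by simp [hFdef]
  have hFlt : ∀ w ∈ ball (0:ℂ) 1, ‖F w‖ < 1 := by
    intro w hw
    rcases eq_or_ne w 0 with rfl | h
    · rw [hF0, norm_zero]; exact one_pos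
    · rw [hFdef]; simp only; rw [hurel w hw h]; exact hb w hw h
  have hmaps : Set.MapsTo F (ball 0 1) (ball (F 0) 1) := by
    rw [hF0]
    intro w hw
    exact mem_ball_zero_iff.mpr (hFlt w hw)
  have hubound : ∀ w ∈ ball (0:ℂ) 1, ‖u w‖ ≤ 1 := by
    intro w hw
    have hs := Complex.norm_dslope_le_div_of_mapsTo_ball hFd (hmaps.mono_right ball_subset_closedBall) hw
    rw [div_one] at hs
    rcases eq_or_ne w 0 with rfl | h
    · rw [dslope_same] at hs
      have hu0 : DifferentiableAt ℂ u 0 := hud.differentiableAt hball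
      have : deriv F 0 = u 0 := by
        have := deriv_fun_mul (differentiableAt_fun_id) hu0 (c := fun w : ℂ => w) (d := u)
        simpa [hFdef] using this
      rwa [this] at hs
    · rw [dslope_of_ne _ h, slope_def_field, hF0, sub_zero, sub_zero, hFdef] at hs
      simp only at hs
      rwa [mul_comm, mul_div_assoc, div_self h, mul_one] at hs
  -- main part
  intro z hz
  have hrw : (if z = 0 then (1:ℂ) else f z / z) = g z := by
    split_ifs with h
    · rw [h, hg0]
    · rw [hgz z h]
  rw [hrw]
  rcases eq_or_ne z 0 with rfl | hzne
  · rw [hg0]; norm_num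
  -- construct the logarithm along the segment
  have hznorm : ‖z‖ < 1 := mem_ball_zero_iff.mp hz
  have hzpos : 0 < ‖z‖ := norm_pos_iff.mpr hzne
  set a : ℝ := ‖z‖⁻¹ with hadef
  have ha1 : 1 < a := (one_lt_inv₀ hzpos).mpr hznorm
  set p : ℝ → ℂ := fun t => (t : ℂ) * z with hpdef
  have hpmem : ∀ t : ℝ, t ∈ Set.Ioo (-a) a → p t ∈ ball (0:ℂ) 1 := by
    intro t ht
    rw [mem_ball_zero_iff, hpdef]
    simp only
    rw [norm_mul, Complex.norm_real, Real.norm_eq_abs]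
    calc |t| * ‖z‖ < a * ‖z‖ := by
          apply mul_lt_mul_of_pos_right _ hzpos
          exact abs_lt.mpr ⟨ht.1, ht.2⟩
      _ = 1 := inv_mul_cancel₀ (ne_of_gt hzpos)
  set φ : ℝ → ℂ := fun t => z * u (p t) with hφdef
  have hucont : ContinuousOn u (ball (0:ℂ) 1) := hud.continuousOn
  have hpcont : Continuous p := by
    rw [hpdef]; exact (Complex.continuous_ofReal).mul continuous_const
  have hφcont : ContinuousOn φ (Set.Ioo (-a) a) :=
    continuousOn_const.mul (hucont.comp hpcont.continuousOn hpmem)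
  have hIcc : Set.Icc (0:ℝ) 1 ⊆ Set.Ioo (-a) a := by
    intro x hx
    constructor <;> [linarith [hx.1, ha1]; linarith [hx.2, ha1]]
  set H : ℝ → ℂ := fun t => ∫ s in (0:ℝ)..t, φ s with hHdef
  have hHd : ∀ t ∈ Set.Ioo (-a) a, HasDerivAt H (φ t) t := by
    intro t ht
    apply intervalIntegral.integral_hasDerivAt_right
    · apply ContinuousOn.intervalIntegrable
      apply hφcont.mono
      intro x hx
      rcases Set.mem_uIcc.mp hx with ⟨h1, h2⟩ | ⟨h1, h2⟩
      · constructor <;> [linarith [ht.1]; rcases lt_or_ge t 0 with h | h <;> [linarith [ht.1]; linarith [ht.2]]]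
      · constructor <;> [rcases lt_or_ge t 0 with h | h <;> [linarith [ht.1]; linarith]; linarith [ht.2, ha1]]
    · exact hφcont.stronglyMeasurableAtFilter isOpen_Ioo t ht
    · exact hφcont.continuousAt (isOpen_Ioo.mem_nhds ht)
  set ψ : ℝ → ℂ := fun t => g (p t) * Complex.exp (-H t) with hψdef
  have hψd : ∀ t ∈ Set.Ioo (-a) a, HasDerivAt ψ 0 t := by
    intro t ht
    have hpm := hpmem t ht
    have hpd : HasDerivAt p z t := by
      rw [hpdef]; simpa using (Complex.ofRealCLM.hasDerivAt (x := t)).mul_const z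
    have hgd : HasDerivAt g (deriv g (p t)) (p t) :=
      (hg.differentiableAt (isOpen_ball.mem_nhds hpm)).hasDerivAt
    have h1 : HasDerivAt (fun s => g (p s)) (z * deriv g (p t)) t := by
      have := HasDerivAt.scomp t hgd hpd
      rw [smul_eq_mul] at this
      exact this
    have h2 : HasDerivAt (fun s => Complex.exp (-H s)) (Complex.exp (-H t) * (-(φ t))) t :=
      ((hHd t ht).neg).cexp
    have h3 := h1.mul h2
    have hgne' : g (p t) ≠ 0 := hgne _ hpm
    have heq : z * deriv g (p t) * Complex.exp (-H t) +
        g (p t) * (Complex.exp (-H t) * -φ t) = 0 := by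
      rw [hφdef]
      simp only
      rw [hudef]
      simp only
      field_simp
      ring
    rw [heq] at h3
    exact h3
  have hconst : ψ 1 = ψ 0 := by
    apply constant_of_has_deriv_right_zero
      (f := ψ) (a := (0:ℝ)) (b := 1)
    · intro x hx
      exact ((hψd x (hIcc hx)).continuousAt).continuousWithinAt
    · intro x hx
      exact ((hψd x (hIcc ⟨hx.1, le_of_lt hx.2⟩))).hasDerivWithinAt
    · exact Set.right_mem_Icc.mpr zero_le_one
  have hH0 : H 0 = 0 := by rw [hHdef]; simp
  have hp0 : p 0 = 0 := by rw [hpdef]; simp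
  have hp1 : p 1 = z := by rw [hpdef]; simp
  have hkey : g z = Complex.exp (H 1) := by
    have h0 : ψ 0 = 1 := by rw [hψdef]; simp only; rw [hp0, hg0, hH0]; simp
    have h1 : ψ 1 = g z * Complex.exp (-H 1) := by rw [hψdef]; simp only; rw [hp1]
    have := hconst
    rw [h0, h1] at this
    have := congrArg (· * Complex.exp (H 1)) this
    simpa [mul_assoc, ← Complex.exp_add] using this
  -- norm bound on H 1
  have hHbound : ‖H 1‖ < 1 := by
    have hb1 : ∀ x ∈ Set.uIoc (0:ℝ) 1, ‖φ x‖ ≤ ‖z‖ := by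
      intro x hx
      rw [Set.uIoc_of_le zero_le_one] at hx
      have hxm : x ∈ Set.Ioo (-a) a := hIcc ⟨le_of_lt hx.1, hx.2⟩
      rw [hφdef]
      simp only
      rw [norm_mul]
      calc ‖z‖ * ‖u (p x)‖ ≤ ‖z‖ * 1 :=
            mul_le_mul_of_nonneg_left (hubound _ (hpmem x hxm)) (norm_nonneg z)
        _ = ‖z‖ := mul_one _
    have := intervalIntegral.norm_integral_le_of_norm_le_const hb1
    rw [hHdef]
    simp only
    calc ‖∫ s in (0:ℝ)..1, φ s‖ ≤ ‖z‖ * |1 - 0| := this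
      _ = ‖z‖ := by norm_num
      _ < 1 := hznorm
  -- conclude
  rw [hkey, Complex.exp_re]
  apply mul_pos (Real.exp_pos _)
  apply Real.cos_pos_of_mem_Ioo
  have him : |(H 1).im| ≤ ‖H 1‖ := Complex.abs_im_le_norm _
  have hpi : 1 < π / 2 := by
    have := Real.pi_gt_three
    linarith
  constructor
  · have := (abs_lt.mp (lt_of_le_of_lt him hHbound)).1
    linarith
  · have := (abs_lt.mp (lt_of_le_of_lt him hHbound)).2
    linarith
end

section
/- Let p be analytic on the unit disc D with p(0)=1 and p(z) ≠ 0 for all z in D. Suppose there exists z₀ ∈ D such that Re p(z) > 0 for all |z| < |z₀| and Re p(z₀) = 0 with p(z₀) ≠ 0, say p(z₀) = i a with a real, a ≠ 0. Then z₀ p'(z₀)/p(z₀) = i k for some real k with k ≥ (1/2)(a + 1/a) if a > 0 and k ≤ −(1/2)(|a| + 1/|a|) if a < 0. -/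
open Complex Metric Real

lemma hasDerivAt_normSq_comp {f : ℝ → ℂ} {f' : ℂ} {x : ℝ} (hf : HasDerivAt f f' x) :
    HasDerivAt (fun s => Complex.normSq (f s)) (2 * ((starRingEnd ℂ) (f x) * f').re) x := by
  have hre : HasDerivAt (fun s => (f s).re) f'.re x :=
    (Complex.reCLM.hasFDerivAt.comp_hasDerivAt x hf)
  have him : HasDerivAt (fun s => (f s).im) f'.im x :=
    (Complex.imCLM.hasFDerivAt.comp_hasDerivAt x hf)
  have H := (hre.mul hre).add (him.mul him)
  refine (H.congr_deriv ?_).congr_of_eventuallyEq (Filter.Eventually.of_forall fun s => ?_)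
  · simp [Complex.mul_re, Complex.conj_re, Complex.conj_im]
    ring
  · simp [Complex.normSq_apply]

lemma deriv_nonneg_of_right (g : ℝ → ℝ) (g' : ℝ) (hg : HasDerivAt g g' 0)
    (h : ∀ᶠ s in nhdsWithin (0:ℝ) (Set.Ioi 0), g 0 ≤ g s) : 0 ≤ g' := by
  have H := hasDerivAt_iff_tendsto_slope.mp hg
  have H2 : Filter.Tendsto (slope g 0) (nhdsWithin (0:ℝ) (Set.Ioi 0)) (nhds g') :=
    H.mono_left (nhdsWithin_mono _ (fun x hx => ne_of_gt hx))
  refine ge_of_tendsto H2 ?_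
  filter_upwards [h, self_mem_nhdsWithin] with s hs hs'
  have hs0 : (0:ℝ) < s := hs'
  rw [slope_def_field]
  have h1 : (0:ℝ) ≤ (g s - g 0) := by linarith
  have h2 : (0:ℝ) < s - 0 := by linarith
  exact div_nonneg h1 h2.le

lemma normSq_add_smul' (z v : ℂ) (s : ℝ) :
    Complex.normSq (z + s • v) =
      Complex.normSq z + 2*s*((starRingEnd ℂ) z * v).re + s^2 * Complex.normSq v := by
  simp [Complex.normSq_apply, Complex.add_re, Complex.add_im, Complex.mul_re,
    Complex.conj_re, Complex.conj_im, Complex.smul_re, Complex.smul_im, smul_eq_mul]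
  ring

lemma norm_lt_of_normSq_lt {u : ℂ} {r : ℝ} (hr : 0 ≤ r)
    (h : Complex.normSq u < r^2) : ‖u‖ < r := by
  have h1 : ‖u‖^2 = Complex.normSq u := by
    rw [Complex.sq_norm]
  refine lt_of_pow_lt_pow_left₀ 2 hr ?_
  rw [h1]; exact h

theorem stmt_8 (p : ℂ → ℂ)
    (hp : DifferentiableOn ℂ p (ball 0 1)) (hp0 : p 0 = 1)
    (hpne : ∀ z ∈ ball (0 : ℂ) 1, p z ≠ 0)
    (z₀ : ℂ) (hz₀ : z₀ ∈ ball (0 : ℂ) 1)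
    (hpos : ∀ z : ℂ, ‖z‖ < ‖z₀‖ → 0 < (p z).re)
    (a : ℝ) (ha : a ≠ 0) (hpz₀ : p z₀ = (a : ℂ) * Complex.I) :
    ∃ k : ℝ, z₀ * deriv p z₀ / p z₀ = (k : ℂ) * Complex.I ∧
      (0 < a → (a + 1 / a) / 2 ≤ k) ∧
      (a < 0 → k ≤ -((|a| + 1 / |a|) / 2)) := by
  have hz01 : ‖z₀‖ < 1 := mem_ball_zero_iff.mp hz₀
  have hz0ne : z₀ ≠ 0 := by
    intro h
    rw [h, hp0] at hpz₀
    have h2 := congrArg Complex.re hpz₀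
    simp at h2
  set r : ℝ := ‖z₀‖ with hrdef
  have hr0 : 0 < r := norm_pos_iff.mpr hz0ne
  set q : ℂ → ℂ := fun z => (1 - p z) / (1 + p z) with hqdef
  have hsub : ball (0:ℂ) r ⊆ ball 0 1 := ball_subset_ball hz01.le
  have hne : ∀ z ∈ ball (0:ℂ) r, 1 + p z ≠ 0 := by
    intro z hz h
    have hre := hpos z (mem_ball_zero_iff.mp hz)
    have h2 := congrArg Complex.re h
    simp [Complex.add_re] at h2
    linarith
  have hqd : DifferentiableOn ℂ q (ball 0 r) :=
    ((differentiableOn_const 1).sub (hp.mono hsub)).div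
      ((differentiableOn_const 1).add (hp.mono hsub)) hne
  have hq0 : q 0 = 0 := by simp [hqdef, hp0]
  have hmaps : Set.MapsTo q (ball 0 r) (ball (q 0) 1) := by
    intro z hz
    rw [hq0, mem_ball_zero_iff]
    have hre := hpos z (mem_ball_zero_iff.mp hz)
    have hlt : Complex.normSq (1 - p z) < Complex.normSq (1 + p z) := by
      simp only [Complex.normSq_apply, Complex.add_re, Complex.add_im, Complex.sub_re,
        Complex.sub_im, Complex.one_re, Complex.one_im]
      nlinarith
    have hden : 0 < ‖(1:ℂ) + p z‖ := by
      rw [norm_pos_iff]; exact hne z hz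
    have hnormlt : ‖(1:ℂ) - p z‖ < ‖(1:ℂ) + p z‖ := by
      refine norm_lt_of_normSq_lt (norm_nonneg _) ?_
      have e2 : ‖(1:ℂ) + p z‖^2 = Complex.normSq (1 + p z) := by
        rw [Complex.sq_norm]
      rw [e2]; exact hlt
    show ‖(1 - p z)/(1 + p z)‖ < 1
    rw [norm_div, div_lt_one hden]
    exact hnormlt
  -- Schwarz lemma
  have hSch : ∀ z ∈ ball (0:ℂ) r, r^2 * Complex.normSq (q z) ≤ Complex.normSq z := by
    intro z hz
    have := dist_le_div_mul_dist_of_mapsTo_ball hqd (hmaps.mono_right ball_subset_closedBall) hz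
    rw [hq0, dist_zero_right, dist_zero_right] at this
    have h1 : ‖q z‖ ≤ ‖z‖ / r := by
      calc ‖q z‖ ≤ 1 / r * ‖z‖ := this
        _ = ‖z‖ / r := by ring
    have h2 : Complex.normSq (q z) = ‖q z‖^2 := by rw [Complex.sq_norm]
    have h3 : Complex.normSq z = ‖z‖^2 := by rw [Complex.sq_norm]
    rw [h2, h3]
    have h4 : ‖q z‖^2 ≤ (‖z‖/r)^2 := by
      have := norm_nonneg (q z)
      nlinarith
    have h5 : (‖z‖/r)^2 * r^2 = ‖z‖^2 := by field_simp
    nlinarith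
  -- data at z₀
  have hd0 : (1 : ℂ) + p z₀ ≠ 0 := by
    intro h
    have h2 := congrArg Complex.re h
    rw [hpz₀] at h2
    simp at h2
  have hP' : HasDerivAt p (deriv p z₀) z₀ :=
    (hp.differentiableAt (isOpen_ball.mem_nhds hz₀)).hasDerivAt
  set P' : ℂ := deriv p z₀ with hP'def
  have hQ : HasDerivAt q
      (((0 - P') * (1 + p z₀) - (1 - p z₀) * (0 + P')) / (1 + p z₀) ^ 2) z₀ :=
    ((hasDerivAt_const z₀ (1:ℂ)).sub hP').div ((hasDerivAt_const z₀ (1:ℂ)).add hP') hd0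
  set Q' : ℂ := ((0 - P') * (1 + p z₀) - (1 - p z₀) * (0 + P')) / (1 + p z₀) ^ 2 with hQ'def
  have hw0 : Complex.normSq (q z₀) = 1 := by
    have : q z₀ = (1 - (a:ℂ)*Complex.I)/(1 + (a:ℂ)*Complex.I) := by
      rw [hqdef]; simp only [hpz₀]
    rw [this, map_div₀]
    have h1 : Complex.normSq (1 - (a:ℂ)*Complex.I) = 1 + a^2 := by
      simp [Complex.normSq_apply]; ring
    have h2 : Complex.normSq (1 + (a:ℂ)*Complex.I) = 1 + a^2 := by
      simp [Complex.normSq_apply]; ring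
    rw [h1, h2, div_self]
    positivity
  have hnz0 : Complex.normSq z₀ = r^2 := by
    rw [hrdef, Complex.sq_norm]
  -- key directional inequality
  have key : ∀ v : ℂ, ((starRingEnd ℂ) z₀ * v).re < 0 →
      0 ≤ 2 * ((starRingEnd ℂ) z₀ * v).re
        - r^2 * (2 * ((starRingEnd ℂ) (q z₀) * (v • Q')).re) := by
    intro v hv
    have hvne : v ≠ 0 := by
      intro h; rw [h] at hv; simp at hv
    -- the curve
    have hcurve : HasDerivAt (fun s : ℝ => z₀ + s • v) v 0 := by
      have := ((hasDerivAt_id (0:ℝ)).smul_const v).const_add z₀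
      simpa using this
    have hzc : z₀ + (0:ℝ) • v = z₀ := by simp
    have hQ2 : HasDerivAt q Q' (z₀ + (0:ℝ) • v) := by rw [hzc]; exact hQ
    have hqc : HasDerivAt (fun s : ℝ => q (z₀ + s • v)) (v • Q') 0 := by
      have := HasDerivAt.scomp (0:ℝ) hQ2 hcurve
      simpa [Function.comp_def] using this
    have hg1 : HasDerivAt (fun s : ℝ => Complex.normSq (z₀ + s • v))
        (2 * ((starRingEnd ℂ) z₀ * v).re) 0 := by
      have := hasDerivAt_normSq_comp hcurve
      rw [hzc] at this
      exact this
    have hg2 : HasDerivAt (fun s : ℝ => Complex.normSq (q (z₀ + s • v)))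
        (2 * ((starRingEnd ℂ) (q z₀) * (v • Q')).re) 0 := by
      have := hasDerivAt_normSq_comp hqc
      rw [hzc] at this
      exact this
    have hg : HasDerivAt
        (fun s : ℝ => Complex.normSq (z₀ + s • v) - r^2 * Complex.normSq (q (z₀ + s • v)))
        (2 * ((starRingEnd ℂ) z₀ * v).re
          - r^2 * (2 * ((starRingEnd ℂ) (q z₀) * (v • Q')).re)) 0 :=
      hg1.sub (hg2.const_mul (r^2))
    refine deriv_nonneg_of_right _ _ hg ?_
    have hδ : 0 < (-2 * ((starRingEnd ℂ) z₀ * v).re) / (Complex.normSq v + 1) := by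
      have := Complex.normSq_nonneg v
      apply div_pos (by linarith) (by linarith)
    filter_upwards [Ioo_mem_nhdsGT_of_mem
      (Set.mem_Ico.mpr ⟨le_refl (0:ℝ), hδ⟩)] with s hs
    obtain ⟨hs0, hsδ⟩ := hs
    have hmem : z₀ + s • v ∈ ball (0:ℂ) r := by
      rw [mem_ball_zero_iff]
      refine norm_lt_of_normSq_lt hr0.le ?_
      rw [normSq_add_smul', hnz0]
      have hnv : 0 ≤ Complex.normSq v := Complex.normSq_nonneg v
      have hB : (0:ℝ) < Complex.normSq v + 1 := by linarith
      have hkey := (lt_div_iff₀ hB).mp hsδ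
      nlinarith
    show Complex.normSq (z₀ + (0:ℝ) • v) - r^2 * Complex.normSq (q (z₀ + (0:ℝ) • v))
        ≤ Complex.normSq (z₀ + s • v) - r^2 * Complex.normSq (q (z₀ + s • v))
    rw [hzc, hnz0, hw0]
    have hS := hSch _ hmem
    simp only [mul_one]
    linarith
  -- extract Jack's lemma quantities
  set M : ℂ := (starRingEnd ℂ) (q z₀) * (z₀ * Q') with hMdef
  have hcz : ∀ u : ℂ, (starRingEnd ℂ) z₀ * (u * z₀) = u * ((r^2 : ℝ) : ℂ) := by
    intro u
    calc (starRingEnd ℂ) z₀ * (u * z₀) = u * (z₀ * (starRingEnd ℂ) z₀) := by ring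
      _ = u * ((Complex.normSq z₀ : ℝ) : ℂ) := by rw [Complex.mul_conj]
      _ = u * ((r^2:ℝ):ℂ) := by rw [hnz0]
  have hre1 : ∀ u : ℂ, ((starRingEnd ℂ) z₀ * (u * z₀)).re = u.re * r^2 := by
    intro u; rw [hcz, Complex.mul_re, Complex.ofReal_re, Complex.ofReal_im]; ring
  have hMre : ∀ u : ℂ, ((starRingEnd ℂ) (q z₀) * ((u * z₀) • Q')).re
      = u.re * M.re - u.im * M.im := by
    intro u
    have h : (starRingEnd ℂ) (q z₀) * ((u * z₀) • Q') = u * M := by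
      rw [hMdef]; simp only [smul_eq_mul]; ring
    rw [h, Complex.mul_re]
  have hA : ∀ ε : ℝ, 0 < ε → ε * (1 - M.re) ≤ M.im := by
    intro ε hε
    have hure : (Complex.I - (ε:ℂ)).re = -ε := by simp
    have huim : (Complex.I - (ε:ℂ)).im = 1 := by simp
    have hv : ((starRingEnd ℂ) z₀ * ((Complex.I - (ε:ℂ)) * z₀)).re < 0 := by
      rw [hre1, hure]
      nlinarith [mul_pos hr0 hr0]
    have hk := key _ hv
    rw [hre1, hMre, hure, huim] at hk
    nlinarith [mul_pos hr0 hr0]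
  have hB : ∀ ε : ℝ, 0 < ε → ε * (1 - M.re) ≤ -M.im := by
    intro ε hε
    have hure : (-Complex.I - (ε:ℂ)).re = -ε := by simp
    have huim : (-Complex.I - (ε:ℂ)).im = -1 := by simp
    have hv : ((starRingEnd ℂ) z₀ * ((-Complex.I - (ε:ℂ)) * z₀)).re < 0 := by
      rw [hre1, hure]
      nlinarith [mul_pos hr0 hr0]
    have hk := key _ hv
    rw [hre1, hMre, hure, huim] at hk
    nlinarith [mul_pos hr0 hr0]
  have hm1 : 1 ≤ M.re := by
    have h1 := hA 1 one_pos
    have h2 := hB 1 one_pos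
    linarith
  have hIm : M.im = 0 := by
    rcases lt_trichotomy M.im 0 with h|h|h
    · exfalso
      set ε : ℝ := (-M.im)/(2*(M.re-1)+2) with hεdef
      have hεpos : 0 < ε := by
        apply div_pos (by linarith) (by linarith)
      have h2 := hA ε hεpos
      have hεD : ε * (2*(M.re-1)+2) = -M.im := by
        rw [hεdef]; exact div_mul_cancel₀ _ (by linarith)
      nlinarith
    · exact h
    · exfalso
      set ε : ℝ := M.im/(2*(M.re-1)+2) with hεdef
      have hεpos : 0 < ε := by
        apply div_pos (by linarith) (by linarith)
      have h2 := hB ε hεpos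
      have hεD : ε * (2*(M.re-1)+2) = M.im := by
        rw [hεdef]; exact div_mul_cancel₀ _ (by linarith)
      nlinarith
  have hMc : M = ((M.re : ℝ) : ℂ) := by
    apply Complex.ext
    · simp
    · simp [hIm]
  have hE : z₀ * Q' = ((M.re : ℝ) : ℂ) * q z₀ := by
    have hconj : q z₀ * (starRingEnd ℂ) (q z₀) = 1 := by
      rw [Complex.mul_conj, hw0]; simp
    calc z₀ * Q' = (q z₀ * (starRingEnd ℂ) (q z₀)) * (z₀ * Q') := by rw [hconj]; ring
      _ = q z₀ * M := by rw [hMdef]; ring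
      _ = ((M.re:ℝ):ℂ) * q z₀ := by rw [← hMc]; ring
  -- final algebra
  have hw1 : (1:ℂ) + (a:ℂ) * Complex.I ≠ 0 := by rw [← hpz₀]; exact hd0
  have hqz : q z₀ = (1 - (a:ℂ)*Complex.I)/(1 + (a:ℂ)*Complex.I) := by
    rw [hqdef]; simp only [hpz₀]
  have hQv : Q' = ((0 - P') * (1 + (a:ℂ)*Complex.I) - (1 - (a:ℂ)*Complex.I) * (0 + P'))
      / (1 + (a:ℂ)*Complex.I)^2 := by rw [hQ'def, hpz₀]
  rw [hqz, hQv] at hE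
  have h2 : -(2:ℂ) * (z₀ * P') = ((M.re:ℝ):ℂ) * (1 + (a:ℂ)^2) := by
    have d2 : ((1:ℂ)+(a:ℂ)*Complex.I)^2 ≠ 0 := pow_ne_zero 2 hw1
    have hnum : ((0:ℂ) - P') * (1 + (a:ℂ)*Complex.I) - (1 - (a:ℂ)*Complex.I) * (0 + P')
        = -2*P' := by ring
    rw [hnum] at hE
    have e1 : ((1:ℂ)-(a:ℂ)*Complex.I)*(1+(a:ℂ)*Complex.I) = 1+(a:ℂ)^2 := by
      linear_combination (-(a:ℂ)^2) * Complex.I_sq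
    have c1 := congrArg (· * (1+(a:ℂ)*Complex.I)^2) hE
    rw [mul_assoc, div_mul_cancel₀ _ d2] at c1
    have c2 : ((M.re:ℝ):ℂ) * ((1-(a:ℂ)*Complex.I)/(1+(a:ℂ)*Complex.I)) * (1+(a:ℂ)*Complex.I)^2
        = ((M.re:ℝ):ℂ) * (1+(a:ℂ)^2) := by
      field_simp
      linear_combination ((M.re:ℝ):ℂ) * (1+(a:ℂ)*Complex.I) * e1 + ((M.re:ℝ):ℂ) * (a:ℂ)^3 * Complex.I * Complex.I_sq
    rw [c2] at c1
    linear_combination c1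
  refine ⟨M.re * (1+a^2)/(2*a), ?_, ?_, ?_⟩
  · rw [hpz₀]
    rw [div_eq_iff (mul_ne_zero (Complex.ofReal_ne_zero.mpr ha) Complex.I_ne_zero)]
    push_cast
    have hac : (a:ℂ) ≠ 0 := Complex.ofReal_ne_zero.mpr ha
    field_simp
    linear_combination (-1:ℂ) * h2 - ((M.re:ℝ):ℂ) * (1+(a:ℂ)^2) * Complex.I_sq
  · intro hapos
    have he : (a + 1/a)/2 = (1+a^2)/(2*a) := by field_simp; ring
    rw [he, div_le_div_iff₀ (by positivity) (by positivity)]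
    have hx : 0 ≤ (M.re-1)*((1+a^2)*(2*a)) :=
      mul_nonneg (by linarith) (by positivity)
    nlinarith [hx]
  · intro haneg
    rw [abs_of_neg haneg]
    have he : -((-a + 1/(-a))/2) = (1+a^2)/(2*a) := by field_simp; ring
    rw [he]
    have hd : M.re * (1+a^2)/(2*a) - (1+a^2)/(2*a) = ((M.re-1)*(1+a^2))/(2*a) := by ring
    have hle : ((M.re-1)*(1+a^2))/(2*a) ≤ 0 := by
      apply div_nonpos_of_nonneg_of_nonpos
      · nlinarith
      · linarith
    linarith
end

section
/- Let p be analytic and nonvanishing in the unit disc D with p(0)=1, and let α > 1. If |arg(z p'(z)/p(z) + p(z) + α − 1)| < arctan(√3/(α−1)) for all z in D, then Re p(z) > 0 for all z in D. -/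
open Complex Metric Real

open Set Filter Topology

-- slope lemma
lemma aux_slope (H : ℝ → ℝ) (d : ℝ) (hH : HasDerivAt H d 1)
    (hle : ∀ t : ℝ, 0 < t → t < 1 → H t ≤ t^2) (h1 : H 1 = 1) : 2 ≤ d := by
  have ht : Tendsto (slope H 1) (𝓝[<] (1:ℝ)) (𝓝 d) :=
    (hasDerivAt_iff_tendsto_slope.mp hH).mono_left
      (nhdsWithin_mono _ (fun x hx => ne_of_lt hx))
  have h2 : Tendsto (fun t : ℝ => 1 + t) (𝓝[<] (1:ℝ)) (𝓝 2) := by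
    have : Tendsto (fun t : ℝ => 1 + t) (𝓝 (1:ℝ)) (𝓝 (1 + 1)) :=
      (continuous_const.add continuous_id).tendsto 1
    norm_num at this
    exact this.mono_left nhdsWithin_le_nhds
  refine le_of_tendsto_of_tendsto h2 ht ?_
  filter_upwards [Ioo_mem_nhdsLT_of_mem (show (1:ℝ) ∈ Set.Ioc 0 1 by norm_num)] with t ht
  have ht1 : t - 1 < 0 := by linarith [ht.2]
  have hs : slope H 1 t = (H t - 1) / (t - 1) := by
    simp [slope_def_field, h1]
  rw [hs, le_div_iff_of_neg ht1]
  nlinarith [hle t ht.1 ht.2]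

-- arg lemma
lemma aux_arg (x y : ℝ) (hx : 0 < x) :
    |Complex.arg ((x:ℂ) + (y:ℂ) * I)| = Real.arctan (|y| / x) := by
  set z : ℂ := (x:ℂ) + (y:ℂ) * I with hz
  have hre : z.re = x := by simp [hz]
  have him : z.im = y := by simp [hz]
  have habs : |Complex.arg z| < π / 2 := by
    rw [Complex.abs_arg_lt_pi_div_two_iff]
    left; rw [hre]; exact hx
  have htan : Real.tan (Complex.arg z) = y / x := by
    rw [Complex.tan_arg, hre, him]
  have harg : Complex.arg z = Real.arctan (y / x) := by
    rw [← htan, Real.arctan_tan (by linarith [abs_lt.mp habs ]) (abs_lt.mp habs).2]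
  rw [harg]
  rcases le_total 0 y with hy | hy
  · rw [_root_.abs_of_nonneg hy, _root_.abs_of_nonneg]
    rw [← Real.arctan_zero]
    exact Real.arctan_strictMono.monotone (by positivity)
  · rw [_root_.abs_of_nonpos, ← Real.arctan_neg, _root_.abs_of_nonpos hy, neg_div]
    rw [← Real.arctan_zero]
    apply Real.arctan_strictMono.monotone
    exact div_nonpos_of_nonpos_of_nonneg hy hx.le


theorem stmt_15 (p : ℂ → ℂ) (α : ℝ) (hα : 1 < α)
    (hp : DifferentiableOn ℂ p (ball 0 1)) (hp0 : p 0 = 1)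
    (hpne : ∀ z ∈ ball (0 : ℂ) 1, p z ≠ 0)
    (harg : ∀ z ∈ ball (0 : ℂ) 1,
      |Complex.arg (z * deriv p z / p z + p z + (α : ℂ) - 1)| <
        Real.arctan (Real.sqrt 3 / (α - 1))) :
    ∀ z ∈ ball (0 : ℂ) 1, 0 < (p z).re := by
  intro z0 hz0
  by_contra hcon
  push_neg at hcon
  set r0 := ‖z0‖ with hr0def
  have hr0 : r0 < 1 := mem_ball_zero_iff.mp hz0
  have hr0nn : 0 ≤ r0 := norm_nonneg _
  have hsub : closedBall (0:ℂ) r0 ⊆ ball (0:ℂ) 1 := closedBall_subset_ball hr0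
  -- p differentiable/continuous at interior points
  have hpd : ∀ z ∈ ball (0:ℂ) 1, DifferentiableAt ℂ p z :=
    fun z hz => hp.differentiableAt (isOpen_ball.mem_nhds hz)
  -- the set S
  set S : Set ℂ := closedBall (0:ℂ) r0 ∩ {z | (p z).re ≤ 0} with hSdef
  have hSc : IsCompact S := by
    apply IsCompact.of_isClosed_subset (isCompact_closedBall (0:ℂ) r0)
    · have : S = closedBall (0:ℂ) r0 ∩ (fun z => (p z).re) ⁻¹' Iic 0 := rfl
      rw [this]
      apply ContinuousOn.preimage_isClosed_of_isClosed _ isClosed_closedBall isClosed_Iic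
      exact Complex.continuous_re.comp_continuousOn ((hp.continuousOn).mono hsub)
    · exact Set.inter_subset_left
  have hSne : S.Nonempty := ⟨z0, mem_closedBall_zero_iff.mpr le_rfl, hcon⟩
  obtain ⟨z1, hz1S, hz1min⟩ := hSc.exists_isMinOn hSne continuous_norm.continuousOn
  set ρ := ‖z1‖ with hρdef
  have hz1r0 : ρ ≤ r0 := mem_closedBall_zero_iff.mp hz1S.1
  have hz1ball : z1 ∈ ball (0:ℂ) 1 := mem_ball_zero_iff.mpr (lt_of_le_of_lt hz1r0 hr0)
  have hρpos : 0 < ρ := by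
    rcases eq_or_lt_of_le (norm_nonneg z1) with h | h
    · exfalso
      have hz10 : z1 = 0 := by rwa [eq_comm, norm_eq_zero] at h
      have := hz1S.2
      rw [hz10] at this
      simp only [Set.mem_setOf_eq, hp0] at this
      norm_num at this
    · exact h
  have hρ1 : ρ < 1 := lt_of_le_of_lt hz1r0 hr0
  -- interior positivity
  have hinterior : ∀ z : ℂ, ‖z‖ < ρ → 0 < (p z).re := by
    intro z hz
    by_contra hzc
    push_neg at hzc
    have hzS : z ∈ S := ⟨mem_closedBall_zero_iff.mpr (le_trans hz.le hz1r0), hzc⟩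
    have := hz1min hzS
    simp only [Set.mem_setOf_eq] at this
    exact absurd this (not_le.mpr hz)
  -- boundary nonnegativity
  have hboundary : ∀ z : ℂ, ‖z‖ = ρ → 0 ≤ (p z).re := by
    intro z hz
    have hzb : z ∈ ball (0:ℂ) 1 := mem_ball_zero_iff.mpr (hz ▸ hρ1)
    have hcont : Tendsto (fun t : ℝ => (p ((t:ℂ) * z)).re) (𝓝[<] (1:ℝ)) (𝓝 ((p z).re)) := by
      have h1 : ContinuousAt (fun t : ℝ => (p ((t:ℂ) * z)).re) 1 := by
        apply Complex.continuous_re.continuousAt.comp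
        apply ContinuousAt.comp
        · simpa using (hpd z hzb).continuousAt
        · exact (continuous_ofReal.mul continuous_const).continuousAt
      have := h1.tendsto
      simp only [Complex.ofReal_one, one_mul] at this
      exact this.mono_left nhdsWithin_le_nhds
    refine ge_of_tendsto hcont ?_
    filter_upwards [Ioo_mem_nhdsLT_of_mem (show (1:ℝ) ∈ Set.Ioc 0 1 by norm_num)] with t ht
    apply (hinterior _ _).le
    rw [norm_mul, Complex.norm_real, Real.norm_eq_abs, _root_.abs_of_pos ht.1, hz]
    nlinarith [ht.2, hρpos]
  -- p z1 = i λ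
  have hre0 : (p z1).re = 0 := le_antisymm hz1S.2 (hboundary z1 rfl)
  set lam := (p z1).im with hlamdef
  have hpz1 : p z1 = (lam:ℂ) * I := by
    apply Complex.ext <;> simp [hre0, hlamdef]
  have hlam : lam ≠ 0 := by
    intro h
    apply hpne z1 hz1ball
    rw [hpz1, h]
    simp
  set dp := deriv p z1 with hdpdef
  have hpd1 : HasDerivAt p dp z1 := (hpd z1 hz1ball).hasDerivAt
  set a : ℂ := z1 * dp with hadef
  -- Part (i) : a.im = 0
  have haim : a.im = 0 := by
    have i1 : HasDerivAt (fun ζ : ℂ => z1 * Complex.exp (ζ * I)) (z1 * I) 0 := by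
      have h0 : HasDerivAt (fun ζ : ℂ => ζ * I) I 0 := by
        simpa using (hasDerivAt_id (0:ℂ)).mul_const I
      have h1 := (h0.cexp).const_mul z1
      simpa using h1
    have hpd1' : HasDerivAt p dp (z1 * Complex.exp ((0:ℂ) * I)) := by simpa using hpd1
    have i2 : HasDerivAt (fun ζ : ℂ => p (z1 * Complex.exp (ζ * I))) (dp * (z1 * I)) 0 :=
      hpd1'.comp 0 i1
    have i2' : HasDerivAt (fun ζ : ℂ => p (z1 * Complex.exp (ζ * I))) (dp * (z1 * I))
        (((0:ℝ):ℂ)) := by simpa using i2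
    have i3 : HasDerivAt (fun θ : ℝ => p (z1 * Complex.exp ((θ:ℂ) * I))) (dp * (z1 * I)) 0 :=
      i2'.comp_ofReal
    have i4 : HasDerivAt (fun θ : ℝ => (p (z1 * Complex.exp ((θ:ℂ) * I))).re)
        ((dp * (z1 * I)).re) 0 := by
      simpa [Function.comp_def] using Complex.reCLM.hasFDerivAt.comp_hasDerivAt 0 i3
    have hlocmin : IsLocalMin (fun θ : ℝ => (p (z1 * Complex.exp ((θ:ℂ) * I))).re) 0 := by
      apply Filter.Eventually.of_forall
      intro θ
      have hnorm : ‖z1 * Complex.exp ((θ:ℂ) * I)‖ = ρ := by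
        rw [norm_mul, Complex.norm_exp]
        simp [hρdef]
      have h6 := hboundary _ hnorm
      simpa [hre0] using h6
    have h7 := hlocmin.hasDerivAt_eq_zero i4
    have h8 : dp * (z1 * I) = a * I := by rw [hadef]; ring
    rw [h8] at h7
    simpa [Complex.mul_I_re] using h7
  -- Part (ii) : a.re ≤ -(1+lam^2)/2
  have hare : a.re ≤ -(1 + lam^2)/2 := by
    set w : ℂ → ℂ := fun z => (1 - p z) / (1 + p z) with hwdef
    have hden : ∀ z : ℂ, 0 ≤ (p z).re → (1:ℂ) + p z ≠ 0 := by
      intro z hz h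
      have h2 : ((1:ℂ) + p z).re = 0 := by rw [h]; simp
      simp only [Complex.add_re, Complex.one_re] at h2
      linarith
    have hsub2 : ball (0:ℂ) ρ ⊆ ball (0:ℂ) 1 := ball_subset_ball hρ1.le
    have hwdiff : DifferentiableOn ℂ w (ball 0 ρ) := by
      apply DifferentiableOn.div
      · exact (differentiableOn_const _).sub (hp.mono hsub2)
      · exact (differentiableOn_const _).add (hp.mono hsub2)
      · intro z hz
        exact hden z (hinterior z (mem_ball_zero_iff.mp hz)).le
    have hw0 : w 0 = 0 := by simp [hwdef, hp0]
    have hwmaps : Set.MapsTo w (ball (0:ℂ) ρ) (ball (w 0) 1) := by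
      rw [hw0]
      intro z hz
      have hre := hinterior z (mem_ball_zero_iff.mp hz)
      have hd : (1:ℂ) + p z ≠ 0 := hden z hre.le
      rw [mem_ball_zero_iff]
      show ‖(1 - p z) / (1 + p z)‖ < 1
      rw [norm_div, div_lt_one (norm_pos_iff.mpr hd)]
      have h1 : Complex.normSq (1 - p z) < Complex.normSq (1 + p z) := by
        simp only [Complex.normSq_apply, Complex.add_re, Complex.add_im, Complex.sub_re,
          Complex.sub_im, Complex.one_re, Complex.one_im]
        nlinarith [hre]
      have h2 := Real.sqrt_lt_sqrt (Complex.normSq_nonneg _) h1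
      rwa [Complex.norm_def, Complex.norm_def]
    have hschwarz : ∀ z : ℂ, z ∈ ball (0:ℂ) ρ → ‖w z‖ ≤ ‖z‖ / ρ := by
      intro z hz
      have h3 := Complex.dist_le_div_mul_dist_of_mapsTo_ball hwdiff (hwmaps.mono_right ball_subset_closedBall) hz
      rw [hw0, dist_zero_right, dist_zero_right, one_div, inv_mul_eq_div] at h3
      exact h3
    have hdenz1 : (1:ℂ) + p z1 ≠ 0 := hden z1 (by rw [hre0])
    set dw : ℂ := ((-dp) * (1 + p z1) - (1 - p z1) * dp) / ((1 + p z1))^2 with hdwdef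
    have hwd1 : HasDerivAt w dw z1 := by
      have h1 : HasDerivAt (fun z => (1:ℂ) - p z) (-dp) z1 := by
        exact hpd1.const_sub 1
      have h2 : HasDerivAt (fun z => (1:ℂ) + p z) dp z1 := by
        exact hpd1.const_add 1
      exact h1.div h2 hdenz1
    have hG : HasDerivAt (fun t : ℝ => w ((t:ℂ) * z1)) (dw * z1) 1 := by
      have hi : HasDerivAt (fun ζ : ℂ => ζ * z1) z1 1 := by
        simpa using (hasDerivAt_id (1:ℂ)).mul_const z1
      have hw' : HasDerivAt w dw ((1:ℂ) * z1) := by rwa [one_mul]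
      have h4 : HasDerivAt (fun ζ : ℂ => w (ζ * z1)) (dw * z1) (((1:ℝ):ℂ)) := by
        simpa [Function.comp_def] using hw'.comp 1 hi
      exact h4.comp_ofReal
    have hGre : HasDerivAt (fun t : ℝ => (w ((t:ℂ) * z1)).re) ((dw * z1).re) 1 := by
      simpa [Function.comp_def] using Complex.reCLM.hasFDerivAt.comp_hasDerivAt 1 hG
    have hGim : HasDerivAt (fun t : ℝ => (w ((t:ℂ) * z1)).im) ((dw * z1).im) 1 := by
      simpa [Function.comp_def] using Complex.imCLM.hasFDerivAt.comp_hasDerivAt 1 hG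
    set H : ℝ → ℝ := fun t => (w ((t:ℂ) * z1)).re^2 + (w ((t:ℂ) * z1)).im^2 with hHdef
    set d1 : ℝ := 2 * (w z1).re * (dw * z1).re + 2 * (w z1).im * (dw * z1).im with hd1def
    have hH : HasDerivAt H d1 1 := by
      have h5 := (hGre.pow 2).add (hGim.pow 2)
      refine h5.congr_deriv ?_
      rw [hd1def]
      push_cast
      rw [one_mul]
      ring
    have hHle : ∀ t : ℝ, 0 < t → t < 1 → H t ≤ t^2 := by
      intro t ht0 ht1
      have hmem : ((t:ℂ) * z1) ∈ ball (0:ℂ) ρ := by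
        rw [mem_ball_zero_iff, norm_mul, Complex.norm_real, Real.norm_eq_abs,
          _root_.abs_of_pos ht0]
        nlinarith
      have h6 := hschwarz _ hmem
      rw [norm_mul, Complex.norm_real, Real.norm_eq_abs, _root_.abs_of_pos ht0,
        mul_div_assoc, div_self hρpos.ne', mul_one] at h6
      have h7 : H t = ‖w ((t:ℂ) * z1)‖^2 := by
        rw [Complex.sq_norm, Complex.normSq_apply, hHdef]
        ring
      rw [h7]
      have := norm_nonneg (w ((t:ℂ) * z1))
      nlinarith
    have hH1 : H 1 = 1 := by
      have h8 : H 1 = Complex.normSq (w z1) := by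
        rw [hHdef]
        push_cast
        rw [one_mul, Complex.normSq_apply]
        ring
      rw [h8]
      show Complex.normSq ((1 - p z1) / (1 + p z1)) = 1
      rw [map_div₀, hpz1]
      rw [div_eq_one_iff_eq]
      · simp [Complex.normSq_apply]
      · intro h
        rw [Complex.normSq_eq_zero] at h
        exact hdenz1 (hpz1 ▸ h)
    have hd1ge := aux_slope H d1 hH hHle hH1
    -- key identity
    have hlamC : ((1:ℂ) + (lam:ℂ) * I) ≠ 0 := hpz1 ▸ hdenz1
    have hlamC2 : ((1:ℂ) - (lam:ℂ) * I) ≠ 0 := by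
      intro h
      have h2 : ((1:ℂ) - (lam:ℂ)*I).re = 0 := by rw [h]; simp
      simp at h2
    have hlamsq : ((1:ℂ) + (lam:ℂ)^2) ≠ 0 := by
      have h0 : ((1:ℂ) + (lam:ℂ)^2) = (((1 + lam^2 : ℝ)):ℂ) := by push_cast; ring
      rw [h0]
      exact_mod_cast (by positivity : (1 + lam^2 : ℝ) ≠ 0)
    have hkey : (starRingEnd ℂ) (w z1) * (dw * z1) = (-2) * a / (1 + (lam:ℂ)^2) := by
      have hwz1 : w z1 = (1 - (lam:ℂ)*I) / (1 + (lam:ℂ)*I) := by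
        rw [hwdef]; simp only []; rw [hpz1]
      have hdw2 : dw = ((-dp) * (1 + (lam:ℂ)*I) - (1 - (lam:ℂ)*I) * dp) / ((1 + (lam:ℂ)*I))^2 := by
        rw [hdwdef, hpz1]
      rw [hwz1, hdw2, hadef, ← mul_assoc ((starRingEnd ℂ) _)]
      have e1 : ((1:ℂ) - (lam:ℂ)*I) * ((1:ℂ) + (lam:ℂ)*I) = 1 + (lam:ℂ)^2 := by
        have h : (I:ℂ)*I = -1 := Complex.I_mul_I
        linear_combination (-(lam:ℂ)^2) * h
      have step1 : (starRingEnd ℂ) ((1 - (lam:ℂ)*I) / (1 + (lam:ℂ)*I))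
          = (1 + (lam:ℂ)*I)/(1 - (lam:ℂ)*I) := by
        rw [map_div₀]
        simp only [map_sub, map_add, map_one, map_mul, Complex.conj_I, Complex.conj_ofReal]
        ring_nf
      have step2 : ((-dp) * (1 + (lam:ℂ)*I) - (1 - (lam:ℂ)*I) * dp) / ((1 + (lam:ℂ)*I))^2 * z1
          = (-2*(z1*dp)) / (1 + (lam:ℂ)*I)^2 := by
        rw [div_mul_eq_mul_div]
        congr 1
        ring
      rw [mul_assoc, step1, step2, div_mul_div_comm,
        show ((1:ℂ) - (lam:ℂ)*I) * ((1:ℂ) + (lam:ℂ)*I)^2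
            = ((1:ℂ) - (lam:ℂ)*I) * ((1:ℂ) + (lam:ℂ)*I) * (1 + (lam:ℂ)*I) from by ring,
        e1, show ((1:ℂ) + (lam:ℂ)^2) * ((1:ℂ) + (lam:ℂ)*I)
            = ((1:ℂ) + (lam:ℂ)*I) * ((1:ℂ) + (lam:ℂ)^2) from by ring]
      rw [mul_comm ((1:ℂ) + (lam:ℂ)*I) (-2*(z1*dp)),
        mul_comm ((-2)*(z1*dp)) ((1:ℂ) + (lam:ℂ)*I), mul_div_mul_left _ _ hlamC]
    have hre_key : (w z1).re * (dw * z1).re + (w z1).im * (dw * z1).im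
        = (-2) * a.re / (1 + lam^2) := by
      have h9 : ((starRingEnd ℂ) (w z1) * (dw * z1)).re
          = (w z1).re * (dw * z1).re + (w z1).im * (dw * z1).im := by
        simp [Complex.mul_re]
      rw [← h9, hkey]
      have h10 : ((1:ℂ) + (lam:ℂ)^2) = (((1 + lam^2 : ℝ)):ℂ) := by push_cast; ring
      rw [h10, Complex.div_ofReal_re]
      norm_num
    have hlam2 : (0:ℝ) < 1 + lam^2 := by positivity
    have h11 : d1 = -4*a.re/(1+lam^2) := by
      rw [hd1def, show 2*(w z1).re*(dw*z1).re + 2*(w z1).im*(dw*z1).im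
        = 2*((w z1).re*(dw*z1).re + (w z1).im*(dw*z1).im) from by ring, hre_key]
      ring
    rw [h11, le_div_iff₀ hlam2] at hd1ge
    linarith
  -- Final contradiction
  have hA : (0:ℝ) < α - 1 := by linarith
  have hlamne : ((lam:ℝ):ℂ) ≠ 0 := Complex.ofReal_ne_zero.mpr hlam
  set Y : ℝ := (lam^2 - a.re)/lam with hYdef
  have hval : z1 * deriv p z1 / p z1 + p z1 + (α:ℂ) - 1 = ((α - 1 : ℝ):ℂ) + (Y:ℂ) * I := by
    have ha : z1 * deriv p z1 = ((a.re:ℝ):ℂ) := by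
      rw [← hdpdef, ← hadef]
      exact Complex.ext (by simp) (by simp [haim])
    rw [ha, hpz1, hYdef]
    have hI : (I:ℂ)*I = -1 := Complex.I_mul_I
    push_cast
    field_simp
    linear_combination (a.re:ℂ) * hI
  have hw_val := harg z1 hz1ball
  rw [hval, aux_arg (α-1) Y hA] at hw_val
  have hYlt : |Y|/(α-1) < Real.sqrt 3/(α-1) := by
    by_contra hc
    push_neg at hc
    exact absurd hw_val (not_lt.mpr (Real.arctan_strictMono.monotone hc))
  have hYlt2 : |Y| < Real.sqrt 3 := by
    rwa [div_lt_div_iff_of_pos_right hA] at hYlt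
  have hs3 : Real.sqrt 3 ^ 2 = 3 := Real.sq_sqrt (by norm_num)
  have hs3nn : 0 ≤ Real.sqrt 3 := Real.sqrt_nonneg 3
  have hge : Real.sqrt 3 ≤ |Y| := by
    rcases lt_or_gt_of_ne hlam with hneg | hpos
    · have hY3 : Y ≤ -Real.sqrt 3 := by
        rw [hYdef, div_le_iff_of_neg hneg]
        nlinarith [sq_nonneg (Real.sqrt 3 * lam + 1), hs3, hare]
      exact le_abs.mpr (Or.inr (by linarith))
    · have hY3 : Real.sqrt 3 ≤ Y := by
        rw [hYdef, le_div_iff₀ hpos]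
        nlinarith [sq_nonneg (Real.sqrt 3 * lam - 1), hs3, hare]
      exact le_trans hY3 (le_abs_self Y)
  linarith
end

section
/- Let p be analytic and nonvanishing in the unit disc D with p(0)=1, and let γ ≥ 0. If |arg(z p'(z)/p(z) + 1 + γ)| < arctan(1/(1+γ)) for all z in D, then Re p(z) > 0 for all z in D. -/
open Complex Metric Real Set Filter

lemma normSq_deriv {h : ℝ → ℂ} {h' : ℂ} {t : ℝ} (hh : HasDerivAt h h' t) :
    HasDerivAt (fun s => Complex.normSq (h s)) (2 * (h' * (starRingEnd ℂ) (h t)).re) t := by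
  have hc : HasDerivAt (fun s => (starRingEnd ℂ) (h s)) ((starRingEnd ℂ) h') t := by
    simpa [Function.comp_def] using (Complex.conjCLE.toContinuousLinearMap.hasFDerivAt.comp_hasDerivAt t hh)
  have hm := hh.mul hc
  have hre := Complex.reCLM.hasFDerivAt.comp_hasDerivAt t hm
  have heq : ∀ z : ℂ, Complex.reCLM (z * (starRingEnd ℂ) z) = Complex.normSq z := by
    intro z; simp [Complex.mul_conj]
  convert hre using 1
  · rfl
  · rfl
  · funext s; exact (heq (h s)).symm
  · simp only [map_add]
    have : Complex.reCLM (h t * (starRingEnd ℂ) h') = (h' * (starRingEnd ℂ) (h t)).re := by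
      simp [Complex.mul_re, Complex.conj_re, Complex.conj_im]; ring
    simp only [Complex.reCLM_apply] at this ⊢
    rw [this]; ring

lemma jack {f : ℂ → ℂ} {f' z0 : ℂ} {ρ : ℝ} (hρ : 0 < ρ) (hz0 : ‖z0‖ = ρ)
    (hdiff : DifferentiableOn ℂ f (ball 0 ρ))
    (hderiv : HasDerivAt f f' z0)
    (hf0 : f 0 = 0)
    (hlt : ∀ z : ℂ, ‖z‖ < ρ → ‖f z‖ < 1)
    (hle : ∀ z : ℂ, ‖z‖ = ρ → ‖f z‖ ≤ 1)
    (hb : ‖f z0‖ = 1) :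
    1 ≤ (z0 * f' * (starRingEnd ℂ) (f z0)).re ∧
      (z0 * f' * (starRingEnd ℂ) (f z0)).im = 0 := by
  set w := z0 * f' * (starRingEnd ℂ) (f z0) with hw
  -- Schwarz: |f z| ≤ |z|/ρ on ball
  have hmaps : Set.MapsTo f (ball 0 ρ) (closedBall (f 0) 1) := by
    intro z hz
    rw [hf0, mem_closedBall_zero_iff]
    exact (hlt z (by simpa [mem_ball_zero_iff] using hz)).le
  have schwarz : ∀ t : ℝ, 0 < t → t < 1 → ‖f ((t : ℂ) * z0)‖ ≤ t := by
    intro t ht0 ht1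
    have hmem : (t : ℂ) * z0 ∈ ball (0 : ℂ) ρ := by
      rw [mem_ball_zero_iff, norm_mul, Complex.norm_real, Real.norm_eq_abs,
        abs_of_pos ht0, hz0]
      nlinarith
    have := Complex.dist_le_div_mul_dist_of_mapsTo_ball hdiff hmaps hmem
    rw [hf0, dist_zero_right, dist_zero_right,
      norm_mul, Complex.norm_real, Real.norm_eq_abs, abs_of_pos ht0, hz0] at this
    calc ‖f ((t:ℂ) * z0)‖ ≤ 1 / ρ * (t * ρ) := this
      _ = t := by field_simp
  -- radial curve
  have hz0ne : z0 ≠ 0 := by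
    intro h; rw [h] at hz0; simp at hz0; linarith
  have hc1 : HasDerivAt (fun t : ℝ => (t : ℂ) * z0) z0 1 := by
    simpa using (Complex.ofRealCLM.hasDerivAt (x := (1:ℝ))).mul_const z0
  have hc1' : HasDerivAt (fun t : ℝ => f ((t : ℂ) * z0)) (z0 * f') 1 := by
    have := HasDerivAt.scomp (1 : ℝ) (by simpa using hderiv) hc1
    simpa [Function.comp_def, smul_eq_mul] using this
  have hN : HasDerivAt (fun t : ℝ => Complex.normSq (f ((t : ℂ) * z0)))
      (2 * (z0 * f' * (starRingEnd ℂ) (f z0)).re) 1 := by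
    have := normSq_deriv hc1'
    simpa using this
  -- N t ≤ t², N 1 = 1 gives slope bound: w.re ≥ 1
  have hre : 1 ≤ w.re := by
    have hslope := hasDerivAt_iff_tendsto_slope.1 hN
    have hslope' : Tendsto (slope (fun t : ℝ => Complex.normSq (f ((t : ℂ) * z0))) 1)
        (nhdsWithin 1 (Set.Iio 1)) (nhds (2 * w.re)) :=
      hslope.mono_left (nhdsWithin_mono _ (fun x hx => ne_of_lt hx))
    have hlim2 : Tendsto (fun t : ℝ => 1 + t) (nhdsWithin 1 (Set.Iio 1)) (nhds 2) := by
      have h : Tendsto (fun t : ℝ => 1 + t) (nhds 1) (nhds (1 + 1)) :=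
        ((continuous_const (y := (1:ℝ))).add continuous_id).tendsto (1:ℝ)
      norm_num at h
      exact h.mono_left nhdsWithin_le_nhds
    have hev : ∀ᶠ t in nhdsWithin (1:ℝ) (Set.Iio 1),
        (1 + t) ≤ slope (fun t : ℝ => Complex.normSq (f ((t : ℂ) * z0))) 1 t := by
      filter_upwards [self_mem_nhdsWithin,
        eventually_nhdsWithin_of_eventually_nhds (eventually_gt_nhds (by norm_num : (0:ℝ) < 1))]
        with t ht1 ht0
      have ht1' : t < 1 := ht1
      have hNt : Complex.normSq (f ((t : ℂ) * z0)) ≤ t ^ 2 := by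
        have := schwarz t ht0 ht1'
        rw [← Complex.sq_norm]
        nlinarith [norm_nonneg (f ((t:ℂ) * z0))]
      have hN1' : Complex.normSq (f (((1:ℝ) : ℂ) * z0)) = 1 := by
        rw [show ((1:ℝ):ℂ) * z0 = z0 by simp, ← Complex.sq_norm, hb]; norm_num
      rw [slope_def_field, hN1', le_div_iff_of_neg (by linarith : t - (1:ℝ) < 0)]
      nlinarith
    have := le_of_tendsto_of_tendsto hlim2 hslope' hev
    linarith
  refine ⟨hre, ?_⟩
  -- tangential
  have hcθ : HasDerivAt (fun θ : ℝ => z0 * Complex.exp ((θ : ℂ) * I)) (z0 * I) 0 := by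
    have h1 : HasDerivAt (fun θ : ℝ => (θ : ℂ) * I) I 0 := by
      simpa using (Complex.ofRealCLM.hasDerivAt (x := (0:ℝ))).mul_const I
    have h2 : HasDerivAt (fun θ : ℝ => Complex.exp ((θ : ℂ) * I)) I 0 := by
      have := HasDerivAt.scomp (0 : ℝ) (Complex.hasDerivAt_exp (((0:ℝ) : ℂ) * I)) h1
      simpa [Function.comp_def, smul_eq_mul] using this
    simpa [mul_comm] using h2.const_mul z0
  have hcθ' : HasDerivAt (fun θ : ℝ => f (z0 * Complex.exp ((θ : ℂ) * I))) (z0 * I * f') 0 := by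
    have h0 : z0 * Complex.exp (((0:ℝ) : ℂ) * I) = z0 := by simp
    have := HasDerivAt.scomp (0 : ℝ) (by rw [h0]; exact hderiv) hcθ
    simpa [Function.comp_def, smul_eq_mul] using this
  have hM : HasDerivAt (fun θ : ℝ => Complex.normSq (f (z0 * Complex.exp ((θ : ℂ) * I))))
      (2 * (z0 * I * f' * (starRingEnd ℂ) (f z0)).re) 0 := by
    have := normSq_deriv hcθ'
    simpa [mul_assoc] using this
  have hmax : IsLocalMax (fun θ : ℝ => Complex.normSq (f (z0 * Complex.exp ((θ : ℂ) * I)))) 0 := by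
    apply Filter.Eventually.of_forall
    intro θ
    have habs : ‖z0 * Complex.exp ((θ : ℂ) * I)‖ = ρ := by
      rw [norm_mul, Complex.norm_exp_ofReal_mul_I, hz0, mul_one]
    have h1 : ‖f (z0 * Complex.exp ((θ : ℂ) * I))‖ ≤ 1 := hle _ habs
    have h2 : Complex.normSq (f (z0 * Complex.exp (((0:ℝ) : ℂ) * I))) = 1 := by
      rw [show z0 * Complex.exp (((0:ℝ):ℂ) * I) = z0 by simp, ← Complex.sq_norm, hb]; norm_num
    simp only [h2]
    rw [← Complex.sq_norm]
    nlinarith [norm_nonneg (f (z0 * Complex.exp ((θ:ℂ) * I)))]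
  have hzero := hmax.hasDerivAt_eq_zero hM
  have : (z0 * I * f' * (starRingEnd ℂ) (f z0)).re = -w.im := by
    have : z0 * I * f' * (starRingEnd ℂ) (f z0) = I * w := by rw [hw]; ring
    rw [this]; simp [Complex.mul_re]
  rw [this] at hzero
  linarith

theorem stmt_16 (p : ℂ → ℂ) (γ : ℝ) (hγ : 0 ≤ γ)
    (hp : DifferentiableOn ℂ p (ball 0 1)) (hp0 : p 0 = 1)
    (hpne : ∀ z ∈ ball (0 : ℂ) 1, p z ≠ 0)
    (harg : ∀ z ∈ ball (0 : ℂ) 1,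
      |Complex.arg (z * deriv p z / p z + 1 + (γ : ℂ))| < Real.arctan (1 / (1 + γ))) :
    ∀ z ∈ ball (0 : ℂ) 1, 0 < (p z).re := by
  by_contra hcon
  push_neg at hcon
  obtain ⟨z1, hz1, hz1re⟩ := hcon
  rw [mem_ball_zero_iff] at hz1
  set r : ℝ := ‖z1‖ with hr
  have hr1 : r < 1 := hz1
  have hsub : closedBall (0:ℂ) r ⊆ ball (0:ℂ) 1 := by
    intro z hz
    rw [mem_closedBall_zero_iff] at hz
    rw [mem_ball_zero_iff]
    linarith
  -- the compact set of bad points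
  set S : Set ℂ := closedBall (0:ℂ) r ∩ (fun z => (p z).re) ⁻¹' (Iic 0) with hS
  have hpc : ContinuousOn (fun z => (p z).re) (closedBall (0:ℂ) r) :=
    Complex.continuous_re.comp_continuousOn (hp.continuousOn.mono hsub)
  have hSclosed : IsClosed S := hpc.preimage_isClosed_of_isClosed isClosed_closedBall isClosed_Iic
  have hScpt : IsCompact S := (isCompact_closedBall (0:ℂ) r).of_isClosed_subset hSclosed
    inter_subset_left
  have hSne : S.Nonempty := ⟨z1, by
    constructor
    · rw [mem_closedBall_zero_iff]
    · exact hz1re⟩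
  obtain ⟨z0, hz0S, hmin⟩ := hScpt.exists_isMinOn hSne
    (continuous_norm.continuousOn : ContinuousOn (fun z => ‖z‖) S)
  set ρ : ℝ := ‖z0‖ with hρdef
  have hz0r : ρ ≤ r := by
    have := hz0S.1
    rwa [mem_closedBall_zero_iff] at this
  have hρ1 : ρ < 1 := lt_of_le_of_lt hz0r hr1
  have hz0ball : z0 ∈ ball (0:ℂ) 1 := by
    rw [mem_ball_zero_iff]; exact hρ1
  have hρpos : 0 < ρ := by
    rcases eq_or_lt_of_le (norm_nonneg z0) with h | h
    · exfalso
      have hz00 : z0 = 0 := by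
        have := h.symm
        rwa [norm_eq_zero] at this
      have := hz0S.2
      simp only [Set.mem_preimage, Set.mem_Iic, hz00, hp0] at this
      norm_num at this
    · exact h
  -- P1 : strict positivity inside radius ρ
  have P1 : ∀ z : ℂ, ‖z‖ < ρ → 0 < (p z).re := by
    intro z hz
    by_contra h
    push_neg at h
    have hzS : z ∈ S := ⟨by rw [mem_closedBall_zero_iff]; linarith, h⟩
    have := hmin hzS
    simp only [← hρdef] at this
    exact absurd this (not_le.2 hz)
  -- P2 : nonnegativity on the closed ball of radius ρ
  have P2 : ∀ z : ℂ, ‖z‖ ≤ ρ → 0 ≤ (p z).re := by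
    intro z hz
    rcases eq_or_ne z 0 with rfl | hzne
    · rw [hp0]; norm_num
    have habs : 0 < ‖z‖ := by
      rwa [norm_pos_iff]
    have hzball : z ∈ ball (0:ℂ) 1 := by
      rw [mem_ball_zero_iff]; linarith
    have hpz : ContinuousAt p z :=
      (hp.differentiableAt (isOpen_ball.mem_nhds hzball)).continuousAt
    have h1z : ((1:ℝ):ℂ) * z = z := by simp
    have hg : Tendsto (fun t : ℝ => (p (((t:ℝ):ℂ) * z)).re) (nhdsWithin (1:ℝ) (Iio (1:ℝ)))
        (nhds ((p z).re)) := by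
      have hinner : Tendsto (fun t : ℝ => ((t:ℝ):ℂ) * z) (nhdsWithin (1:ℝ) (Iio (1:ℝ)))
          (nhds z) := by
        have hmul : Tendsto (fun t : ℝ => ((t:ℝ):ℂ) * z) (nhds (1:ℝ)) (nhds (((1:ℝ):ℂ) * z)) :=
          ((Complex.continuous_ofReal.mul continuous_const).tendsto (1:ℝ))
        rw [h1z] at hmul
        exact hmul.mono_left nhdsWithin_le_nhds
      exact (Complex.continuous_re.tendsto (p z)).comp (hpz.tendsto.comp hinner)
    have hev : ∀ᶠ t in nhdsWithin (1:ℝ) (Iio (1:ℝ)), 0 ≤ (p (((t:ℝ):ℂ) * z)).re := by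
      filter_upwards [self_mem_nhdsWithin,
        eventually_nhdsWithin_of_eventually_nhds (eventually_gt_nhds (by norm_num : (0:ℝ) < 1))]
        with t ht1 ht0
      refine (P1 _ ?_).le
      rw [norm_mul, Complex.norm_real, Real.norm_eq_abs, abs_of_pos ht0]
      calc t * ‖z‖ < 1 * ‖z‖ := by
            exact mul_lt_mul_of_pos_right ht1 habs
        _ = ‖z‖ := one_mul _
        _ ≤ ρ := hz
    exact ge_of_tendsto hg hev
  -- Re p z0 = 0
  have hre0 : (p z0).re = 0 := le_antisymm hz0S.2 (P2 z0 le_rfl)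
  set a : ℝ := (p z0).im with ha
  have hane : a ≠ 0 := by
    intro h
    apply hpne z0 hz0ball
    exact Complex.ext hre0 h
  have hpz0 : p z0 = (a : ℂ) * I := by
    apply Complex.ext <;> simp [hre0, ← ha]
  -- setup φ
  set φ : ℂ → ℂ := fun z => (1 - p z) / (1 + p z) with hφ
  have hne1 : ∀ z : ℂ, 0 ≤ (p z).re → 1 + p z ≠ 0 := by
    intro z hz h
    have : (1 + p z).re = 0 := by rw [h]; simp
    simp only [Complex.add_re, Complex.one_re] at this
    linarith
  have hballsub : ball (0:ℂ) ρ ⊆ ball (0:ℂ) 1 := by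
    intro z hz
    rw [mem_ball_zero_iff] at hz ⊢
    linarith
  have hφdiff : DifferentiableOn ℂ φ (ball 0 ρ) := by
    apply DifferentiableOn.div
    · exact (differentiableOn_const 1).sub (hp.mono hballsub)
    · exact (differentiableOn_const 1).add (hp.mono hballsub)
    · intro z hz
      rw [mem_ball_zero_iff] at hz
      exact hne1 z (P1 z hz).le
  have absφlt : ∀ z : ℂ, ‖z‖ < ρ → ‖φ z‖ < 1 := by
    intro z hz
    have hre := P1 z hz
    have hd := hne1 z hre.le
    have hnum : Complex.normSq (1 - p z) < Complex.normSq (1 + p z) := by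
      simp only [Complex.normSq_apply, Complex.sub_re, Complex.sub_im, Complex.add_re,
        Complex.add_im, Complex.one_re, Complex.one_im]
      nlinarith
    have habs : ‖1 - p z‖ < ‖1 + p z‖ := by
      rw [Complex.norm_def, Complex.norm_def]
      exact Real.sqrt_lt_sqrt (Complex.normSq_nonneg _) hnum
    rw [hφ]
    simp only [norm_div]
    rw [div_lt_one (norm_pos_iff.mpr hd)]
    exact habs
  have absφle : ∀ z : ℂ, ‖z‖ = ρ → ‖φ z‖ ≤ 1 := by
    intro z hz
    have hre := P2 z hz.le
    have hd := hne1 z hre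
    have hnum : Complex.normSq (1 - p z) ≤ Complex.normSq (1 + p z) := by
      simp only [Complex.normSq_apply, Complex.sub_re, Complex.sub_im, Complex.add_re,
        Complex.add_im, Complex.one_re, Complex.one_im]
      nlinarith
    have habs : ‖1 - p z‖ ≤ ‖1 + p z‖ := by
      rw [Complex.norm_def, Complex.norm_def]
      exact Real.sqrt_le_sqrt hnum
    rw [hφ]
    simp only [norm_div]
    rw [div_le_one (norm_pos_iff.mpr hd)]
    exact habs
  have hφ0 : φ 0 = 0 := by rw [hφ]; simp [hp0]
  have e1 : Complex.normSq (1 - (a:ℂ)*I) = 1 + a^2 := by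
    simp [Complex.normSq_apply]; ring
  have e2 : Complex.normSq (1 + (a:ℂ)*I) = 1 + a^2 := by
    simp [Complex.normSq_apply]; ring
  have habsb : ‖φ z0‖ = 1 := by
    rw [hφ]
    simp only [hpz0]
    rw [norm_div, Complex.norm_def, Complex.norm_def, e1, e2, div_self]
    exact ne_of_gt (Real.sqrt_pos.2 (by positivity))
  -- derivative of φ at z0
  have hpz0' : HasDerivAt p (deriv p z0) z0 :=
    (hp.differentiableAt (isOpen_ball.mem_nhds hz0ball)).hasDerivAt
  have hd0 : 1 + p z0 ≠ 0 := hne1 z0 (le_of_eq hre0.symm)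
  have hφderiv : HasDerivAt φ
      (((0 - deriv p z0) * (1 + p z0) - (1 - p z0) * (0 + deriv p z0)) / (1 + p z0) ^ 2) z0 := by
    have h1 : HasDerivAt (fun z => 1 - p z) (0 - deriv p z0) z0 :=
      (hasDerivAt_const z0 (1:ℂ)).sub hpz0'
    have h2 : HasDerivAt (fun z => 1 + p z) (0 + deriv p z0) z0 :=
      (hasDerivAt_const z0 (1:ℂ)).add hpz0'
    exact h1.div h2 hd0
  obtain ⟨hre1, him0⟩ := jack hρpos hρdef.symm hφdiff hφderiv hφ0 absφlt absφle habsb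
  set D : ℂ := ((0 - deriv p z0) * (1 + p z0) - (1 - p z0) * (0 + deriv p z0)) / (1 + p z0) ^ 2
    with hD
  set m : ℂ := z0 * D * (starRingEnd ℂ) (φ z0) with hm
  set μ : ℝ := m.re with hμdef
  have hμ1 : 1 ≤ μ := hre1
  have hmμ : m = (μ : ℂ) := Complex.ext (by simp [hμdef]) (by simp [him0])
  have haC : ((a:ℂ)) ≠ 0 := Complex.ofReal_ne_zero.2 hane
  have hA1 : (1 : ℂ) + (a:ℂ) * I ≠ 0 := by
    intro h
    have := congrArg Complex.re h
    simp at this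
  have hA2 : (1 : ℂ) - (a:ℂ) * I ≠ 0 := by
    intro h
    have := congrArg Complex.re h
    simp at this
  have hconj : (starRingEnd ℂ) (φ z0) = (1 + (a:ℂ)*I) / (1 - (a:ℂ)*I) := by
    rw [hφ]
    simp only [hpz0]
    rw [map_div₀, map_sub, map_add, map_one, map_mul, Complex.conj_ofReal, Complex.conj_I]
    ring_nf
  have hkey : m * (1 + (a:ℂ)^2) = -2 * (z0 * deriv p z0) := by
    rw [hm, hconj, hD]
    simp only [hpz0]
    field_simp
    ring_nf
    linear_combination (-2*z0*deriv p z0*((a:ℝ):ℂ)^2) * Complex.I_sq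
  have hz0p : z0 * deriv p z0 = -((μ:ℂ) * (1 + (a:ℂ)^2)) / 2 := by
    rw [hmμ] at hkey
    linear_combination (1/2 : ℂ) * hkey
  set β : ℝ := (1+a^2) * μ / (2*a) with hβ
  have hq : z0 * deriv p z0 / p z0 = (β : ℂ) * I := by
    rw [hpz0, div_eq_iff (mul_ne_zero haC I_ne_zero), hz0p, hβ]
    push_cast
    field_simp
    ring_nf
    linear_combination (-((μ:ℝ):ℂ)*((a:ℝ):ℂ)^2 - ((μ:ℝ):ℂ)) * Complex.I_sq
  set w : ℂ := z0 * deriv p z0 / p z0 + 1 + (γ:ℂ) with hw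
  have hwre : w.re = 1 + γ := by
    rw [hw, hq]
    simp
  have hwim : w.im = β := by
    rw [hw, hq]
    simp
  have h1γ : (0:ℝ) < 1 + γ := by linarith
  have him1 : 1 ≤ |w.im| := by
    rw [hwim, hβ, abs_div, _root_.abs_of_nonneg (by nlinarith : (0:ℝ) ≤ (1+a^2) * μ)]
    rw [le_div_iff₀ (by positivity : (0:ℝ) < |2*a|)]
    rw [abs_mul, _root_.abs_two]
    nlinarith [_root_.sq_abs a, abs_pos.2 hane, sq_nonneg (|a| - 1)]
  -- final contradiction via tan monotonicity
  have hαlt := harg z0 hz0ball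
  rw [← hw] at hαlt
  have harctanlt : Real.arctan (1/(1+γ)) < π/2 := (Real.arctan_mem_Ioo _).2
  have hmem1 : |w.arg| ∈ Ioo (-(π/2)) (π/2) := by
    constructor
    · have := Real.pi_pos
      have := abs_nonneg w.arg
      linarith
    · linarith
  have hmem2 : Real.arctan (1/(1+γ)) ∈ Ioo (-(π/2)) (π/2) := Real.arctan_mem_Ioo _
  have htanlt := Real.strictMonoOn_tan hmem1 hmem2 hαlt
  rw [Real.tan_arctan] at htanlt
  have htanabs : Real.tan |w.arg| = |w.im| / (1+γ) := by
    rcases abs_cases w.arg with ⟨h1, h2⟩ | ⟨h1, h2⟩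
    · rw [h1, Complex.tan_arg, hwre]
      congr 1
      exact (_root_.abs_of_nonneg (Complex.arg_nonneg_iff.1 h2)).symm
    · rw [h1, Real.tan_neg, Complex.tan_arg, hwre]
      have himneg : w.im < 0 := Complex.arg_neg_iff.1 h2
      rw [_root_.abs_of_neg himneg]
      ring
  rw [htanabs] at htanlt
  have hfin : 1/(1+γ) ≤ |w.im| / (1+γ) := (div_le_div_iff_of_pos_right h1γ).2 him1
  linarith
end

section
/- Let p be analytic and nonvanishing in the unit disc D with p(0)=1, and let β < 1. If |arg((5−2β)/2 − z p'(z)/p(z) − p(z))| < arctan(2√3/(5−2β)) for all z in D, then Re p(z) > 0 for all z in D. -/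
open Complex Metric Real

section StmtAux
open Set Filter

private lemma stmt17_oneSided {f : ℝ → ℝ} {d : ℝ} (hf : HasDerivAt f d 0)
    (h : ∀ᶠ s in nhdsWithin 0 (Ioi (0:ℝ)), f 0 ≤ f s) : 0 ≤ d := by
  have hf' := (hf.hasDerivWithinAt (s := Ioi 0))
  rw [hasDerivWithinAt_iff_tendsto_slope] at hf'
  have hIoi : Ioi (0:ℝ) \ {0} = Ioi 0 := by
    ext x; simp +contextual [lt_iff_le_and_ne, ne_comm]
  rw [hIoi] at hf'
  refine ge_of_tendsto hf' ?_
  filter_upwards [h, self_mem_nhdsWithin] with s hs hs'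
  rw [slope_def_field]
  have : (0:ℝ) < s := hs'
  rw [div_nonneg_iff]
  left
  constructor <;> [linarith; linarith]


private lemma stmt17_exists_z0 (p : ℂ → ℂ) (hp : DifferentiableOn ℂ p (ball 0 1)) (hp0 : p 0 = 1)
    (z1 : ℂ) (hz1 : z1 ∈ ball (0:ℂ) 1) (hre1 : (p z1).re ≤ 0) :
    ∃ z0 : ℂ, z0 ∈ ball (0:ℂ) 1 ∧ 0 < ‖z0‖ ∧ (p z0).re = 0 ∧
      ∀ z ∈ ball (0:ℂ) ‖z0‖, 0 < (p z).re := by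
  set r1 := ‖z1‖ with hr1def
  have hr1 : r1 < 1 := by simpa [mem_ball, dist_eq_norm] using hz1
  have hsub : closedBall (0:ℂ) r1 ⊆ ball (0:ℂ) 1 := by
    intro z hz
    simp only [mem_closedBall, mem_ball, dist_zero_right] at *
    linarith
  have hpc : ContinuousOn (fun z => (p z).re) (closedBall (0:ℂ) r1) :=
    (Complex.continuous_re.comp_continuousOn (hp.continuousOn.mono hsub))
  set C := closedBall (0:ℂ) r1 ∩ (fun z => (p z).re) ⁻¹' Iic 0 with hCdef
  have hCclosed : IsClosed C := hpc.preimage_isClosed_of_isClosed isClosed_closedBall isClosed_Iic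
  have hCcompact : IsCompact C :=
    (isCompact_closedBall _ _).of_isClosed_subset hCclosed inter_subset_left
  have hCne : C.Nonempty := ⟨z1, by simp [mem_closedBall, dist_zero_right, r1], by simpa using hre1⟩
  obtain ⟨w, hwC, hwmin⟩ := hCcompact.exists_isMinOn hCne (continuous_norm.continuousOn)
  have hw0 : w ≠ 0 := by
    rintro rfl
    have : (p 0).re ≤ 0 := hwC.2
    rw [hp0] at this; norm_num at this
  have hwr1 : ‖w‖ ≤ r1 := by simpa [mem_closedBall, dist_zero_right] using hwC.1
  have hpos : ∀ z ∈ ball (0:ℂ) ‖w‖, 0 < (p z).re := by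
    intro z hz
    by_contra hc
    push_neg at hc
    have hz' : ‖z‖ < ‖w‖ := by simpa [mem_ball, dist_zero_right] using hz
    have hzC : z ∈ C := by
      refine ⟨?_, by simpa using hc⟩
      simp only [mem_closedBall, dist_zero_right]; linarith
    have h2 : ‖w‖ ≤ ‖z‖ := hwmin hzC
    linarith
  have hseg : ∀ t : ℝ, t ∈ Icc (0:ℝ) 1 → (t • w) ∈ closedBall (0:ℂ) r1 := by
    intro t ht
    simp only [mem_closedBall, dist_zero_right, norm_smul, Real.norm_eq_abs,
      _root_.abs_of_nonneg ht.1]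
    nlinarith [ht.1, ht.2, norm_nonneg w]
  have hcont : ContinuousOn (fun t : ℝ => (p (t • w)).re) (Icc 0 1) := by
    apply hpc.comp (by fun_prop) hseg
  have hivt := intermediate_value_Icc' (by norm_num : (0:ℝ) ≤ 1) hcont
  have h0mem : (0:ℝ) ∈ Icc (p ((1:ℝ) • w)).re (p ((0:ℝ) • w)).re := by
    constructor
    · simpa using hwC.2
    · simp [hp0]
  obtain ⟨t, ht, hteq⟩ := hivt h0mem
  have hteq' : (p (t • w)).re = 0 := hteq
  refine ⟨t • w, ?_, ?_, hteq', ?_⟩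
  · exact hsub (hseg t ht)
  · rw [norm_pos_iff]
    rintro h
    rw [h, hp0] at hteq'; norm_num at hteq'
  · intro z hz
    apply hpos
    have h1 : ‖t • w‖ ≤ ‖w‖ := by
      simp only [norm_smul, Real.norm_eq_abs, _root_.abs_of_nonneg ht.1]
      nlinarith [ht.2, norm_nonneg w]
    simp only [mem_ball, dist_zero_right] at *
    linarith

private lemma stmt17_jack (p : ℂ → ℂ) (hp : DifferentiableOn ℂ p (ball 0 1)) (hp0 : p 0 = 1)
    (z0 : ℂ) (hz0 : z0 ∈ ball (0:ℂ) 1) (hz0ne : z0 ≠ 0)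
    (hre0 : (p z0).re = 0) (hpz0 : p z0 ≠ 0)
    (hpos : ∀ z ∈ ball (0:ℂ) ‖z0‖, 0 < (p z).re) :
    ∃ κ : ℝ, 1 ≤ κ ∧
      z0 * deriv p z0 = ((-κ * (1 + (p z0).im ^ 2) / 2 : ℝ) : ℂ) := by
  set r0 := ‖z0‖ with hr0def
  have hr0pos : 0 < r0 := norm_pos_iff.2 hz0ne
  have hr0lt : r0 < 1 := by simpa [mem_ball, dist_zero_right] using hz0
  set a := (p z0).im with hadef
  have hP0 : p z0 = (a:ℂ) * I := by
    apply Complex.ext <;> simp [hre0, hadef]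
  have hane : a ≠ 0 := by
    intro h; apply hpz0; rw [hP0, h]; simp
  have hsub : ball (0:ℂ) r0 ⊆ ball (0:ℂ) 1 := ball_subset_ball hr0lt.le
  have hden : ∀ z ∈ ball (0:ℂ) r0, (1 : ℂ) + p z ≠ 0 := by
    intro z hz h
    have h1 : (1 + p z).re = 0 := by rw [h]; simp
    have := hpos z hz
    simp only [add_re, one_re] at h1
    linarith
  set q : ℂ → ℂ := fun z => (1 - p z) / (1 + p z) with hqdef
  have hq0 : q 0 = 0 := by simp [hqdef, hp0]
  have hqd : DifferentiableOn ℂ q (ball 0 r0) := by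
    apply DifferentiableOn.div
    · exact (differentiableOn_const _).sub (hp.mono hsub)
    · exact (differentiableOn_const _).add (hp.mono hsub)
    · exact hden
  have hmaps : MapsTo q (ball (0:ℂ) r0) (ball (q 0) 1) := by
    intro z hz
    rw [hq0]
    simp only [mem_ball, dist_zero_right, hqdef]
    have hdenpos : (0:ℝ) < ‖(1:ℂ) + p z‖ := norm_pos_iff.2 (hden z hz)
    rw [norm_div, div_lt_one hdenpos]
    have hre := hpos z hz
    have h1 : ‖(1:ℂ) - p z‖ ^ 2 < ‖(1:ℂ) + p z‖ ^ 2 := by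
      rw [Complex.sq_norm, Complex.sq_norm]
      simp only [Complex.normSq_apply, sub_re, sub_im, add_re, add_im, one_re, one_im]
      nlinarith
    nlinarith [norm_nonneg ((1:ℂ) - p z), norm_nonneg ((1:ℂ) + p z)]
  have hschwarz : ∀ z ∈ ball (0:ℂ) r0, ‖q z‖ ≤ (1 / r0) * ‖z‖ := by
    intro z hz
    have := Complex.dist_le_div_mul_dist_of_mapsTo_ball hqd (hmaps.mono_right ball_subset_closedBall) hz
    simpa [hq0, dist_zero_right] using this
  -- derivative of p and q at z0
  have hpd : HasDerivAt p (deriv p z0) z0 :=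
    (hp.differentiableAt (isOpen_ball.mem_nhds hz0)).hasDerivAt
  set D := deriv p z0 with hDdef
  have hP0ne : (1:ℂ) + p z0 ≠ 0 := by
    rw [hP0]; intro h
    have : ((1:ℂ) + a*I).re = 0 := by rw [h]; simp
    simp at this
  set E := ((-D) * (1 + p z0) - (1 - p z0) * D) / (1 + p z0) ^ 2 with hEdef
  have hqd0 : HasDerivAt q E z0 := by
    have h1 : HasDerivAt (fun z => (1:ℂ) - p z) (-D) z0 := hpd.const_sub 1
    have h2 : HasDerivAt (fun z => (1:ℂ) + p z) D z0 := hpd.const_add 1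
    exact h1.div h2 hP0ne
  set q0 := q z0 with hq0def
  have hq0eq : q0 = (1 - (a:ℂ)*I) / (1 + (a:ℂ)*I) := by rw [hq0def, hqdef]; simp [hP0]
  have h1m : (1:ℂ) - (a:ℂ)*I ≠ 0 := by
    intro h
    have : ((1:ℂ) - a*I).re = 0 := by rw [h]; simp
    simp at this
  have h1p : (1:ℂ) + (a:ℂ)*I ≠ 0 := by
    intro h
    have : ((1:ℂ) + a*I).re = 0 := by rw [h]; simp
    simp at this
  have hq0normsq : q0 * (starRingEnd ℂ) q0 = 1 := by
    rw [hq0eq]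
    rw [map_div₀]
    simp only [map_sub, map_add, map_one, map_mul, Complex.conj_I, Complex.conj_ofReal]
    rw [div_mul_div_comm, div_eq_one_iff_eq (mul_ne_zero h1p (by rw [mul_neg]; exact sub_ne_zero.1 (by simpa [sub_eq_add_neg] using h1m)))]
    ring
  set G : ℂ → ℂ := fun z => 1 - (starRingEnd ℂ) q0 * z0 * (q z / z) with hGdef
  set g' := -((starRingEnd ℂ) q0 * z0 * ((E * z0 - q0 * 1) / z0 ^ 2)) with hg'def
  have hGd : HasDerivAt G g' z0 := by
    have h1 : HasDerivAt (fun z : ℂ => q z / z) ((E * z0 - q0 * 1) / z0 ^ 2) z0 := by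
      exact hqd0.div (hasDerivAt_id' z0) hz0ne
    have h2 := (h1.const_mul ((starRingEnd ℂ) q0 * z0)).const_sub 1
    exact h2
  -- nonnegativity of Re G on punctured ball
  have hGnn : ∀ z, z ∈ ball (0:ℂ) r0 → z ≠ 0 → 0 ≤ (G z).re := by
    intro z hz hzne
    have hnorm : ‖(starRingEnd ℂ) q0 * z0 * (q z / z)‖ ≤ 1 := by
      have hq0n : ‖q0‖ = 1 := by
        have := congrArg (fun x : ℂ => ‖x‖) hq0normsq
        simp only [norm_mul, RCLike.norm_conj, norm_one] at this
        have habs : ‖q0‖ = 1 := by nlinarith [norm_nonneg q0]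
        simpa using habs
      rw [norm_mul, norm_mul, norm_div, RCLike.norm_conj, hq0n, one_mul]
      have hs := hschwarz z hz
      have hzpos : (0:ℝ) < ‖z‖ := norm_pos_iff.2 hzne
      have hr : ‖q z‖ / ‖z‖ ≤ 1 / r0 := by
        rw [div_le_div_iff₀ hzpos hr0pos]
        calc ‖q z‖ * r0 ≤ (1 / r0 * ‖z‖) * r0 := by nlinarith
          _ = 1 * ‖z‖ := by field_simp
      calc ‖z0‖ * (‖q z‖ / ‖z‖) ≤ r0 * (1 / r0) := by
            apply mul_le_mul_of_nonneg_left hr hr0pos.le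
        _ = 1 := by field_simp
    have hre : ((starRingEnd ℂ) q0 * z0 * (q z / z)).re ≤ 1 :=
      le_trans (Complex.re_le_norm _) hnorm
    simp only [hGdef, sub_re, one_re]
    linarith
  -- tangential curve
  set γ : ℝ → ℂ := fun u => z0 * Complex.exp (↑u * I) * (1 - (↑u:ℂ)^2) with hγdef
  have hγd : HasDerivAt γ (z0 * I) 0 := by
    have hf : HasDerivAt (fun w : ℂ => z0 * Complex.exp (w * I) * (1 - w^2)) (z0 * I) 0 := by
      have h1 : HasDerivAt (fun w : ℂ => w * I) I 0 := by
        simpa using (hasDerivAt_id (0:ℂ)).mul_const I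
      have h2 : HasDerivAt (fun w : ℂ => Complex.exp (w * I)) (Complex.exp ((0:ℂ) * I) * I) 0 :=
        h1.cexp
      have h3 := h2.const_mul z0
      have h4 : HasDerivAt (fun w : ℂ => (1:ℂ) - w^2) (-(2 * 0^(2-1) : ℂ)) 0 :=
        (hasDerivAt_pow 2 (0:ℂ)).const_sub 1
      have h5 : HasDerivAt (fun w : ℂ => z0 * Complex.exp (w * I) * (1 - w^2)) _ 0 := h3.mul h4
      convert h5 using 1
      simp
    have := hf.comp_ofReal (z := 0)
    simpa using this
  have hγ0 : γ 0 = z0 := by simp [hγdef]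
  set φ : ℝ → ℝ := fun u => (G (γ u)).re with hφdef
  have hGγ : HasDerivAt (G ∘ γ) ((z0 * I) • g') 0 := by
    apply HasDerivAt.scomp
    · rw [hγ0]; exact hGd
    · exact hγd
  have hφd : HasDerivAt φ ((g' * (z0 * I)).re) 0 := by
    have := Complex.reCLM.hasFDerivAt.comp_hasDerivAt 0 hGγ
    simpa [mul_comm, hφdef, Function.comp_def] using this
  have hGz0 : G z0 = 0 := by
    show (1:ℂ) - (starRingEnd ℂ) q0 * z0 * (q z0 / z0) = 0
    rw [← hq0def, mul_assoc, show z0 * (q0 / z0) = q0 by field_simp]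
    linear_combination -hq0normsq
  have hφ0 : φ 0 = 0 := by
    simp only [hφdef, hγ0, hGz0, Complex.zero_re]
  have hφmin : IsLocalMin φ 0 := by
    rw [IsLocalMin, IsMinFilter]
    have hball : Ioo (-1:ℝ) 1 ∈ nhds (0:ℝ) := Ioo_mem_nhds (by norm_num) (by norm_num)
    filter_upwards [hball] with u hu
    rcases eq_or_ne u 0 with rfl | hu0
    · exact le_rfl
    · rw [hφ0]
      have hu2 : u^2 < 1 := by nlinarith [hu.1, hu.2]
      have hu2pos : 0 < u^2 := by positivity
      have hnorm : ‖γ u‖ = r0 * (1 - u^2) := by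
        rw [hγdef]
        simp only [norm_mul, Complex.norm_exp_ofReal_mul_I]
        have : ((1:ℂ) - (↑u:ℂ)^2) = (((1 - u^2 : ℝ)):ℂ) := by push_cast; ring
        rw [this, Complex.norm_real, Real.norm_eq_abs, _root_.abs_of_nonneg (by nlinarith), hr0def]
        ring
      have hmem : γ u ∈ ball (0:ℂ) r0 := by
        rw [mem_ball, dist_zero_right, hnorm]
        nlinarith
      have hne : γ u ≠ 0 := by
        rw [← norm_pos_iff, hnorm]
        nlinarith
      exact hGnn (γ u) hmem hne
  have hφzero : (g' * (z0 * I)).re = 0 := hφmin.hasDerivAt_eq_zero hφd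
  -- radial curve
  set δ : ℝ → ℂ := fun s => z0 * (1 - (↑s:ℂ)) with hδdef
  have hδd : HasDerivAt δ (-z0) 0 := by
    have hf : HasDerivAt (fun w : ℂ => z0 * (1 - w)) (z0 * (-1)) 0 :=
      ((hasDerivAt_id (0:ℂ)).const_sub 1).const_mul z0
    have := hf.comp_ofReal (z := 0)
    convert this using 1
    ring
  have hδ0 : δ 0 = z0 := by simp [hδdef]
  set ψ : ℝ → ℝ := fun s => (G (δ s)).re with hψdef
  have hGδ : HasDerivAt (G ∘ δ) ((-z0) • g') 0 := by
    apply HasDerivAt.scomp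
    · rw [hδ0]; exact hGd
    · exact hδd
  have hψd : HasDerivAt ψ ((g' * (-z0)).re) 0 := by
    have := Complex.reCLM.hasFDerivAt.comp_hasDerivAt 0 hGδ
    simpa [mul_comm, hψdef, Function.comp_def] using this
  have hψge : ∀ᶠ s in nhdsWithin 0 (Ioi (0:ℝ)), ψ 0 ≤ ψ s := by
    have hIoo : Ioo (0:ℝ) 1 ∈ nhdsWithin 0 (Ioi (0:ℝ)) :=
      Ioo_mem_nhdsGT_of_mem (by norm_num : (0:ℝ) ∈ Ico (0:ℝ) 1)
    filter_upwards [hIoo] with s hs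
    have hψ0 : ψ 0 = 0 := by simp only [hψdef, hδ0, hGz0, Complex.zero_re]
    rw [hψ0]
    have hnorm : ‖δ s‖ = r0 * (1 - s) := by
      rw [hδdef]
      simp only [norm_mul]
      have : ((1:ℂ) - (↑s:ℂ)) = (((1 - s : ℝ)):ℂ) := by push_cast; ring
      rw [this, Complex.norm_real, Real.norm_eq_abs,
        _root_.abs_of_nonneg (by nlinarith [hs.2]), hr0def]
    have hmem : δ s ∈ ball (0:ℂ) r0 := by
      rw [mem_ball, dist_zero_right, hnorm]
      nlinarith [hs.1, hs.2]
    have hne : δ s ≠ 0 := by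
      rw [← norm_pos_iff, hnorm]
      nlinarith [hs.1, hs.2]
    exact hGnn (δ s) hmem hne
  have hψnn : 0 ≤ (g' * (-z0)).re := stmt17_oneSided hψd hψge
  -- algebra
  set W := z0 * g' with hWdef
  have hWim : W.im = 0 := by
    have h1 : (g' * (z0 * I)).re = -W.im := by
      rw [hWdef]
      simp [Complex.mul_re, Complex.mul_im, Complex.I_re, Complex.I_im]
      ring
    rw [hφzero] at h1
    linarith
  have hWre : W.re ≤ 0 := by
    have h1 : (g' * (-z0)).re = -W.re := by
      rw [hWdef]
      simp [Complex.mul_re, Complex.mul_im]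
      ring
    rw [h1] at hψnn
    linarith
  set κ : ℝ := 1 - W.re with hκdef
  have hκ1 : 1 ≤ κ := by rw [hκdef]; linarith
  have hWeq : W = ((W.re : ℝ) : ℂ) := by
    apply Complex.ext <;> simp [hWim]
  have h2 : W = 1 - (starRingEnd ℂ) q0 * (z0 * E) := by
    rw [hWdef, hg'def]
    have hz2 : z0 ^ 2 ≠ 0 := pow_ne_zero 2 hz0ne
    rw [show z0 * -((starRingEnd ℂ) q0 * z0 * ((E * z0 - q0 * 1) / z0 ^ 2)) = -((starRingEnd ℂ) q0 * (E * z0 - q0 * 1)) * (z0 ^ 2 / z0 ^ 2) by ring, div_self hz2]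
    linear_combination hq0normsq
  have hkey : (starRingEnd ℂ) q0 * (z0 * E) = ((κ:ℝ) : ℂ) := by
    have : (starRingEnd ℂ) q0 * (z0 * E) = 1 - W := by rw [h2]; ring
    rw [this, hWeq, hκdef]
    push_cast
    ring
  have hconj : (starRingEnd ℂ) q0 = (1 + (a:ℂ)*I)/(1 - (a:ℂ)*I) := by
    rw [hq0eq, map_div₀]
    simp [map_sub, map_add, map_mul, Complex.conj_I, Complex.conj_ofReal]
    ring_nf
  have hE2 : z0 * E = -2 * (z0 * D) / (1 + (a:ℂ)*I)^2 := by
    rw [hEdef, hP0]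
    field_simp
    ring
  rw [hconj, hE2] at hkey
  refine ⟨κ, hκ1, ?_⟩
  have hsq : ((1:ℂ) - a*I) * (1 + a*I) = ((1 + a^2 : ℝ) : ℂ) := by
    push_cast
    linear_combination (-(a:ℂ)^2 : ℂ) * Complex.I_sq
  field_simp at hkey
  have haux : (1 + (a:ℂ)*I) * (-(2*(z0*D))) = (1 + (a:ℂ)*I) * (((κ:ℝ):ℂ) * ((1+a^2:ℝ):ℂ)) := by
    linear_combination (1 + (a:ℂ)*I) * hkey + ((κ:ℝ):ℂ) * (1 + (a:ℂ)*I) * hsq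
  have haux2 := mul_left_cancel₀ h1p haux
  push_cast at haux2 ⊢
  linear_combination (-(1:ℂ)/2) * haux2

private lemma stmt17_final_arith (β a σ : ℝ) (hβ : β < 1) (hane : a ≠ 0)
    (hσ : σ ≤ -(1 + a^2)/2)
    (w : ℂ) (hwre : w.re = (5 - 2*β)/2) (hwim : w.im = σ/a - a) :
    Real.arctan (2 * Real.sqrt 3 / (5 - 2*β)) ≤ |Complex.arg w| := by
  have hc : (0:ℝ) < (5 - 2*β)/2 := by linarith
  have hwrepos : 0 < w.re := by rw [hwre]; exact hc
  have habslt : |Complex.arg w| < π/2 := Complex.abs_arg_lt_pi_div_two_iff.2 (Or.inl hwrepos)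
  have harg : Complex.arg w = Real.arctan (w.im / w.re) := by
    have h2 := abs_lt.1 habslt
    rw [← Complex.tan_arg, Real.arctan_tan h2.1 h2.2]
  have hs3 : Real.sqrt 3 * |a| ≤ a^2 - σ := by
    nlinarith [sq_nonneg (Real.sqrt 3 * |a| - 1), Real.sq_sqrt (by norm_num : (0:ℝ) ≤ 3),
      _root_.sq_abs a, sq_nonneg a]
  have hapos : 0 < |a| := abs_pos.2 hane
  have h4 : Real.sqrt 3 ≤ |σ/a - a| := by
    have : |σ/a - a| = |σ - a^2| / |a| := by
      rw [← abs_div]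
      congr 1
      field_simp
    rw [this, le_div_iff₀ hapos]
    have : |σ - a^2| = a^2 - σ := by
      rw [abs_of_nonpos (by nlinarith)]
      ring
    rw [this]
    exact hs3
  have h5 : 2 * Real.sqrt 3 / (5 - 2*β) ≤ |w.im / w.re| := by
    rw [abs_div, hwre, hwim, _root_.abs_of_pos hc]
    rw [div_le_div_iff₀ (by linarith) hc]
    calc 2 * Real.sqrt 3 * ((5 - 2*β)/2) = Real.sqrt 3 * (5 - 2*β) := by ring
      _ ≤ |σ/a - a| * (5 - 2*β) := by nlinarith [Real.sqrt_nonneg (3:ℝ), abs_nonneg (σ/a - a)]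
  calc Real.arctan (2 * Real.sqrt 3 / (5 - 2*β)) ≤ Real.arctan |w.im / w.re| :=
        Real.arctan_strictMono.monotone h5
    _ = |Real.arctan (w.im / w.re)| := by
        rcases le_or_gt 0 (w.im / w.re) with h | h
        · rw [_root_.abs_of_nonneg h, _root_.abs_of_nonneg (by
            rw [← Real.arctan_zero]; exact Real.arctan_strictMono.monotone h)]
        · rw [_root_.abs_of_neg h, _root_.abs_of_neg (by
            rw [← Real.arctan_zero]; exact Real.arctan_strictMono h), ← Real.arctan_neg]
    _ = |Complex.arg w| := by rw [harg]

end StmtAux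

theorem stmt_17 (p : ℂ → ℂ) (β : ℝ) (hβ : β < 1)
    (hp : DifferentiableOn ℂ p (ball 0 1)) (hp0 : p 0 = 1)
    (hpne : ∀ z ∈ ball (0 : ℂ) 1, p z ≠ 0)
    (harg : ∀ z ∈ ball (0 : ℂ) 1,
      |Complex.arg (((5 - 2 * β : ℝ) : ℂ) / 2 - z * deriv p z / p z - p z)| <
        Real.arctan (2 * Real.sqrt 3 / (5 - 2 * β))) :
    ∀ z ∈ ball (0 : ℂ) 1, 0 < (p z).re := by
  intro z hz
  by_contra hc
  push_neg at hc
  obtain ⟨z0, hz0mem, hz0pos, hre0, hpos⟩ := stmt17_exists_z0 p hp hp0 z hz hc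
  have hz0ne : z0 ≠ 0 := norm_pos_iff.1 hz0pos
  obtain ⟨κ, hκ1, hzD⟩ := stmt17_jack p hp hp0 z0 hz0mem hz0ne hre0 (hpne z0 hz0mem) hpos
  set a := (p z0).im with hadef
  have hP0 : p z0 = (a:ℂ) * I := by
    apply Complex.ext <;> simp [hre0, hadef]
  have hane : a ≠ 0 := by
    intro h
    exact hpne z0 hz0mem (by rw [hP0, h]; simp)
  set σ : ℝ := -κ * (1 + a^2)/2 with hσdef
  set w : ℂ := ((5 - 2 * β : ℝ) : ℂ) / 2 - z0 * deriv p z0 / p z0 - p z0 with hwdef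
  have hIa : ((a:ℂ) * I) ≠ 0 := by
    simp [hane, Complex.I_ne_zero]
  have ha' : (a:ℂ) ≠ 0 := by exact_mod_cast hane
  have hdiv : ((σ:ℂ))/((a:ℂ)*I) = -(((σ/a : ℝ)):ℂ) * I := by
    have h2 : -(((σ/a : ℝ)):ℂ) * I * ((a:ℂ)*I) = (σ:ℂ) := by
      push_cast
      have h3 : ((σ:ℂ)/a) * a = σ := div_mul_cancel₀ _ ha'
      linear_combination (-(σ:ℂ) * (a:ℂ) * (a:ℂ)⁻¹) * Complex.I_sq + h3
    rw [← h2, mul_div_cancel_right₀ _ hIa]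
  have hw : w = (((5 - 2*β)/2 : ℝ):ℂ) + ((σ/a - a : ℝ):ℂ) * I := by
    rw [hwdef, hzD, hP0, hdiv]
    push_cast
    ring
  have hwre : w.re = (5 - 2*β)/2 := by rw [hw]; simp
  have hwim : w.im = σ/a - a := by rw [hw]; simp
  have hσle : σ ≤ -(1 + a^2)/2 := by
    rw [hσdef]
    nlinarith [sq_nonneg a]
  have hfinal := stmt17_final_arith β a σ hβ hane hσle w hwre hwim
  have := harg z0 hz0mem
  rw [← hwdef] at this
  linarith
end

section
/- Let f be analytic on D with f(0)=0, f'(0)=1, satisfying 1 + z f''(z)/f'(z) = (√3+1)((1+z)/(1−z))^{1/2} − √3 (principal branch) on D. Then |arg(z f''(z)/f'(z) + (√3+1))| < π/4 for all z in D, and consequently f is starlike, while f is not convex (there exist z in D with Re(1 + z f''(z)/f'(z)) < 0). -/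
open Complex Metric Real Filter Topology

lemma aux_re_pos {z : ℂ} (hz : ‖z‖ < 1) : 0 < (((1:ℂ)+z)/(1-z)).re := by
  have h1 : (1:ℂ) - z ≠ 0 := by
    intro h
    have : z = 1 := by linear_combination -h
    rw [this] at hz; simp at hz
  have hns : Complex.normSq z < 1 := by
    rw [Complex.normSq_eq_norm_sq]
    have : ‖z‖ < 1 := hz
    nlinarith [norm_nonneg z]
  have hpos : 0 < Complex.normSq (1 - z) := Complex.normSq_pos.mpr h1
  rw [Complex.div_re, ← add_div]
  have hnum : ((1:ℂ)+z).re * ((1:ℂ)-z).re + ((1:ℂ)+z).im * ((1:ℂ)-z).im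
      = 1 - Complex.normSq z := by
    simp [Complex.normSq_apply]; ring
  rw [hnum]
  exact div_pos (by linarith) hpos

lemma aux_sqrt_sector {v : ℂ} (hv : 0 < v.re) :
    0 < (v ^ ((1:ℂ)/2)).re ∧ |(v ^ ((1:ℂ)/2)).im| < (v ^ ((1:ℂ)/2)).re := by
  have hv0 : v ≠ 0 := by intro h; rw [h] at hv; simp at hv
  have harg : |Complex.arg v| < Real.pi / 2 :=
    Complex.abs_arg_lt_pi_div_two_iff.mpr (Or.inl hv)
  rw [Complex.cpow_def_of_ne_zero hv0]
  set u : ℂ := Complex.log v * (1/2) with hu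
  have hure : u.re = (Complex.log v).re / 2 := by simp [hu]; ring
  have huim : u.im = Complex.arg v / 2 := by
    simp [hu, Complex.log_im]; ring
  have hbound : |u.im| < Real.pi / 4 := by
    rw [huim, abs_div, abs_of_pos (by norm_num : (0:ℝ) < 2)]
    linarith
  have hpi : 0 < Real.pi := Real.pi_pos
  have hmem : u.im ∈ Set.Ioo (-(Real.pi/2)) (Real.pi/2) := by
    constructor <;> nlinarith [abs_lt.mp hbound]
  have hcos : 0 < Real.cos u.im := Real.cos_pos_of_mem_Ioo hmem
  have hexp : 0 < Real.exp u.re := Real.exp_pos _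
  have key : ∀ x : ℝ, |x| < Real.pi/4 → Real.sin x < Real.cos x := by
    intro x hx
    have hx' := abs_lt.mp hx
    rcases le_or_gt 0 x with h0 | h0
    · have : Real.sin x < Real.sin (Real.pi/2 - x) := by
        apply Real.strictMonoOn_sin
        · constructor <;> nlinarith
        · constructor <;> nlinarith
        · nlinarith
      rwa [Real.sin_pi_div_two_sub] at this
    · have hs : Real.sin x < 0 := Real.sin_neg_of_neg_of_neg_pi_lt h0 (by nlinarith)
      have hc : 0 < Real.cos x := Real.cos_pos_of_mem_Ioo ⟨by nlinarith, by nlinarith⟩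
      linarith
  have h1 : Real.sin u.im < Real.cos u.im := key _ hbound
  have h2 : -Real.cos u.im < Real.sin u.im := by
    have := key (-u.im) (by rwa [abs_neg])
    rw [Real.sin_neg, Real.cos_neg] at this
    linarith
  rw [Complex.exp_re, Complex.exp_im]
  constructor
  · positivity
  · rw [abs_lt]
    constructor <;> nlinarith

lemma aux_arg_lt {w : ℂ} (h1 : 0 < w.re) (h2 : |w.im| < w.re) :
    |Complex.arg w| < Real.pi / 4 := by
  have hpi : 0 < Real.pi := Real.pi_pos
  have habs : |Complex.arg w| < Real.pi / 2 :=
    Complex.abs_arg_lt_pi_div_two_iff.mpr (Or.inl h1)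
  have ht := Complex.tan_arg w
  have hq : |w.im / w.re| < 1 := by
    rw [abs_div, abs_of_pos h1, div_lt_one h1]; exact h2
  by_contra hcon
  push_neg at hcon
  have harglt := abs_lt.mp habs
  rcases le_or_gt (Real.pi/4) (Complex.arg w) with hc | hc
  · have : Real.tan (Real.pi/4) ≤ Real.tan (Complex.arg w) := by
      rcases eq_or_lt_of_le hc with h | h
      · rw [h]
      · exact le_of_lt (Real.strictMonoOn_tan (by constructor <;> nlinarith)
          (by constructor <;> nlinarith) h)
    rw [Real.tan_pi_div_four, ht] at this
    have := le_abs_self (w.im / w.re)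
    linarith
  · have hneg : Complex.arg w < 0 := by
      rcases le_or_gt 0 (Complex.arg w) with h | h
      · rw [_root_.abs_of_nonneg h] at hcon; linarith
      · exact h
    have hc2 : Complex.arg w ≤ -(Real.pi/4) := by
      rw [_root_.abs_of_neg hneg] at hcon; linarith
    have : Real.tan (Complex.arg w) ≤ Real.tan (-(Real.pi/4)) := by
      rcases eq_or_lt_of_le hc2 with h | h
      · rw [h]
      · exact le_of_lt (Real.strictMonoOn_tan (by constructor <;> nlinarith)
          (by constructor <;> nlinarith) h)
    rw [Real.tan_neg, Real.tan_pi_div_four, ht] at this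
    have := neg_abs_le (w.im / w.re)
    linarith

set_option maxHeartbeats 2000000 in
lemma core_starlike (f : ℂ → ℂ)
    (hf : DifferentiableOn ℂ f (ball 0 1)) (hf0 : f 0 = 0) (hf1 : deriv f 0 = 1)
    (heq : ∀ z ∈ ball (0 : ℂ) 1,
      1 + z * deriv (deriv f) z / deriv f z =
        ((Real.sqrt 3 : ℂ) + 1) * (((1 + z) / (1 - z)) ^ ((1 : ℂ) / 2)) - (Real.sqrt 3 : ℂ)) :
    ∀ z ∈ ball (0 : ℂ) 1, 0 < (dslope f 0 z / deriv f z).re := by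
  have hs3sq : Real.sqrt 3 ^ 2 = 3 := Real.sq_sqrt (by norm_num)
  have hs3ge : 1 ≤ Real.sqrt 3 := by nlinarith [Real.sqrt_nonneg 3]
  have hop : IsOpen (ball (0:ℂ) 1) := isOpen_ball
  have h0mem : (0:ℂ) ∈ ball (0:ℂ) 1 := mem_ball_self one_pos
  have hfa : AnalyticOnNhd ℂ f (ball 0 1) := hf.analyticOnNhd hop
  have hf'a : AnalyticOnNhd ℂ (deriv f) (ball 0 1) := hfa.deriv
  have hhd : DifferentiableOn ℂ (dslope f 0) (ball 0 1) :=
    (differentiableOn_dslope (hop.mem_nhds h0mem)).mpr hf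
  have hh0 : dslope f 0 0 = 1 := by rw [dslope_same, hf1]
  have hfzh : ∀ z : ℂ, f z = z * dslope f 0 z := by
    intro z
    rcases eq_or_ne z 0 with rfl | hz0
    · simp [hf0]
    · rw [dslope_of_ne f hz0, slope_def_field, hf0]; field_simp; ring
  have hvne : ∀ z : ℂ, ‖z‖ < 1 → ((1:ℂ)+z)/(1-z) ≠ 0 ∧ (1:ℂ) - z ≠ 0 := by
    intro z hz
    have h1 : (1:ℂ) - z ≠ 0 := by
      intro h; have : z = 1 := by linear_combination -h
      rw [this] at hz; simp at hz
    have h2 : (1:ℂ) + z ≠ 0 := by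
      intro h; have : z = -1 := by linear_combination h
      rw [this] at hz; simp at hz
    exact ⟨div_ne_zero h2 h1, h1⟩
  have hs3ne : ((Real.sqrt 3 : ℂ) + 1) ≠ 0 := by
    intro hE
    have := congrArg Complex.re hE
    simp at this
    nlinarith
  have hf'ne : ∀ z ∈ ball (0:ℂ) 1, deriv f z ≠ 0 := by
    intro z hz hzero
    have h := heq z hz
    rw [hzero, div_zero, add_zero] at h
    have hzn := mem_ball_zero_iff.mp hz
    obtain ⟨hv0, h1z⟩ := hvne z hzn
    have hw1 : (((1:ℂ)+z)/(1-z)) ^ ((1:ℂ)/2) = 1 := by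
      have hmul : ((Real.sqrt 3 : ℂ)+1) * ((((1:ℂ)+z)/(1-z)) ^ ((1:ℂ)/2))
          = ((Real.sqrt 3 : ℂ)+1) * 1 := by
        rw [mul_one]; linear_combination -h
      exact mul_left_cancel₀ hs3ne hmul
    have hvv : ((1:ℂ)+z)/(1-z) = 1 := by
      have h2 : (((1:ℂ)+z)/(1-z)) ^ ((1:ℂ)/2) * (((1:ℂ)+z)/(1-z)) ^ ((1:ℂ)/2) = 1 := by
        rw [hw1]; ring
      rw [← Complex.cpow_add _ _ hv0] at h2
      norm_num at h2
      exact h2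
    have hz0 : z = 0 := by
      have := (div_eq_one_iff_eq h1z).mp hvv
      linear_combination this / 2
    rw [hz0, hf1] at hzero
    exact one_ne_zero hzero
  -- P and its calculus
  set P : ℂ → ℂ := fun z => dslope f 0 z / deriv f z with hPdef
  have hPdiff : ∀ z ∈ ball (0:ℂ) 1, DifferentiableAt ℂ P z := fun z hz =>
    (hhd.differentiableAt (hop.mem_nhds hz)).div (hf'a z hz).differentiableAt (hf'ne z hz)
  have hPd : DifferentiableOn ℂ P (ball 0 1) := fun z hz =>
    (hPdiff z hz).differentiableWithinAt
  have hPa : AnalyticOnNhd ℂ P (ball 0 1) := hPd.analyticOnNhd hop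
  have hP0 : P 0 = 1 := by rw [hPdef]; simp [hh0, hf1]
  have hder : ∀ z ∈ ball (0:ℂ) 1, deriv f z = dslope f 0 z + z * deriv (dslope f 0) z := by
    intro z hz
    have hdh : HasDerivAt (dslope f 0) (deriv (dslope f 0) z) z :=
      (hhd.differentiableAt (hop.mem_nhds hz)).hasDerivAt
    have hmul : HasDerivAt (fun w => w * dslope f 0 w)
        (1 * dslope f 0 z + z * deriv (dslope f 0) z) z := (hasDerivAt_id z).mul hdh
    have : deriv f z = deriv (fun w => w * dslope f 0 w) z :=
      Filter.EventuallyEq.deriv_eq (Filter.Eventually.of_forall hfzh)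
    rw [this, hmul.deriv]; ring
  -- q
  set q : ℂ → ℂ := fun z =>
    ((Real.sqrt 3 : ℂ)+1) * ((((1:ℂ)+z)/(1-z)) ^ ((1:ℂ)/2)) - (Real.sqrt 3 : ℂ) with hqdef
  have hqd : ∀ z ∈ ball (0:ℂ) 1, DifferentiableAt ℂ q z := by
    intro z hz
    have hzn := mem_ball_zero_iff.mp hz
    have h1 := (hvne z hzn).2
    have hbase : DifferentiableAt ℂ (fun z : ℂ => ((1:ℂ)+z)/(1-z)) z :=
      ((differentiableAt_const _).add differentiableAt_id).div
        (((differentiableAt_const _).sub differentiableAt_id)) h1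
    have hcp : DifferentiableAt ℂ (fun z : ℂ => (((1:ℂ)+z)/(1-z)) ^ ((1:ℂ)/2)) z :=
      hbase.cpow (differentiableAt_const _) (Or.inl (aux_re_pos hzn))
    exact (hcp.const_mul _).sub_const _
  have hqdo : DifferentiableOn ℂ q (ball 0 1) := fun z hz =>
    (hqd z hz).differentiableWithinAt
  have hqa : AnalyticOnNhd ℂ q (ball 0 1) := hqdo.analyticOnNhd hop
  set A : ℂ → ℂ := fun z => q z * P z - (1 - z * deriv P z) with hAdef
  have hAa : AnalyticOnNhd ℂ A (ball 0 1) :=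
    (hqa.mul hPa).sub (analyticOnNhd_const.sub (analyticOnNhd_id.mul hPa.deriv))
  have hloc : ∀ z ∈ ball (0:ℂ) 1, dslope f 0 z ≠ 0 → A z = 0 := by
    intro z hz hhz
    have hzd := hhd.differentiableAt (hop.mem_nhds hz)
    have hf'd := (hf'a z hz).differentiableAt
    have hne := hf'ne z hz
    have hdP : deriv P z = (deriv (dslope f 0) z * deriv f z
        - dslope f 0 z * deriv (deriv f) z) / (deriv f z)^2 := by
      rw [hPdef]; exact deriv_div hzd hf'd hne
    have hqz : q z = 1 + z * deriv (deriv f) z / deriv f z := (heq z hz).symm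
    have hsum := hder z hz
    rw [hAdef]
    simp only [hPdef]
    rw [hdP, hqz]
    field_simp
    linear_combination (-(deriv f z)) * hsum
  have hev : ∀ᶠ z in 𝓝 (0:ℂ), A z = 0 := by
    have h2 : ∀ᶠ z in 𝓝 (0:ℂ), dslope f 0 z ≠ 0 :=
      (hhd.differentiableAt (hop.mem_nhds h0mem)).continuousAt.eventually_ne
        (by rw [hh0]; norm_num)
    filter_upwards [hop.mem_nhds h0mem, h2] with z hz hne
    exact hloc z hz hne
  have master : ∀ z ∈ ball (0:ℂ) 1, q z * P z = 1 - z * deriv P z := by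
    have hEq := hAa.eqOn_zero_of_preconnected_of_eventuallyEq_zero
      ((convex_ball (0:ℂ) 1).isPreconnected) h0mem hev
    intro z hz
    have := hEq hz
    simp only [hAdef, Pi.zero_apply] at this
    linear_combination this

  -- norm comparison helper
  have aux_norm : ∀ u : ℂ, ‖(1:ℂ)+u‖^2 - ‖(1:ℂ)-u‖^2 = 4*u.re := by
    intro u
    rw [Complex.sq_norm, Complex.sq_norm]
    simp [Complex.normSq_apply]
    ring
  -- contradiction setup
  by_contra hcon
  push_neg at hcon
  obtain ⟨b, hb, hble⟩ := hcon
  have hble : (P b).re ≤ 0 := hble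
  have hbn : ‖b‖ < 1 := mem_ball_zero_iff.mp hb
  set K : Set ℂ := {z ∈ closedBall (0:ℂ) ‖b‖ | (P z).re ≤ 0} with hKdef
  have hsub1 : closedBall (0:ℂ) ‖b‖ ⊆ ball (0:ℂ) 1 := by
    intro z hz; rw [mem_closedBall_zero_iff] at hz; rw [mem_ball_zero_iff]; linarith
  have hPcont : ContinuousOn (fun z => (P z).re) (closedBall (0:ℂ) ‖b‖) :=
    Complex.continuous_re.comp_continuousOn (hPd.continuousOn.mono hsub1)
  have hKeq : K = closedBall (0:ℂ) ‖b‖ ∩ (fun z => (P z).re) ⁻¹' (Set.Iic 0) := by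
    ext z; simp [hKdef, Set.mem_sep_iff]
  have hKc : IsClosed K := by
    rw [hKeq]
    exact hPcont.preimage_isClosed_of_isClosed Metric.isClosed_closedBall isClosed_Iic
  have hKcompact : IsCompact K :=
    (isCompact_closedBall (0:ℂ) ‖b‖).of_isClosed_subset hKc (Set.sep_subset _ _)
  have hKne : K.Nonempty := ⟨b, mem_closedBall_zero_iff.mpr le_rfl, hble⟩
  obtain ⟨z0, hz0K, hz0min⟩ := hKcompact.exists_isMinOn hKne continuous_norm.continuousOn
  set r0 : ℝ := ‖z0‖ with hr0
  have hz0ball : z0 ∈ ball (0:ℂ) 1 := hsub1 hz0K.1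
  have hr0b : r0 ≤ ‖b‖ := mem_closedBall_zero_iff.mp hz0K.1
  have hr0lt : r0 < 1 := lt_of_le_of_lt hr0b hbn
  have hz0ne : z0 ≠ 0 := by
    intro hE
    have := hz0K.2
    rw [hE, hP0] at this
    simp only [Complex.one_re] at this
    linarith
  have hr0pos : 0 < r0 := norm_pos_iff.mpr hz0ne
  have hmin : ∀ z ∈ K, r0 ≤ ‖z‖ := fun z hz => hz0min hz
  have hpos : ∀ z : ℂ, ‖z‖ < r0 → 0 < (P z).re := by
    intro z hz
    by_contra hc; push_neg at hc
    have hzK : z ∈ K := ⟨mem_closedBall_zero_iff.mpr (le_trans hz.le hr0b), hc⟩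
    exact absurd (hmin z hzK) (not_le.mpr hz)
  have hsubball : ∀ z : ℂ, ‖z‖ ≤ r0 → z ∈ ball (0:ℂ) 1 := fun z hz =>
    mem_ball_zero_iff.mpr (lt_of_le_of_lt hz hr0lt)
  have hnn : ∀ z : ℂ, ‖z‖ ≤ r0 → 0 ≤ (P z).re := by
    intro z hz
    rcases lt_or_eq_of_le hz with hlt | heqr
    · exact (hpos z hlt).le
    · have hzball := hsubball z hz
      have h1 : Filter.Tendsto (fun t : ℝ => (t:ℂ) * z) (𝓝 (1:ℝ)) (𝓝 z) := by
        have hcont : Continuous (fun t : ℝ => (t:ℂ) * z) :=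
          Complex.continuous_ofReal.mul continuous_const
        have := hcont.tendsto (1:ℝ)
        simpa using this
      have h2 : Filter.Tendsto P (𝓝 z) (𝓝 (P z)) := (hPdiff z hzball).continuousAt
      have h3 : Filter.Tendsto (fun w : ℂ => (P w).re) (𝓝 z) (𝓝 ((P z).re)) :=
        (Complex.continuous_re.tendsto (P z)).comp h2
      have htends : Filter.Tendsto (fun t : ℝ => (P ((t:ℂ) * z)).re) (𝓝[<] (1:ℝ))
          (𝓝 ((P z).re)) := (h3.comp h1).mono_left nhdsWithin_le_nhds
      refine ge_of_tendsto htends ?_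
      filter_upwards [Ioo_mem_nhdsLT_of_mem (Set.mem_Ioc.mpr ⟨zero_lt_one, le_rfl⟩)] with t ht
      have hnorm : ‖(t:ℂ) * z‖ < r0 := by
        rw [norm_mul, Complex.norm_real, Real.norm_eq_abs, abs_of_pos ht.1, ← heqr]
        nlinarith [ht.1, ht.2, hr0pos, heqr ▸ hr0pos]
      exact (hpos _ hnorm).le
  have hre0 : (P z0).re = 0 := le_antisymm hz0K.2 (hnn z0 le_rfl)
  set ρ : ℝ := (P z0).im with hρdef
  -- the function g
  set g : ℂ → ℂ := fun z => (1 - P z)/(1 + P z) with hgdef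
  have hden : ∀ z : ℂ, ‖z‖ ≤ r0 → (1:ℂ) + P z ≠ 0 := by
    intro z hz hE
    have h1 := congrArg Complex.re hE
    have h2 := hnn z hz
    simp at h1
    linarith
  have hgdiff : ∀ z : ℂ, ‖z‖ ≤ r0 → DifferentiableAt ℂ g z := fun z hz =>
    ((differentiableAt_const _).sub (hPdiff z (hsubball z hz))).div
      ((differentiableAt_const _).add (hPdiff z (hsubball z hz))) (hden z hz)
  have hg1 : ∀ z : ℂ, ‖z‖ ≤ r0 → ‖g z‖ ≤ 1 := by
    intro z hz
    have hd := hden z hz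
    have hdn : 0 < ‖(1:ℂ) + P z‖ := norm_pos_iff.mpr hd
    rw [hgdef]
    rw [norm_div, div_le_one hdn]
    nlinarith [aux_norm (P z), hnn z hz, norm_nonneg ((1:ℂ) - P z), norm_nonneg ((1:ℂ) + P z)]
  have hglt : ∀ z : ℂ, ‖z‖ < r0 → ‖g z‖ < 1 := by
    intro z hz
    have hd := hden z hz.le
    have hdn : 0 < ‖(1:ℂ) + P z‖ := norm_pos_iff.mpr hd
    rw [hgdef]
    rw [norm_div, div_lt_one hdn]
    nlinarith [aux_norm (P z), hpos z hz, norm_nonneg ((1:ℂ) - P z), norm_nonneg ((1:ℂ) + P z)]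
  have hg0 : g 0 = 0 := by rw [hgdef]; simp [hP0]
  have hgz0n : ‖g z0‖ = 1 := by
    have hd := hden z0 le_rfl
    have heqn : ‖(1:ℂ) - P z0‖ = ‖(1:ℂ) + P z0‖ := by
      nlinarith [aux_norm (P z0), hre0, norm_nonneg ((1:ℂ) - P z0), norm_nonneg ((1:ℂ) + P z0)]
    rw [hgdef]
    rw [norm_div, heqn, div_self (norm_pos_iff.mpr hd).ne']
  -- Schwarz lemma
  have hmaps : Set.MapsTo g (ball (0:ℂ) r0) (ball (g 0) 1) := by
    intro z hz
    rw [hg0, mem_ball_zero_iff]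
    exact hglt z (mem_ball_zero_iff.mp hz)
  have hgdOn : DifferentiableOn ℂ g (ball (0:ℂ) r0) := fun z hz =>
    (hgdiff z (mem_ball_zero_iff.mp hz).le).differentiableWithinAt
  have hSchwarz : ∀ t : ℝ, t ∈ Set.Ioo (0:ℝ) 1 → ‖g ((t:ℂ) * z0)‖ ≤ t := by
    intro t ht
    have hmemb : (t:ℂ) * z0 ∈ ball (0:ℂ) r0 := by
      rw [mem_ball_zero_iff, norm_mul, Complex.norm_real, Real.norm_eq_abs, abs_of_pos ht.1]
      nlinarith [ht.1, ht.2, hr0pos]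
    have hS := Complex.dist_le_div_mul_dist_of_mapsTo_ball hgdOn (hmaps.mono_right ball_subset_closedBall) hmemb
    rw [hg0, dist_zero_right, dist_zero_right, norm_mul, Complex.norm_real,
      Real.norm_eq_abs, abs_of_pos ht.1] at hS
    have heqq : 1 / r0 * (t * ‖z0‖) = t := by
      rw [← hr0]
      field_simp
    exact le_trans hS (le_of_eq heqq)
  -- the Jack quantity
  have hgz0' : HasDerivAt g (deriv g z0) z0 := (hgdiff z0 le_rfl).hasDerivAt
  set lam : ℂ := (starRingEnd ℂ) (g z0) * (z0 * deriv g z0) with hlamdef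
  set m : ℝ := lam.re with hmdef
  have hns1 : Complex.normSq (g z0) = 1 := by
    rw [Complex.normSq_eq_norm_sq, hgz0n]; norm_num
  -- radial derivative: m ≥ 1
  have hinner : HasDerivAt (fun w : ℂ => g (w * z0)) (deriv g z0 * z0) 1 := by
    have h1 : HasDerivAt (fun w : ℂ => w * z0) z0 1 := by
      simpa using (hasDerivAt_id (1:ℂ)).mul_const z0
    have h2 : HasDerivAt g (deriv g z0) ((1:ℂ) * z0) := by rwa [one_mul]
    exact h2.comp 1 h1
  have hG : HasDerivAt (fun t : ℝ => g ((t:ℂ) * z0)) (deriv g z0 * z0) 1 := by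
    have hinner1 : HasDerivAt (fun w : ℂ => g (w * z0)) (deriv g z0 * z0) (((1:ℝ):ℂ)) := by
      rwa [Complex.ofReal_one]
    exact hinner1.comp_ofReal
  have hφ : HasDerivAt (fun t : ℝ => ((starRingEnd ℂ) (g z0) * g ((t:ℂ) * z0)).re)
      ((starRingEnd ℂ) (g z0) * (deriv g z0 * z0)).re 1 := by
    have h1 := hG.const_mul ((starRingEnd ℂ) (g z0))
    exact Complex.reCLM.hasFDerivAt.comp_hasDerivAt 1 h1
  have hm1 : 1 ≤ m := by
    have hval : ((starRingEnd ℂ) (g z0) * (deriv g z0 * z0)).re = m := by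
      rw [hmdef, hlamdef]; ring_nf
    rw [← hval]
    have hslope := hasDerivAt_iff_tendsto_slope.mp hφ
    have hslope' := hslope.mono_left
      (nhdsWithin_mono _ (fun x (hx : x ∈ Set.Iio (1:ℝ)) => ne_of_lt hx))
    refine ge_of_tendsto hslope' ?_
    filter_upwards [Ioo_mem_nhdsLT_of_mem (Set.mem_Ioc.mpr ⟨zero_lt_one, le_rfl⟩)] with t ht
    have hφ1 : ((starRingEnd ℂ) (g z0) * g (((1:ℝ):ℂ) * z0)).re = 1 := by
      have h11 : ((1:ℝ):ℂ) * z0 = z0 := by norm_num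
      rw [h11, mul_comm, Complex.mul_conj, hns1]
      norm_num
    have hφt : ((starRingEnd ℂ) (g z0) * g ((t:ℂ) * z0)).re ≤ t := by
      have h1 : ((starRingEnd ℂ) (g z0) * g ((t:ℂ) * z0)).re
          ≤ ‖(starRingEnd ℂ) (g z0) * g ((t:ℂ) * z0)‖ := Complex.re_le_norm _
      have h2 : ‖(starRingEnd ℂ) (g z0) * g ((t:ℂ) * z0)‖ = ‖g ((t:ℂ) * z0)‖ := by
        rw [norm_mul, RCLike.norm_conj, hgz0n, one_mul]
      rw [h2] at h1
      exact le_trans h1 (hSchwarz t ht)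
    have hts : slope (fun t : ℝ => ((starRingEnd ℂ) (g z0) * g ((t:ℂ) * z0)).re) 1 t
        = (((starRingEnd ℂ) (g z0) * g ((t:ℂ) * z0)).re - 1) / (t - 1) := by
      rw [slope_def_field, hφ1]
    rw [hts, le_div_iff_of_neg (by linarith [ht.2] : t - (1:ℝ) < 0)]
    linarith [hφt]
  -- tangential: lam.im = 0
  have hfull : HasDerivAt (fun w : ℂ => g (z0 * Complex.exp (w * Complex.I)))
      (deriv g z0 * (z0 * Complex.I)) 0 := by
    have h2 : HasDerivAt (fun w : ℂ => w * Complex.I) Complex.I 0 := by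
      simpa using (hasDerivAt_id (0:ℂ)).mul_const Complex.I
    have h3 := (h2.cexp.const_mul z0 :
      HasDerivAt (fun w : ℂ => z0 * Complex.exp (w * Complex.I))
        (z0 * (Complex.exp ((0:ℂ) * Complex.I) * Complex.I)) 0)
    have h4 : HasDerivAt g (deriv g z0) (z0 * Complex.exp ((0:ℂ) * Complex.I)) := by
      simpa using hgz0'
    have h5 := h4.comp 0 h3
    simp at h5; exact h5
  have hw0 : HasDerivAt (fun t : ℝ => g (z0 * Complex.exp (((t:ℝ):ℂ) * Complex.I)))
      (deriv g z0 * (z0 * Complex.I)) 0 := by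
    have hfull0 : HasDerivAt (fun w : ℂ => g (z0 * Complex.exp (w * Complex.I)))
        (deriv g z0 * (z0 * Complex.I)) (((0:ℝ):ℂ)) := by rwa [Complex.ofReal_zero]
    exact hfull0.comp_ofReal
  have hconjd : HasDerivAt (fun t : ℝ => (starRingEnd ℂ) (g (z0 * Complex.exp (((t:ℝ):ℂ) * Complex.I))))
      ((starRingEnd ℂ) (deriv g z0 * (z0 * Complex.I))) 0 := by
    have := Complex.conjCLE.toContinuousLinearMap.hasFDerivAt.comp_hasDerivAt 0 hw0
    exact this
  have hψ : HasDerivAt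
      (fun t : ℝ => (g (z0 * Complex.exp (((t:ℝ):ℂ) * Complex.I)) *
        (starRingEnd ℂ) (g (z0 * Complex.exp (((t:ℝ):ℂ) * Complex.I)))).re)
      ((deriv g z0 * (z0 * Complex.I) * (starRingEnd ℂ) (g z0) +
        g z0 * (starRingEnd ℂ) (deriv g z0 * (z0 * Complex.I)))).re 0 := by
    have h1 := hw0.mul hconjd
    have h2 := Complex.reCLM.hasFDerivAt.comp_hasDerivAt 0 h1
    simp only [Complex.ofReal_zero, zero_mul, Complex.exp_zero, mul_one] at h2
    exact h2
  have hcirc : ∀ t : ℝ, ‖z0 * Complex.exp (((t:ℝ):ℂ) * Complex.I)‖ = r0 := by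
    intro t
    rw [norm_mul, Complex.norm_exp]
    simp [hr0]
  have hval1 : ∀ t : ℝ, (g (z0 * Complex.exp (((t:ℝ):ℂ) * Complex.I)) *
      (starRingEnd ℂ) (g (z0 * Complex.exp (((t:ℝ):ℂ) * Complex.I)))).re
      = ‖g (z0 * Complex.exp (((t:ℝ):ℂ) * Complex.I))‖^2 := by
    intro t
    rw [Complex.mul_conj, Complex.normSq_eq_norm_sq]
    norm_cast
  have h00 : z0 * Complex.exp (((0:ℝ):ℂ) * Complex.I) = z0 := by simp
  have hmax : IsLocalMax
      (fun t : ℝ => (g (z0 * Complex.exp (((t:ℝ):ℂ) * Complex.I)) *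
        (starRingEnd ℂ) (g (z0 * Complex.exp (((t:ℝ):ℂ) * Complex.I)))).re) 0 := by
    apply Filter.Eventually.of_forall
    intro t
    simp only [hval1, h00]
    rw [Complex.mul_conj]
    have hrr : (((Complex.normSq (g z0) : ℝ)):ℂ).re = 1 := by rw [hns1]; norm_num
    rw [hrr]
    nlinarith [hg1 _ (le_of_eq (hcirc t)), norm_nonneg (g (z0 * Complex.exp (((t:ℝ):ℂ) * Complex.I)))]
  have hD0 : ((deriv g z0 * (z0 * Complex.I) * (starRingEnd ℂ) (g z0) +
      g z0 * (starRingEnd ℂ) (deriv g z0 * (z0 * Complex.I)))).re = 0 := by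
    rw [← hψ.deriv]
    exact hmax.deriv_eq_zero
  have htau : lam.im = 0 := by
    have hrw : deriv g z0 * (z0 * Complex.I) * (starRingEnd ℂ) (g z0) +
        g z0 * (starRingEnd ℂ) (deriv g z0 * (z0 * Complex.I))
        = lam * Complex.I + (starRingEnd ℂ) (lam * Complex.I) := by
      rw [hlamdef]
      simp only [map_mul, Complex.conj_conj, Complex.conj_I]
      ring
    rw [hrw] at hD0
    have hre : (lam * Complex.I + (starRingEnd ℂ) (lam * Complex.I)).re = -2 * lam.im := by
      simp [Complex.add_re, Complex.mul_re, Complex.I_re, Complex.I_im]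
      ring
    rw [hre] at hD0
    linarith
  have hlamm : lam = ((m:ℝ):ℂ) := by
    apply Complex.ext
    · simp [hmdef]
    · simp [htau]
  have hX : z0 * deriv g z0 = ((m:ℝ):ℂ) * g z0 := by
    have h1 : g z0 * ((starRingEnd ℂ) (g z0) * (z0 * deriv g z0)) = g z0 * ((m:ℝ):ℂ) := by
      rw [← hlamdef, hlamm]
    rw [← mul_assoc, Complex.mul_conj, hns1] at h1
    simpa [mul_comm] using h1
  -- derivative of g at z0 in terms of P
  have hPz0d : HasDerivAt P (deriv P z0) z0 := (hPdiff z0 hz0ball).hasDerivAt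
  have hgderiv : deriv g z0 =
      (-(deriv P z0) * (1 + P z0) - (1 - P z0) * deriv P z0) / (1 + P z0)^2 := by
    have h1 : HasDerivAt (fun z => (1:ℂ) - P z) (-(deriv P z0)) z0 := hPz0d.const_sub 1
    have h2 : HasDerivAt (fun z => (1:ℂ) + P z) (deriv P z0) z0 := hPz0d.const_add 1
    have h3 := h1.div h2 (hden z0 le_rfl)
    exact h3.deriv
  have hd : (1:ℂ) + P z0 ≠ 0 := hden z0 le_rfl
  have hpow : ((1:ℂ) + P z0)^2 ≠ 0 := pow_ne_zero _ hd
  have hg0v : g z0 = (1 - P z0)/(1 + P z0) := by rw [hgdef]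
  have hA : deriv g z0 * ((1:ℂ) + P z0)^2 = -2 * deriv P z0 := by
    rw [hgderiv, div_mul_cancel₀ _ hpow]
    ring
  have hB : z0 * (-2 * deriv P z0) = ((m:ℝ):ℂ) * ((1 - P z0) * (1 + P z0)) := by
    calc z0 * (-2 * deriv P z0) = z0 * (deriv g z0 * ((1:ℂ) + P z0)^2) := by rw [hA]
      _ = (z0 * deriv g z0) * ((1:ℂ) + P z0)^2 := by ring
      _ = (((m:ℝ):ℂ) * g z0) * ((1:ℂ) + P z0)^2 := by rw [hX]
      _ = ((m:ℝ):ℂ) * (((1 - P z0)/(1 + P z0)) * (1 + P z0)) * (1 + P z0) := by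
          rw [hg0v]; ring
      _ = ((m:ℝ):ℂ) * ((1 - P z0) * (1 + P z0)) := by rw [div_mul_cancel₀ _ hd]; ring
  have hE2 : z0 * deriv P z0 * 2 = -((m:ℝ):ℂ) * (1 - (P z0)^2) := by
    linear_combination -hB
  -- final contradiction
  have hmaster := master z0 hz0ball
  have hE3 : q z0 * P z0 * 2 = 2 + ((m:ℝ):ℂ) * (1 - (P z0)^2) := by
    linear_combination 2 * hmaster - hE2
  have hzn0 : ‖z0‖ < 1 := mem_ball_zero_iff.mp hz0ball
  obtain ⟨hwre, hwim⟩ := aux_sqrt_sector (aux_re_pos hzn0)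
  set w : ℂ := (((1:ℂ)+z0)/(1-z0)) ^ ((1:ℂ)/2) with hwdef
  have hqz0 : q z0 = ((Real.sqrt 3 : ℂ)+1) * w - (Real.sqrt 3 : ℂ) := by rw [hqdef]
  rw [hqz0] at hE3
  have hPz0 : P z0 = ((ρ:ℝ):ℂ) * Complex.I := by
    apply Complex.ext
    · simp [hre0]
    · simp [hρdef]
  rw [hPz0] at hE3
  have hsq : (((ρ:ℝ):ℂ) * Complex.I)^2 = -(((ρ^2:ℝ)):ℂ) := by
    rw [mul_pow, Complex.I_sq]; push_cast; ring
  rw [hsq] at hE3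
  set a : ℝ := w.re with hadef
  set bb : ℝ := w.im with hbdef
  have hw' : w = ((a:ℝ):ℂ) + ((bb:ℝ):ℂ) * Complex.I := by
    rw [hadef, hbdef]; exact (Complex.re_add_im w).symm
  rw [hw'] at hE3
  rw [Complex.ext_iff] at hE3
  obtain ⟨hRe, hIm⟩ := hE3
  simp only [Complex.add_re, Complex.add_im, Complex.mul_re, Complex.mul_im, Complex.sub_re,
    Complex.sub_im, Complex.one_re, Complex.one_im, Complex.ofReal_re, Complex.ofReal_im,
    Complex.I_re, Complex.I_im, Complex.re_ofNat, Complex.im_ofNat, Complex.neg_re,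
    Complex.neg_im, mul_zero, zero_mul, mul_one, sub_zero, add_zero, zero_add, zero_sub,
    neg_zero, neg_neg, mul_neg] at hRe hIm
  have hb2 : bb^2 < a^2 := by
    have h := abs_lt.mp hwim
    exact sq_lt_sq' h.1 h.2
  rcases eq_or_ne ρ 0 with hρ0 | hρne
  · rw [hρ0] at hRe
    have h2 : 2 + m * (1 + (0:ℝ)^2) = 0 := by linear_combination -hRe
    nlinarith [hm1]
  · have hρ2 : 0 < ρ^2 := by positivity
    have h2 : (Real.sqrt 3 * a * 2 - Real.sqrt 3 * 2 + a * 2) * ρ = 0 := by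
      linear_combination hIm
    have haa : (Real.sqrt 3 + 1) * a = Real.sqrt 3 := by
      rcases mul_eq_zero.mp h2 with h | h
      · linarith
      · exact absurd h hρne
    have h6 : ((Real.sqrt 3 + 1) * a)^2 = 3 := by rw [haa]; exact hs3sq
    have hc3 : 2 + m * (1 + ρ^2) ≥ 3 + ρ^2 := by nlinarith [hm1, sq_nonneg ρ]
    have hcsq : (2 + m * (1 + ρ^2))^2 ≥ 12 * ρ^2 := by
      nlinarith [sq_nonneg (3 - ρ^2), hc3, sq_nonneg ρ]
    have hRe' : 2 + m * (1 + ρ^2) = -2 * (Real.sqrt 3 + 1) * bb * ρ := by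
      linear_combination -hRe
    have hlt : (2 + m * (1 + ρ^2))^2 < 12 * ρ^2 := by
      rw [hRe']
      have hexpand : (-2 * (Real.sqrt 3 + 1) * bb * ρ)^2
          = 4 * ((Real.sqrt 3 + 1))^2 * bb^2 * ρ^2 := by ring
      rw [hexpand]
      have h4 : 4 * ((Real.sqrt 3 + 1))^2 * bb^2 * ρ^2
          < 4 * ((Real.sqrt 3 + 1))^2 * a^2 * ρ^2 := by
        have hfac : 0 < 4 * ((Real.sqrt 3 + 1))^2 * ρ^2 := by positivity
        nlinarith [mul_lt_mul_of_pos_left hb2 hfac]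
      have h5 : 4 * ((Real.sqrt 3 + 1))^2 * a^2 * ρ^2 = 12 * ρ^2 := by
        linear_combination 4 * ρ^2 * h6
      linarith
    linarith

theorem stmt_18 (f : ℂ → ℂ)
    (hf : DifferentiableOn ℂ f (ball 0 1)) (hf0 : f 0 = 0) (hf1 : deriv f 0 = 1)
    (heq : ∀ z ∈ ball (0 : ℂ) 1,
      1 + z * deriv (deriv f) z / deriv f z =
        ((Real.sqrt 3 : ℂ) + 1) * (((1 + z) / (1 - z)) ^ ((1 : ℂ) / 2)) - (Real.sqrt 3 : ℂ)) :
    (∀ z ∈ ball (0 : ℂ) 1,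
      |Complex.arg (z * deriv (deriv f) z / deriv f z + ((Real.sqrt 3 : ℂ) + 1))| < Real.pi / 4) ∧
    (∀ z ∈ ball (0 : ℂ) 1, z ≠ 0 → 0 < (z * deriv f z / f z).re) ∧
    (∃ z ∈ ball (0 : ℂ) 1, (1 + z * deriv (deriv f) z / deriv f z).re < 0) := by
  have hs3sq : Real.sqrt 3 ^ 2 = 3 := Real.sq_sqrt (by norm_num)
  have hs3ge : 1 ≤ Real.sqrt 3 := by nlinarith [Real.sqrt_nonneg 3]
  refine ⟨?_, ?_, ?_⟩
  · -- Part 1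
    intro z hz
    have hzn : ‖z‖ < 1 := mem_ball_zero_iff.mp hz
    have hv := aux_re_pos hzn
    obtain ⟨hwre, hwim⟩ := aux_sqrt_sector hv
    have harr : z * deriv (deriv f) z / deriv f z + ((Real.sqrt 3 : ℂ) + 1)
        = ((Real.sqrt 3 : ℂ) + 1) * (((1 + z) / (1 - z)) ^ ((1 : ℂ) / 2)) := by
      linear_combination heq z hz
    rw [harr]
    have hcast : ((Real.sqrt 3 : ℂ) + 1) = ((Real.sqrt 3 + 1 : ℝ) : ℂ) := by push_cast; ring
    rw [hcast, Complex.arg_real_mul _ (by positivity)]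
    exact aux_arg_lt hwre hwim
  · -- Part 2
    intro z hz hz0
    have hcore := core_starlike f hf hf0 hf1 heq z hz
    have hPne : dslope f 0 z / deriv f z ≠ 0 := by
      intro hE; rw [hE] at hcore; simp at hcore
    have hfne : deriv f z ≠ 0 := by
      intro hE; rw [hE] at hPne; simp at hPne
    have hhz : dslope f 0 z ≠ 0 := by
      intro hE; rw [hE] at hPne; simp at hPne
    have hfz : f z = z * dslope f 0 z := by
      rw [dslope_of_ne f hz0, slope_def_field, hf0]
      field_simp
      ring
    have hrw : z * deriv f z / f z = (dslope f 0 z / deriv f z)⁻¹ := by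
      rw [hfz]
      field_simp
    rw [hrw, Complex.inv_re]
    exact div_pos hcore (Complex.normSq_pos.mpr hPne)
  · -- Part 3
    refine ⟨((-(9/10) : ℝ) : ℂ), ?_, ?_⟩
    · rw [mem_ball_zero_iff, Complex.norm_real]
      norm_num
    · rw [heq _ (by rw [mem_ball_zero_iff, Complex.norm_real]; norm_num)]
      have hbase : ((1 : ℂ) + ((-(9/10) : ℝ) : ℂ)) / (1 - ((-(9/10) : ℝ) : ℂ))
          = (((1/19 : ℝ) : ℂ)) := by push_cast; norm_num
      have hexpo : ((1 : ℂ)/2) = (((1/2 : ℝ)) : ℂ) := by norm_num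
      rw [hbase, hexpo, ← Complex.ofReal_cpow (by norm_num) (1/2)]
      set t : ℝ := (1/19 : ℝ) ^ ((1:ℝ)/2) with htdef
      have ht0 : 0 ≤ t := Real.rpow_nonneg (by norm_num) _
      have ht : t < 1/4 := by
        have : Real.sqrt (1/19) < 1/4 := by
          rw [Real.sqrt_lt' (by norm_num)]; norm_num
        rwa [Real.sqrt_eq_rpow] at this
      have hcast2 : ((Real.sqrt 3 : ℂ) + 1) * ((t : ℝ) : ℂ) - (Real.sqrt 3 : ℂ)
          = (((Real.sqrt 3 + 1) * t - Real.sqrt 3 : ℝ) : ℂ) := by push_cast; ring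
      rw [hcast2, Complex.ofReal_re]
      nlinarith
end
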